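/- arXiv:1910.05058 — 3 statements merged into one kernel-verified Lean document; each statement's English description precedes it below -/
import Mathlib

section
/- Let G be a finite loopless graph (parallel edges allowed) with a spanning triangle-tree. Then G is Z3-connected if and only if G contains a Z3-connected subgraph with at least two vertices. -/
open scoped Classical

/-- A finite loopless multigraph: finite vertex and edge types, each edge has an
unordered pair of distinct endpoints (parallel edges allowed, loops forbidden). -/
structure Multigraph where
  V : Type
  E : Type
  fintypeV : Fintype V
  fintypeE : Fintype E
  ends : E → Sym2 V
  loopless : ∀ e, ¬ (ends e).IsDiag

attribute [instance] Multigraph.fintypeV Multigraph.fintypeE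

namespace Multigraph

/-- `D` is an orientation of `G`: each edge is assigned an ordered pair (tail, head)
compatible with its endpoints. -/
def IsOrientation (G : Multigraph) (D : G.E → G.V × G.V) : Prop :=
  ∀ e, G.ends e = s((D e).1, (D e).2)

/-- Out-degree of `v` under the orientation `D` (tail = first component). -/
noncomputable def outDeg (G : Multigraph) (D : G.E → G.V × G.V) (v : G.V) : ℕ :=
  {e : G.E | (D e).1 = v}.ncard

/-- In-degree of `v` under the orientation `D` (head = second component). -/
noncomputable def inDeg (G : Multigraph) (D : G.E → G.V × G.V) (v : G.V) : ℕ :=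
  {e : G.E | (D e).2 = v}.ncard

/-- Flow conservation: at every vertex the sum of `f` over outgoing arcs equals the sum
over incoming arcs. -/
def IsConserving (G : Multigraph) (D : G.E → G.V × G.V) (f : G.E → ℤ) : Prop :=
  ∀ v : G.V,
    (∑ e : G.E, if (D e).1 = v then f e else 0) =
      ∑ e : G.E, if (D e).2 = v then f e else 0

/-- `G` has a nowhere-zero 3-flow. -/
def HasNZ3Flow (G : Multigraph) : Prop :=
  ∃ (D : G.E → G.V × G.V) (f : G.E → ℤ),
    G.IsOrientation D ∧ (∀ e, 1 ≤ |f e| ∧ |f e| ≤ 2) ∧ G.IsConserving D f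

/-- `G` is `Z3`-connected: every `Z3`-boundary is realized by some orientation. -/
def Z3Connected (G : Multigraph) : Prop :=
  ∀ β : G.V → ZMod 3, (∑ v : G.V, β v) = 0 →
    ∃ D : G.E → G.V × G.V, G.IsOrientation D ∧
      ∀ v : G.V, ((G.outDeg D v : ZMod 3) - (G.inDeg D v : ZMod 3)) = β v

/-- Degree of a vertex: number of edges incident with it. -/
noncomputable def degree (G : Multigraph) (v : G.V) : ℕ :=
  {e : G.E | v ∈ G.ends e}.ncard

/-- `(S, F)` is a triangle-tree subgraph of `G`: start from a triangle and repeatedly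
add a new vertex joined to the two endpoints of an existing edge. -/
inductive IsTriangleTree (G : Multigraph) : Set G.V → Set G.E → Prop
  | base (x y z : G.V) (e1 e2 e3 : G.E)
      (hxy : x ≠ y) (hxz : x ≠ z) (hyz : y ≠ z)
      (h1 : G.ends e1 = s(x, y)) (h2 : G.ends e2 = s(y, z)) (h3 : G.ends e3 = s(x, z)) :
      IsTriangleTree G {x, y, z} {e1, e2, e3}
  | grow (S : Set G.V) (F : Set G.E) (hT : IsTriangleTree G S F)
      (v a b : G.V) (hv : v ∉ S) (e : G.E) (he : e ∈ F) (hab : G.ends e = s(a, b))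
      (e1 e2 : G.E) (h1 : G.ends e1 = s(v, a)) (h2 : G.ends e2 = s(v, b)) :
      IsTriangleTree G (insert v S) (insert e1 (insert e2 F))

/-- `G` contains a spanning triangle-tree. -/
def HasSpanningTriangleTree (G : Multigraph) : Prop :=
  ∃ F : Set G.E, G.IsTriangleTree Set.univ F

/-- Degree of `v` inside the edge set `F`. -/
noncomputable def degIn (G : Multigraph) (F : Set G.E) (v : G.V) : ℕ :=
  {e : G.E | e ∈ F ∧ v ∈ G.ends e}.ncard

/-- `(S, F)` is a triangle-path subgraph: a triangle-tree which is either a single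
triangle or has exactly two leaves (vertices of degree 2). -/
def IsTrianglePath (G : Multigraph) (S : Set G.V) (F : Set G.E) : Prop :=
  G.IsTriangleTree S F ∧ (S.ncard = 3 ∨ {v ∈ S | G.degIn F v = 2}.ncard = 2)

/-- `(S, F)` is a subgraph of `G`: endpoints of every chosen edge are chosen vertices. -/
def Subgraph (G : Multigraph) (S : Set G.V) (F : Set G.E) : Prop :=
  ∀ e ∈ F, ∀ v, v ∈ G.ends e → v ∈ S

/-- `G` is isomorphic to the complete (simple) graph on `n` vertices. -/
def IsCompleteGraphOn (G : Multigraph) (n : ℕ) : Prop :=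
  ∃ (φ : G.V ≃ Fin n) (ψ : G.E ≃ {p : Sym2 (Fin n) // ¬ p.IsDiag}),
    ∀ e, Sym2.map (⇑φ) (G.ends e) = (ψ e).1

def IsK3 (G : Multigraph) : Prop := G.IsCompleteGraphOn 3

def IsK4 (G : Multigraph) : Prop := G.IsCompleteGraphOn 4

/-- `G` is a bull-growing of `H` (equivalently, `H` is the bull-reduction of `G`):
`u, v` are adjacent vertices of degree 3 in `G` with common neighbour `w`, the remaining
neighbours of `u`, `v` are `a`, `b`, and `H = G - u - v + ab` (with a loop deleted when
`a = b`). -/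
def IsBullGrowing (G H : Multigraph) : Prop :=
  ∃ (u v w a b : G.V) (euv euw evw eua evb : G.E),
    G.ends euv = s(u, v) ∧ G.ends euw = s(u, w) ∧ G.ends evw = s(v, w) ∧
    G.ends eua = s(u, a) ∧ G.ends evb = s(v, b) ∧
    a ≠ v ∧ b ≠ u ∧
    euv ≠ euw ∧ euv ≠ eua ∧ euw ≠ eua ∧
    euv ≠ evw ∧ euv ≠ evb ∧ evw ≠ evb ∧
    {e : G.E | u ∈ G.ends e} = {euv, euw, eua} ∧
    {e : G.E | v ∈ G.ends e} = {euv, evw, evb} ∧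
    ∃ φ : H.V → G.V, Function.Injective φ ∧
      Set.range φ = {x : G.V | x ≠ u ∧ x ≠ v} ∧
      ((a = b → ∃ ψ : H.E → G.E, Function.Injective ψ ∧
          Set.range ψ = {e : G.E | e ∉ ({euv, euw, evw, eua, evb} : Set G.E)} ∧
          ∀ e, G.ends (ψ e) = Sym2.map φ (H.ends e)) ∧
       (a ≠ b → ∃ (e0 : H.E) (ψ : H.E → G.E),
          Sym2.map φ (H.ends e0) = s(a, b) ∧
          Set.InjOn ψ {e : H.E | e ≠ e0} ∧
          ψ '' {e : H.E | e ≠ e0} = {e : G.E | e ∉ ({euv, euw, evw, eua, evb} : Set G.E)} ∧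
          ∀ e, e ≠ e0 → G.ends (ψ e) = Sym2.map φ (H.ends e)))

/-- `(S, F)` is a triangle (a `K3` subgraph) of `G`. -/
def IsTriangleSub (G : Multigraph) (S : Set G.V) (F : Set G.E) : Prop :=
  ∃ (x y z : G.V) (e1 e2 e3 : G.E),
    x ≠ y ∧ x ≠ z ∧ y ≠ z ∧
    G.ends e1 = s(x, y) ∧ G.ends e2 = s(y, z) ∧ G.ends e3 = s(x, z) ∧
    S = {x, y, z} ∧ F = {e1, e2, e3}

/-- The subgraph `(S, F)` of `G` is `Z3`-connected (as a graph in its own right). -/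
def SubZ3Connected (G : Multigraph) (S : Set G.V) (F : Set G.E) : Prop :=
  ∀ β : G.V → ZMod 3, (∀ v, v ∉ S → β v = 0) → (∑ v : G.V, β v) = 0 →
    ∃ D : G.E → G.V × G.V, G.IsOrientation D ∧
      ∀ v ∈ S, (({e : G.E | e ∈ F ∧ (D e).1 = v}.ncard : ZMod 3)
        - ({e : G.E | e ∈ F ∧ (D e).2 = v}.ncard : ZMod 3)) = β v

/-- `G` is the 2-sum of its subgraphs `(SA, FA)` and `(SB, FB)`:
`E(G) = E(A) ∪ E(B)`, `|E(A) ∩ E(B)| = 1` and `|V(A) ∩ V(B)| = 2`. -/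
def IsTwoSum (G : Multigraph) (SA : Set G.V) (FA : Set G.E)
    (SB : Set G.V) (FB : Set G.E) : Prop :=
  G.Subgraph SA FA ∧ G.Subgraph SB FB ∧
  FA ∪ FB = Set.univ ∧ (FA ∩ FB).ncard = 1 ∧ (SA ∩ SB).ncard = 2

/-- All vertices of `G` are joined by walks using only edges from `F`. -/
def ConnOn (G : Multigraph) (F : Set G.E) : Prop :=
  ∀ u v : G.V, Relation.ReflTransGen (fun x y => ∃ e ∈ F, G.ends e = s(x, y)) u v

/-- The spanning subgraph with edge set `F` is 2-edge-connected:
connected and with no cut edge. -/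
def TwoEdgeConnOn (G : Multigraph) (F : Set G.E) : Prop :=
  G.ConnOn F ∧ ∀ e ∈ F, G.ConnOn (F \ {e})

/-- The orientation `D` is strongly connected. -/
def StronglyConnected (G : Multigraph) (D : G.E → G.V × G.V) : Prop :=
  ∀ u v : G.V, Relation.ReflTransGen (fun x y => ∃ e : G.E, D e = (x, y)) u v

/-- `G` belongs to the class `S3`: every `Z3`-boundary is realized by a strongly
connected orientation. -/
def InS3 (G : Multigraph) : Prop :=
  ∀ β : G.V → ZMod 3, (∑ v : G.V, β v) = 0 →
    ∃ D : G.E → G.V × G.V, G.IsOrientation D ∧ G.StronglyConnected D ∧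
      ∀ v : G.V, ((G.outDeg D v : ZMod 3) - (G.inDeg D v : ZMod 3)) = β v

/-- `G` has a cycle (of length ≥ 2, so possibly a pair of parallel edges) all of whose
edges lie in `A`. -/
def HasCycleIn (G : Multigraph) (A : Set G.E) : Prop :=
  ∃ (vs : List G.V) (es : List G.E),
    2 ≤ vs.length ∧ vs.Nodup ∧ es.Nodup ∧ es.length = vs.length ∧
    (∀ e ∈ es, e ∈ A) ∧
    ∀ (i : ℕ) (h1 : i < es.length) (h2 : i < vs.length)
      (h3 : (i + 1) % vs.length < vs.length),
      G.ends (es.get ⟨i, h1⟩) = s(vs.get ⟨i, h2⟩, vs.get ⟨(i + 1) % vs.length, h3⟩)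

/-- `(vs, es)` is a path from `u` to `v` in `G`. -/
def IsPath (G : Multigraph) (u v : G.V) (vs : List G.V) (es : List G.E) : Prop :=
  vs.Nodup ∧ es.Nodup ∧ vs.head? = some u ∧ vs.getLast? = some v ∧
  vs.length = es.length + 1 ∧
  ∀ (i : ℕ) (h1 : i < es.length) (h2 : i < vs.length) (h3 : i + 1 < vs.length),
    G.ends (es.get ⟨i, h1⟩) = s(vs.get ⟨i, h2⟩, vs.get ⟨i + 1, h3⟩)

/-- `H` is isomorphic to the subgraph `(S, F)` of `G`. -/
def IsIsoToSub (H G : Multigraph) (S : Set G.V) (F : Set G.E) : Prop :=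
  ∃ (φ : H.V → G.V) (ψ : H.E → G.E),
    Function.Injective φ ∧ Set.range φ = S ∧
    Function.Injective ψ ∧ Set.range ψ = F ∧
    ∀ e, G.ends (ψ e) = Sym2.map φ (H.ends e)

/-- `G'` is (isomorphic to) the graph obtained from `G` by adding two new edges with
endpoint pairs `p` and `q`. -/
def IsAddTwoEdges (G : Multigraph) (p q : Sym2 G.V) (G' : Multigraph) : Prop :=
  ∃ (φ : G.V ≃ G'.V) (e1 e2 : G'.E), e1 ≠ e2 ∧
    G'.ends e1 = Sym2.map (⇑φ) p ∧ G'.ends e2 = Sym2.map (⇑φ) q ∧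
    ∃ ψ : G.E → G'.E, Function.Injective ψ ∧
      Set.range ψ = {e : G'.E | e ≠ e1 ∧ e ≠ e2} ∧
      ∀ e, G'.ends (ψ e) = Sym2.map (⇑φ) (G.ends e)

/-- `G'` is (isomorphic to) the graph obtained from `G` by deleting the edges in `X`
and adding one new edge with endpoint pair `p`. -/
def IsDeleteAddEdge (G : Multigraph) (X : Set G.E) (p : Sym2 G.V) (G' : Multigraph) : Prop :=
  ∃ (φ : G.V ≃ G'.V) (e0 : G'.E),
    G'.ends e0 = Sym2.map (⇑φ) p ∧
    ∃ ψ : {e : G.E // e ∉ X} → G'.E, Function.Injective ψ ∧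
      Set.range ψ = {e : G'.E | e ≠ e0} ∧
      ∀ e : {e : G.E // e ∉ X}, G'.ends (ψ e) = Sym2.map (⇑φ) (G.ends e.1)

/-- `G` is a crystal: a spanning triangle-path plus one extra edge joining its two
leaves. -/
def IsCrystal (G : Multigraph) : Prop :=
  ∃ (F : Set G.E) (u v : G.V) (e0 : G.E),
    G.IsTrianglePath Set.univ F ∧ u ≠ v ∧
    G.degIn F u = 2 ∧ G.degIn F v = 2 ∧
    e0 ∉ F ∧ G.ends e0 = s(u, v) ∧ insert e0 F = Set.univ

/-- The subgraph with edge set `F` is triangularly connected: any two of its edges lie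
on a common triangle-path inside it. -/
def TriangularlyConnectedOn (G : Multigraph) (F : Set G.E) : Prop :=
  ∀ e1 ∈ F, ∀ e2 ∈ F, ∃ (S : Set G.V) (F' : Set G.E),
    F' ⊆ F ∧ G.IsTrianglePath S F' ∧ e1 ∈ F' ∧ e2 ∈ F'

/-- `G` is triangularly connected. -/
def TriangularlyConnected (G : Multigraph) : Prop :=
  G.TriangularlyConnectedOn Set.univ

/-- `G` contains a spanning triangularly-connected subgraph. -/
def HasSpanningTriangularlyConnected (G : Multigraph) : Prop :=
  ∃ F : Set G.E, G.TriangularlyConnectedOn F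

/-- `G` admits a circular `t/s`-flow. -/
def HasCircularFlow (G : Multigraph) (t s : ℤ) : Prop :=
  ∃ (D : G.E → G.V × G.V) (f : G.E → ℤ),
    G.IsOrientation D ∧ (∀ e, s ≤ |f e| ∧ |f e| ≤ t - s) ∧ G.IsConserving D f

end Multigraph

/-- `G` can be obtained from `K4` by a (possibly empty) series of bull-growing
operations. -/
inductive FromK4ByBull : Multigraph → Prop
  | base (G : Multigraph) : G.IsK4 → FromK4ByBull G
  | grow (G H : Multigraph) : FromK4ByBull H → G.IsBullGrowing H → FromK4ByBull G
namespace Multigraph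

variable (G : Multigraph)

private lemma exists_rep (e : G.E) : ∃ p : G.V × G.V, G.ends e = s(p.1, p.2) := by
  induction (G.ends e) using Sym2.ind with
  | _ x y => exact ⟨(x, y), rfl⟩

/-- A reference orientation of each edge, via choice. -/
noncomputable def sig (e : G.E) : G.V × G.V := Classical.choose (G.exists_rep e)

lemma sig_spec (e : G.E) : G.ends e = s((G.sig e).1, (G.sig e).2) :=
  Classical.choose_spec (G.exists_rep e)

lemma sig_ne (e : G.E) : (G.sig e).1 ≠ (G.sig e).2 := by
  have h := G.loopless e
  rw [G.sig_spec e] at h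
  simpa using h

lemma sig_fst_mem (e : G.E) : (G.sig e).1 ∈ G.ends e := by
  rw [G.sig_spec e]; exact Sym2.mem_mk_left _ _

lemma sig_snd_mem (e : G.E) : (G.sig e).2 ∈ G.ends e := by
  rw [G.sig_spec e]; exact Sym2.mem_mk_right _ _

/-- Indicator function of a vertex, valued in `ZMod 3`. -/
noncomputable def chi (x : G.V) : G.V → ZMod 3 := fun w => if x = w then 1 else 0

/-- Signed boundary indicator of an edge under the reference orientation. -/
noncomputable def dlt (e : G.E) : G.V → ZMod 3 :=
  fun w => G.chi (G.sig e).1 w - G.chi (G.sig e).2 w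

/-- Boundary of the `ZMod 3`-labelling `c`. -/
noncomputable def bnd (c : G.E → ZMod 3) (v : G.V) : ZMod 3 :=
  ∑ e : G.E, c e * G.dlt e v

/-- `γ` is realizable as the boundary of a labelling that is nonzero exactly on `F`. -/
def Rz (F : Set G.E) (γ : G.V → ZMod 3) : Prop :=
  ∃ c : G.E → ZMod 3, (∀ e ∈ F, c e ≠ 0) ∧ (∀ e, e ∉ F → c e = 0) ∧
    ∀ v, G.bnd c v = γ v

lemma dlt_pm {e : G.E} {x y : G.V} (h : G.ends e = s(x, y)) :
    ∃ s : ZMod 3, s * s = 1 ∧ ∀ w, G.dlt e w = s * (G.chi x w - G.chi y w) := by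
  have h2 : s((G.sig e).1, (G.sig e).2) = s(x, y) := (G.sig_spec e) ▸ h
  rw [Sym2.eq_iff] at h2
  rcases h2 with ⟨h1, h2⟩ | ⟨h1, h2⟩
  · exact ⟨1, by decide, fun w => by simp [dlt, h1, h2]⟩
  · refine ⟨-1, by decide, fun w => by simp only [dlt, h1, h2]; ring⟩

end Multigraph
namespace Multigraph

variable (G : Multigraph)

lemma bnd_add (c c' : G.E → ZMod 3) (v : G.V) :
    G.bnd (fun e => c e + c' e) v = G.bnd c v + G.bnd c' v := by
  unfold bnd
  rw [← Finset.sum_add_distrib]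
  exact Finset.sum_congr rfl fun e _ => by ring

lemma bnd_spike (e1 : G.E) (a : ZMod 3) (v : G.V) :
    G.bnd (fun e => if e = e1 then a else 0) v = a * G.dlt e1 v := by
  unfold bnd
  have key : ∀ e : G.E, (if e = e1 then a else 0) * G.dlt e v =
      (if e = e1 then a * G.dlt e v else 0) := by
    intro e; by_cases h : e = e1 <;> simp [h]
  rw [Finset.sum_congr rfl fun e _ => key e, Finset.sum_ite_eq' Finset.univ e1]
  simp

lemma bnd_sum_zero (c : G.E → ZMod 3) : ∑ v : G.V, G.bnd c v = 0 := by
  unfold bnd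
  rw [Finset.sum_comm]
  apply Finset.sum_eq_zero
  intro e _
  rw [← Finset.mul_sum]
  have : ∑ v : G.V, G.dlt e v = 0 := by
    unfold dlt chi
    rw [Finset.sum_sub_distrib]
    simp [Finset.sum_ite_eq Finset.univ]
  rw [this, mul_zero]

lemma bnd_support {c : G.E → ZMod 3} {S : Set G.V}
    (hF : ∀ e, c e ≠ 0 → ∀ x ∈ G.ends e, x ∈ S) {v : G.V} (hv : v ∉ S) :
    G.bnd c v = 0 := by
  apply Finset.sum_eq_zero
  intro e _
  by_cases hc : c e = 0
  · simp [hc]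
  · have hx1 : (G.sig e).1 ≠ v := fun h => hv (h ▸ hF e hc _ (G.sig_fst_mem e))
    have hx2 : (G.sig e).2 ≠ v := fun h => hv (h ▸ hF e hc _ (G.sig_snd_mem e))
    simp [dlt, chi, hx1, hx2]

end Multigraph
/-- Triangle-tree together with its set of "bad" (unrealizable) boundaries. -/
inductive TTB (G : Multigraph) : Set G.V → Set G.E → Set (G.V → ZMod 3) → Prop
  | base (x y z : G.V) (e1 e2 e3 : G.E)
      (hxy : x ≠ y) (hxz : x ≠ z) (hyz : y ≠ z)
      (h1 : G.ends e1 = s(x, y)) (h2 : G.ends e2 = s(y, z)) (h3 : G.ends e3 = s(x, z)) :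
      TTB G {x, y, z} {e1, e2, e3}
        {γ | ∃ s : ZMod 3, s ≠ 0 ∧ γ = fun w => s * (G.chi x w + G.chi y w + G.chi z w)}
  | grow (S : Set G.V) (F : Set G.E) (B : Set (G.V → ZMod 3)) (hT : TTB G S F B)
      (v a b : G.V) (hv : v ∉ S) (e : G.E) (he : e ∈ F) (hab : G.ends e = s(a, b))
      (e1 e2 : G.E) (h1 : G.ends e1 = s(v, a)) (h2 : G.ends e2 = s(v, b)) :
      TTB G (insert v S) (insert e1 (insert e2 F))
        {γ | ∃ (s : ZMod 3) (β : G.V → ZMod 3), s ≠ 0 ∧ β ∈ B ∧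
          γ = fun w => β w + s * (G.chi v w + G.chi a w + G.chi b w)}

namespace Multigraph

variable {G : Multigraph}

lemma ttb_of {S : Set G.V} {F : Set G.E} (h : G.IsTriangleTree S F) :
    ∃ B, TTB G S F B := by
  induction h with
  | base x y z e1 e2 e3 hxy hxz hyz h1 h2 h3 =>
      exact ⟨_, TTB.base x y z e1 e2 e3 hxy hxz hyz h1 h2 h3⟩
  | grow S F hT v a b hv e he hab e1 e2 h1 h2 ih =>
      obtain ⟨B, hB⟩ := ih
      exact ⟨_, TTB.grow S F B hB v a b hv e he hab e1 e2 h1 h2⟩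

lemma _root_.TTB.subgraph {S : Set G.V} {F : Set G.E} {B : Set (G.V → ZMod 3)}
    (h : TTB G S F B) : G.Subgraph S F := by
  induction h with
  | base x y z e1 e2 e3 hxy hxz hyz h1 h2 h3 =>
      intro e he w hw
      rcases he with he | he | he <;> subst he <;>
        [rw [h1] at hw; rw [h2] at hw; rw [h3] at hw] <;> rw [Sym2.mem_iff] at hw <;>
        rcases hw with hw | hw <;> subst hw <;> simp
  | grow S F B hT v a b hv e he hab e1 e2 h1 h2 ih =>
      intro f hf w hw
      have hA : a ∈ S := ih e he a (hab ▸ Sym2.mem_mk_left a b)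
      have hB : b ∈ S := ih e he b (hab ▸ Sym2.mem_mk_right a b)
      rcases hf with hf | hf | hf
      · subst hf; rw [h1, Sym2.mem_iff] at hw
        rcases hw with hw | hw <;> subst hw <;> simp [hA]
      · subst hf; rw [h2, Sym2.mem_iff] at hw
        rcases hw with hw | hw <;> subst hw <;> simp [hB]
      · exact Set.mem_insert_iff.2 (Or.inr (ih f hf w hw))

lemma _root_.TTB.bsupp {S : Set G.V} {F : Set G.E} {B : Set (G.V → ZMod 3)}
    (h : TTB G S F B) : ∀ β ∈ B, ∀ x, x ∉ S → β x = 0 := by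
  induction h with
  | base x y z e1 e2 e3 hxy hxz hyz h1 h2 h3 =>
      rintro β ⟨s, hs, rfl⟩ w hw
      simp only [Set.mem_insert_iff, Set.mem_singleton_iff, not_or] at hw
      simp [chi, Ne.symm hw.1, Ne.symm hw.2.1, Ne.symm hw.2.2]
  | grow S F B hT v a b hv e he hab e1 e2 h1 h2 ih =>
      rintro γ ⟨s, β, hs, hβ, rfl⟩ w hw
      simp only [Set.mem_insert_iff, not_or] at hw
      have hA : a ∈ S := hT.subgraph e he a (hab ▸ Sym2.mem_mk_left a b)
      have hB : b ∈ S := hT.subgraph e he b (hab ▸ Sym2.mem_mk_right a b)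
      have : β w = 0 := ih β hβ w hw.2
      have hva : v ≠ w := fun hvw => hw.1 hvw.symm
      have haw : a ≠ w := fun h' => hw.2 (h' ▸ hA)
      have hbw : b ≠ w := fun h' => hw.2 (h' ▸ hB)
      simp [this, chi, hva, haw, hbw]

end Multigraph
namespace Multigraph

variable {G : Multigraph}

lemma chi_self (x : G.V) : G.chi x x = 1 := by simp [chi]

lemma chi_ne {x w : G.V} (h : x ≠ w) : G.chi x w = 0 := by simp [chi, h]

lemma chi_sum (x : G.V) : ∑ t : G.V, G.chi x t = 1 := by
  unfold chi; simp [Finset.sum_ite_eq Finset.univ]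

lemma three_zero : (3 : ZMod 3) = 0 := by decide

lemma ne_of_ends {e : G.E} {a b : G.V} (hab : G.ends e = s(a, b)) : a ≠ b := by
  have := G.loopless e
  rw [hab] at this
  simpa using this

lemma grow_facts {S : Set G.V} {F : Set G.E} {B : Set (G.V → ZMod 3)}
    (hT : TTB G S F B) {v a b : G.V} (hv : v ∉ S) {e : G.E} (he : e ∈ F)
    (hab : G.ends e = s(a, b)) {e1 e2 : G.E} (h1 : G.ends e1 = s(v, a))
    (h2 : G.ends e2 = s(v, b)) :
    a ∈ S ∧ b ∈ S ∧ v ≠ a ∧ v ≠ b ∧ a ≠ b ∧ e1 ∉ F ∧ e2 ∉ F ∧ e1 ≠ e2 := by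
  have hA : a ∈ S := hT.subgraph e he a (hab ▸ Sym2.mem_mk_left a b)
  have hB : b ∈ S := hT.subgraph e he b (hab ▸ Sym2.mem_mk_right a b)
  have hva : v ≠ a := fun h => hv (h ▸ hA)
  have hvb : v ≠ b := fun h => hv (h ▸ hB)
  have hab' : a ≠ b := ne_of_ends hab
  have he1 : e1 ∉ F := fun hf => hv (hT.subgraph e1 hf v (h1 ▸ Sym2.mem_mk_left v a))
  have he2 : e2 ∉ F := fun hf => hv (hT.subgraph e2 hf v (h2 ▸ Sym2.mem_mk_left v b))
  have h12 : e1 ≠ e2 := by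
    intro hEq
    rw [hEq, h2, Sym2.eq_iff] at h1
    rcases h1 with ⟨-, h⟩ | ⟨h, -⟩
    · exact hab' h.symm
    · exact hva h
  exact ⟨hA, hB, hva, hvb, hab', he1, he2, h12⟩

/-- No two bad boundaries differ by a nonzero multiple of the signed indicator of an
edge of the tree. -/
lemma _root_.TTB.claim2 {S : Set G.V} {F : Set G.E} {B : Set (G.V → ZMod 3)}
    (h : TTB G S F B) : ∀ p q : G.V, p ≠ q → (∃ ew ∈ F, G.ends ew = s(p, q)) →
      ∀ (β : G.V → ZMod 3) (c : ZMod 3), β ∈ B → c ≠ 0 →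
        (fun w => β w + c * (G.chi p w - G.chi q w)) ∉ B := by
  induction h with
  | base x y z e1 e2 e3 hxy hxz hyz h1 h2 h3 =>
      rintro p q hpq ⟨ew, hew, hpqe⟩ β c ⟨s0, hs0, rfl⟩ hc ⟨s1, hs1, hEq1⟩
      have hpm : p = x ∨ p = y ∨ p = z := by
        have hpmem : p ∈ G.ends ew := hpqe ▸ Sym2.mem_mk_left p q
        rcases hew with h' | h' | h' <;> subst h'
        · rw [h1, Sym2.mem_iff] at hpmem; tauto
        · rw [h2, Sym2.mem_iff] at hpmem; tauto
        · rw [h3, Sym2.mem_iff] at hpmem; tauto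
      have hqm : q = x ∨ q = y ∨ q = z := by
        have hqmem : q ∈ G.ends ew := hpqe ▸ Sym2.mem_mk_right p q
        rcases hew with h' | h' | h' <;> subst h'
        · rw [h1, Sym2.mem_iff] at hqmem; tauto
        · rw [h2, Sym2.mem_iff] at hqmem; tauto
        · rw [h3, Sym2.mem_iff] at hqmem; tauto
      obtain ⟨z0, hz0m, hz0p, hz0q⟩ :
          ∃ z0, (z0 = x ∨ z0 = y ∨ z0 = z) ∧ z0 ≠ p ∧ z0 ≠ q := by
        rcases hpm with rfl | rfl | rfl <;> rcases hqm with rfl | rfl | rfl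
        · exact absurd rfl hpq
        · exact ⟨z, Or.inr (Or.inr rfl), Ne.symm hxz, Ne.symm hyz⟩
        · exact ⟨y, Or.inr (Or.inl rfl), Ne.symm hxy, hyz⟩
        · exact ⟨z, Or.inr (Or.inr rfl), Ne.symm hyz, Ne.symm hxz⟩
        · exact absurd rfl hpq
        · exact ⟨x, Or.inl rfl, hxy, hxz⟩
        · exact ⟨y, Or.inr (Or.inl rfl), hyz, Ne.symm hxy⟩
        · exact ⟨x, Or.inl rfl, hxz, hxy⟩
        · exact absurd rfl hpq
      have hXz0 : G.chi x z0 + G.chi y z0 + G.chi z z0 = 1 := by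
        rcases hz0m with rfl | rfl | rfl
        · rw [chi_self, chi_ne (Ne.symm hxy), chi_ne (Ne.symm hxz)]; ring
        · rw [chi_self, chi_ne hxy, chi_ne (Ne.symm hyz)]; ring
        · rw [chi_self, chi_ne hxz, chi_ne hyz]; ring
      have hXp : G.chi x p + G.chi y p + G.chi z p = 1 := by
        rcases hpm with rfl | rfl | rfl
        · rw [chi_self, chi_ne (Ne.symm hxy), chi_ne (Ne.symm hxz)]; ring
        · rw [chi_self, chi_ne hxy, chi_ne (Ne.symm hyz)]; ring
        · rw [chi_self, chi_ne hxz, chi_ne hyz]; ring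
      have Ez := congrFun hEq1 z0
      simp only [chi_ne (Ne.symm hz0p), chi_ne (Ne.symm hz0q), hXz0] at Ez
      have hss : s0 = s1 := by linear_combination Ez
      have Ep := congrFun hEq1 p
      simp only [chi_self, chi_ne (Ne.symm hpq)] at Ep
      rw [hXp, ← hss] at Ep
      exact hc (by linear_combination Ep)
  | grow S F B hT v a b hv e he hab e1 e2 h1 h2 ih =>
      rintro p q hpq ⟨ew, hew, hpqe⟩ β c hβ hc hmem1
      obtain ⟨hA, hB, hva, hvb, hab', he1F, he2F, h12⟩ := grow_facts hT hv he hab h1 h2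
      obtain ⟨s0, β0, hs0, hβ0, hEq0⟩ := hβ
      obtain ⟨s1, β1, hs1, hβ1, hEq1⟩ := hmem1
      have hβ0v : β0 v = 0 := hT.bsupp β0 hβ0 v hv
      have hβ1v : β1 v = 0 := hT.bsupp β1 hβ1 v hv
      have h3z : (3 : ZMod 3) = 0 := three_zero
      have E0v := congrFun hEq0 v
      have E1v := congrFun hEq1 v
      simp only [chi_self, chi_ne (Ne.symm hva), chi_ne (Ne.symm hvb), hβ0v, hβ1v] at E0v E1v
      -- E0v : β v = 0 + s0 * (1 + 0 + 0)
      rcases hew with hw' | hw' | hw'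
      · subst hw'
        rw [h1, Sym2.eq_iff] at hpqe
        rcases hpqe with ⟨hpv, hqa⟩ | ⟨hpa, hqv⟩
        · subst hpv; subst hqa
          rw [chi_self, chi_ne (Ne.symm hva)] at E1v
          have hs : s1 = s0 + c := by linear_combination E0v - E1v
          refine ih a b hab' ⟨e, he, hab⟩ β0 c hβ0 hc ?_
          have hfun : (fun w => β0 w + c * (G.chi a w - G.chi b w)) = β1 := by
            funext w
            have T1 := congrFun hEq1 w
            have T0 := congrFun hEq0 w
            rw [hs] at T1
            linear_combination T1 - T0 + (c * G.chi a w) * h3z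
          rw [hfun]; exact hβ1
        · subst hpa; subst hqv
          rw [chi_self, chi_ne (Ne.symm hva)] at E1v
          have hs : s1 = s0 - c := by linear_combination E0v - E1v
          refine ih a b hab' ⟨e, he, hab⟩ β0 (-c) hβ0 (neg_ne_zero.2 hc) ?_
          have hfun : (fun w => β0 w + (-c) * (G.chi a w - G.chi b w)) = β1 := by
            funext w
            have T1 := congrFun hEq1 w
            have T0 := congrFun hEq0 w
            rw [hs] at T1
            linear_combination T1 - T0 - (c * G.chi a w) * h3z
          rw [hfun]; exact hβ1
      · subst hw'
        rw [h2, Sym2.eq_iff] at hpqe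
        rcases hpqe with ⟨hpv, hqb⟩ | ⟨hpb, hqv⟩
        · subst hpv; subst hqb
          rw [chi_self, chi_ne (Ne.symm hvb)] at E1v
          have hs : s1 = s0 + c := by linear_combination E0v - E1v
          refine ih a b hab' ⟨e, he, hab⟩ β0 (-c) hβ0 (neg_ne_zero.2 hc) ?_
          have hfun : (fun w => β0 w + (-c) * (G.chi a w - G.chi b w)) = β1 := by
            funext w
            have T1 := congrFun hEq1 w
            have T0 := congrFun hEq0 w
            rw [hs] at T1
            linear_combination T1 - T0 + (c * G.chi b w) * h3z
          rw [hfun]; exact hβ1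
        · subst hpb; subst hqv
          rw [chi_self, chi_ne (Ne.symm hvb)] at E1v
          have hs : s1 = s0 - c := by linear_combination E0v - E1v
          refine ih a b hab' ⟨e, he, hab⟩ β0 c hβ0 hc ?_
          have hfun : (fun w => β0 w + c * (G.chi a w - G.chi b w)) = β1 := by
            funext w
            have T1 := congrFun hEq1 w
            have T0 := congrFun hEq0 w
            rw [hs] at T1
            linear_combination T1 - T0 - (c * G.chi b w) * h3z
          rw [hfun]; exact hβ1
      · have hpS : p ∈ S := hT.subgraph ew hw' p (hpqe ▸ Sym2.mem_mk_left p q)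
        have hqS : q ∈ S := hT.subgraph ew hw' q (hpqe ▸ Sym2.mem_mk_right p q)
        have hpv : p ≠ v := fun h' => hv (h' ▸ hpS)
        have hqv : q ≠ v := fun h' => hv (h' ▸ hqS)
        rw [chi_ne hpv, chi_ne hqv] at E1v
        have hs : s1 = s0 := by linear_combination E0v - E1v
        refine ih p q hpq ⟨ew, hw', hpqe⟩ β0 c hβ0 hc ?_
        have hfun : (fun w => β0 w + c * (G.chi p w - G.chi q w)) = β1 := by
          funext w
          have T1 := congrFun hEq1 w
          have T0 := congrFun hEq0 w
          rw [hs] at T1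
          linear_combination T1 - T0
        rw [hfun]; exact hβ1

end Multigraph
namespace Multigraph

variable {G : Multigraph}

lemma zmod3_cases : ∀ t : ZMod 3, t = 0 ∨ t = 1 ∨ t = 2 := by decide

/-- No line in a "vertex-pair direction" lies entirely inside the bad set. -/
lemma _root_.TTB.claim3 {S : Set G.V} {F : Set G.E} {B : Set (G.V → ZMod 3)}
    (h : TTB G S F B) : ∀ u w : G.V, u ∈ S → w ∈ S → u ≠ w →
      ∀ γ : G.V → ZMod 3, γ ∈ B →
        (fun t => γ t + (G.chi u t - G.chi w t)) ∈ B →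
        (fun t => γ t + 2 * (G.chi u t - G.chi w t)) ∈ B → False := by
  induction h with
  | base x y z e1 e2 e3 hxy hxz hyz h1 h2 h3 =>
      rintro u w hu hw huw γ ⟨s0, hs0, rfl⟩ ⟨s1, hs1, hE1⟩ ⟨s2, hs2, hE2⟩
      have hXu : G.chi x u + G.chi y u + G.chi z u = 1 := by
        rcases hu with rfl | rfl | rfl
        · rw [chi_self, chi_ne (Ne.symm hxy), chi_ne (Ne.symm hxz)]; ring
        · rw [chi_self, chi_ne hxy, chi_ne (Ne.symm hyz)]; ring
        · rw [chi_self, chi_ne hxz, chi_ne hyz]; ring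
      have E1 := congrFun hE1 u
      have E2 := congrFun hE2 u
      simp only [chi_self, chi_ne (Ne.symm huw), hXu] at E1 E2
      -- E1 : s0 * 1 + (1 - 0) = s1 * 1 ; E2 : s0 * 1 + 2 * (1 - 0) = s2 * 1
      have hs1e : s1 = s0 + 1 := by linear_combination -E1
      have hs2e : s2 = s0 + 2 := by linear_combination -E2
      rcases zmod3_cases s0 with h' | h' | h'
      · exact hs0 h'
      · exact hs2 (by rw [hs2e, h']; decide)
      · exact hs1 (by rw [hs1e, h']; decide)
  | grow S F B hT v a b hv e he hab e1 e2 h1 h2 ih =>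
      rintro u w hu hw huw γ hm0 hm1 hm2
      obtain ⟨hA, hB, hva, hvb, hab', he1F, he2F, h12⟩ := grow_facts hT hv he hab h1 h2
      obtain ⟨s0, β0, hs0, hβ0, hEq0⟩ := hm0
      obtain ⟨s1, β1, hs1, hβ1, hEq1⟩ := hm1
      obtain ⟨s2, β2, hs2, hβ2, hEq2⟩ := hm2
      have hβ0v : β0 v = 0 := hT.bsupp β0 hβ0 v hv
      have hβ1v : β1 v = 0 := hT.bsupp β1 hβ1 v hv
      have hβ2v : β2 v = 0 := hT.bsupp β2 hβ2 v hv
      have E0 := congrFun hEq0 v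
      have E1 := congrFun hEq1 v
      have E2 := congrFun hEq2 v
      simp only [chi_self, chi_ne (Ne.symm hva), chi_ne (Ne.symm hvb), hβ0v, hβ1v, hβ2v]
        at E0 E1 E2
      by_cases huv : u = v
      · subst huv
        have hwu : w ≠ u := Ne.symm huw
        rw [chi_self, chi_ne hwu] at E1 E2
        -- E1 : γ u + (1 - 0) = 0 + s1 * (1+0+0), E0 : γ u = 0 + s0 * (1+0+0)
        have hs1e : s1 = s0 + 1 := by linear_combination E0 - E1
        have hs2e : s2 = s0 + 2 := by linear_combination E0 - E2
        rcases zmod3_cases s0 with h' | h' | h'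
        · exact hs0 h'
        · exact hs2 (by rw [hs2e, h']; decide)
        · exact hs1 (by rw [hs1e, h']; decide)
      · by_cases hwv : w = v
        · subst hwv
          rw [chi_self, chi_ne huv] at E1 E2
          have hs1e : s1 = s0 - 1 := by linear_combination E0 - E1
          have hs2e : s2 = s0 - 2 := by linear_combination E0 - E2
          rcases zmod3_cases s0 with h' | h' | h'
          · exact hs0 h'
          · exact hs1 (by rw [hs1e, h']; decide)
          · exact hs2 (by rw [hs2e, h']; decide)
        · have huS : u ∈ S := hu.resolve_left huv
          have hwS : w ∈ S := hw.resolve_left hwv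
          rw [chi_ne huv, chi_ne hwv] at E1 E2
          have hs1e : s1 = s0 := by linear_combination E0 - E1
          have hs2e : s2 = s0 := by linear_combination E0 - E2
          refine ih u w huS hwS huw β0 hβ0 ?_ ?_
          · have hfun : (fun t => β0 t + (G.chi u t - G.chi w t)) = β1 := by
              funext t
              have T1 := congrFun hEq1 t
              have T0 := congrFun hEq0 t
              rw [hs1e] at T1
              linear_combination T1 - T0
            rw [hfun]; exact hβ1
          · have hfun : (fun t => β0 t + 2 * (G.chi u t - G.chi w t)) = β2 := by
              funext t
              have T2 := congrFun hEq2 t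
              have T0 := congrFun hEq0 t
              rw [hs2e] at T2
              linear_combination T2 - T0
            rw [hfun]; exact hβ2

end Multigraph
namespace Multigraph

variable {G : Multigraph}

lemma unit_ne_zero {σ d : ZMod 3} (hσ : σ * σ = 1) (hd : d ≠ 0) : σ * d ≠ 0 := by
  intro h
  apply hd
  have : σ * (σ * d) = σ * 0 := by rw [h]
  rwa [← mul_assoc, hσ, one_mul, mul_zero] at this

lemma Rz_grow {F : Set G.E} {v a b : G.V} {e1 e2 : G.E}
    (h1 : G.ends e1 = s(v, a)) (h2 : G.ends e2 = s(v, b))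
    (he1 : e1 ∉ F) (he2 : e2 ∉ F) (h12 : e1 ≠ e2)
    {γ γ' : G.V → ZMod 3} {d1 d2 : ZMod 3} (hd1 : d1 ≠ 0) (hd2 : d2 ≠ 0)
    (hγ : ∀ t, γ t = γ' t + d1 * (G.chi v t - G.chi a t) + d2 * (G.chi v t - G.chi b t))
    (hR : G.Rz F γ') : G.Rz (insert e1 (insert e2 F)) γ := by
  obtain ⟨c', hc'F, hc'0, hc'b⟩ := hR
  obtain ⟨σ1, hσ1, hδ1⟩ := G.dlt_pm h1
  obtain ⟨σ2, hσ2, hδ2⟩ := G.dlt_pm h2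
  refine ⟨fun f => c' f + (if f = e1 then σ1 * d1 else 0) + (if f = e2 then σ2 * d2 else 0),
    ?_, ?_, ?_⟩
  · intro f hf
    show c' f + (if f = e1 then σ1 * d1 else 0) + (if f = e2 then σ2 * d2 else 0) ≠ 0
    rcases hf with rfl | rfl | hf
    · rw [hc'0 f he1, if_pos rfl, if_neg h12]
      simpa using unit_ne_zero hσ1 hd1
    · rw [hc'0 f he2, if_neg (Ne.symm h12), if_pos rfl]
      simpa using unit_ne_zero hσ2 hd2
    · have hf1 : f ≠ e1 := fun h => he1 (h ▸ hf)
      have hf2 : f ≠ e2 := fun h => he2 (h ▸ hf)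
      rw [if_neg hf1, if_neg hf2, add_zero, add_zero]
      exact hc'F f hf
  · intro f hf
    show c' f + (if f = e1 then σ1 * d1 else 0) + (if f = e2 then σ2 * d2 else 0) = 0
    simp only [Set.mem_insert_iff, not_or] at hf
    rw [hc'0 f hf.2.2, if_neg hf.1, if_neg hf.2.1, add_zero, add_zero]
  · intro t
    have hb1 : G.bnd (fun f => c' f + (if f = e1 then σ1 * d1 else 0)
          + (if f = e2 then σ2 * d2 else 0)) t
        = G.bnd (fun f => c' f + (if f = e1 then σ1 * d1 else 0)) t
          + G.bnd (fun f => if f = e2 then σ2 * d2 else 0) t := G.bnd_add _ _ t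
    have hb2 : G.bnd (fun f => c' f + (if f = e1 then σ1 * d1 else 0)) t
        = G.bnd c' t + G.bnd (fun f => if f = e1 then σ1 * d1 else 0) t := G.bnd_add _ _ t
    rw [hb1, hb2, G.bnd_spike e1 (σ1 * d1) t, G.bnd_spike e2 (σ2 * d2) t, hc'b t,
      hδ1 t, hδ2 t]
    linear_combination (d1 * (G.chi v t - G.chi a t)) * hσ1 +
      (d2 * (G.chi v t - G.chi b t)) * hσ2 - hγ t

/-- Every sum-zero boundary outside the bad set is realizable on the tree. -/
lemma _root_.TTB.realize {S : Set G.V} {F : Set G.E} {B : Set (G.V → ZMod 3)}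
    (h : TTB G S F B) : ∀ γ : G.V → ZMod 3, (∀ x, x ∉ S → γ x = 0) →
      (∑ x : G.V, γ x) = 0 → γ ∉ B → G.Rz F γ := by
  induction h with
  | base x y z e1 e2 e3 hxy hxz hyz h1 h2 h3 =>
      intro γ hsupp hsum hnB
      have he12 : e1 ≠ e2 := by
        intro h'
        rw [h', h2, Sym2.eq_iff] at h1
        rcases h1 with ⟨ha, -⟩ | ⟨-, hb⟩
        · exact hxy ha.symm
        · exact hxz hb.symm
      have he13 : e1 ≠ e3 := by
        intro h'
        rw [h', h3, Sym2.eq_iff] at h1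
        rcases h1 with ⟨-, hb⟩ | ⟨ha, -⟩
        · exact hyz hb.symm
        · exact hxy ha
      have he23 : e2 ≠ e3 := by
        intro h'
        rw [h', h3, Sym2.eq_iff] at h2
        rcases h2 with ⟨ha, -⟩ | ⟨-, hb⟩
        · exact hxy ha
        · exact hyz hb.symm
      have hz : γ x + γ y + γ z = 0 := by
        have hzz : z ∉ ({y, x} : Finset G.V) := by
          simp [Ne.symm hxz, Ne.symm hyz]
        have hyy : y ∉ ({x} : Finset G.V) := by simp [Ne.symm hxy]
        have hsub : ∑ t ∈ insert z (insert y ({x} : Finset G.V)), γ t = ∑ t : G.V, γ t := by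
          apply Finset.sum_subset (Finset.subset_univ _)
          intro t _ ht
          simp only [Finset.mem_insert, Finset.mem_singleton, not_or] at ht
          exact hsupp t (by
            simp only [Set.mem_insert_iff, Set.mem_singleton_iff, not_or]
            exact ⟨fun h' => ht.2.2 h', fun h' => ht.2.1 h', fun h' => ht.1 h'⟩)
        rw [Finset.sum_insert hzz, Finset.sum_insert hyy, Finset.sum_singleton, hsum] at hsub
        linear_combination hsub
      have h3z : (3 : ZMod 3) = 0 := three_zero
      have hmem : ∀ s : ZMod 3, s ≠ 0 → γ x = s → γ y = s → False := by
        intro s hs hgx hgy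
        apply hnB
        refine ⟨s, hs, funext fun w => ?_⟩
        by_cases hwx : w = x
        · rw [hwx, chi_self, chi_ne (Ne.symm hxy), chi_ne (Ne.symm hxz), hgx]; ring
        · by_cases hwy : w = y
          · rw [hwy, chi_self, chi_ne hxy, chi_ne (Ne.symm hyz), hgy]; ring
          · by_cases hwz : w = z
            · rw [hwz, chi_self, chi_ne hxz, chi_ne hyz]
              have hgz : γ z = s := by linear_combination hz - hgx - hgy - s * h3z
              rw [hgz]; ring
            · have hg0 : γ w = 0 := hsupp w (by
                simp only [Set.mem_insert_iff, Set.mem_singleton_iff]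
                tauto)
              rw [hg0, chi_ne (fun h' : x = w => hwx h'.symm),
                chi_ne (fun h' : y = w => hwy h'.symm),
                chi_ne (fun h' : z = w => hwz h'.symm)]
              ring
      obtain ⟨d1, hd1, hd1y, hd1x⟩ :
          ∃ d1 : ZMod 3, d1 ≠ 0 ∧ d1 ≠ -γ y ∧ d1 ≠ γ x := by
        by_contra hcon
        push_neg at hcon
        by_cases hy1 : (1 : ZMod 3) = -γ y
        · by_cases hy2 : (2 : ZMod 3) = -γ y
          · exact absurd (hy1.trans hy2.symm) (by decide)
          · have hx2 := hcon 2 (by decide) (fun h' => hy2 h')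
            exact hmem 2 (by decide) hx2.symm (by linear_combination hy1 - h3z)
        · have hx1 := hcon 1 one_ne_zero (fun h' => hy1 h')
          by_cases hy2 : (2 : ZMod 3) = -γ y
          · exact hmem 1 one_ne_zero hx1.symm (by linear_combination hy2 - h3z)
          · have hx2 := hcon 2 (by decide) (fun h' => hy2 h')
            exact absurd (hx1.trans hx2.symm) (by decide)
      obtain ⟨σ1, hσ1, hδ1⟩ := G.dlt_pm h1
      obtain ⟨σ2, hσ2, hδ2⟩ := G.dlt_pm h2
      obtain ⟨σ3, hσ3, hδ3⟩ := G.dlt_pm h3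
      have hd2 : γ y + d1 ≠ 0 := fun h' => hd1y (by linear_combination h')
      have hd3 : γ x - d1 ≠ 0 := fun h' => hd1x (by linear_combination -h')
      refine ⟨fun f => (if f = e1 then σ1 * d1 else 0)
        + (if f = e2 then σ2 * (γ y + d1) else 0)
        + (if f = e3 then σ3 * (γ x - d1) else 0), ?_, ?_, ?_⟩
      · intro f hf
        show (if f = e1 then σ1 * d1 else 0) + (if f = e2 then σ2 * (γ y + d1) else 0)
          + (if f = e3 then σ3 * (γ x - d1) else 0) ≠ 0
        rcases hf with rfl | rfl | rfl
        · rw [if_pos rfl, if_neg he12, if_neg he13]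
          simpa using unit_ne_zero hσ1 hd1
        · rw [if_neg (Ne.symm he12), if_pos rfl, if_neg he23]
          simpa using unit_ne_zero hσ2 hd2
        · rw [if_neg (Ne.symm he13), if_neg (Ne.symm he23), if_pos rfl]
          simpa using unit_ne_zero hσ3 hd3
      · intro f hf
        show (if f = e1 then σ1 * d1 else 0) + (if f = e2 then σ2 * (γ y + d1) else 0)
          + (if f = e3 then σ3 * (γ x - d1) else 0) = 0
        simp only [Set.mem_insert_iff, Set.mem_singleton_iff, not_or] at hf
        rw [if_neg hf.1, if_neg hf.2.1, if_neg hf.2.2]; ring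
      · intro t
        have hb1 : G.bnd (fun f => (if f = e1 then σ1 * d1 else 0)
              + (if f = e2 then σ2 * (γ y + d1) else 0)
              + (if f = e3 then σ3 * (γ x - d1) else 0)) t
            = G.bnd (fun f => (if f = e1 then σ1 * d1 else 0)
              + (if f = e2 then σ2 * (γ y + d1) else 0)) t
              + G.bnd (fun f => if f = e3 then σ3 * (γ x - d1) else 0) t :=
          G.bnd_add _ _ t
        have hb2 : G.bnd (fun f => (if f = e1 then σ1 * d1 else 0)
              + (if f = e2 then σ2 * (γ y + d1) else 0)) t
            = G.bnd (fun f => if f = e1 then σ1 * d1 else 0) t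
              + G.bnd (fun f => if f = e2 then σ2 * (γ y + d1) else 0) t :=
          G.bnd_add _ _ t
        rw [hb1, hb2, G.bnd_spike e1 (σ1 * d1) t, G.bnd_spike e2 (σ2 * (γ y + d1)) t,
          G.bnd_spike e3 (σ3 * (γ x - d1)) t, hδ1 t, hδ2 t, hδ3 t]
        by_cases htx : t = x
        · rw [htx, chi_self, chi_ne (Ne.symm hxy), chi_ne (Ne.symm hxz)]
          linear_combination d1 * hσ1 + (γ x - d1) * hσ3
        · by_cases hty : t = y
          · rw [hty, chi_self, chi_ne hxy, chi_ne (Ne.symm hyz)]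
            linear_combination (-d1) * hσ1 + (γ y + d1) * hσ2
          · by_cases htz : t = z
            · rw [htz, chi_self, chi_ne hxz, chi_ne hyz]
              linear_combination (-(γ y + d1)) * hσ2 + (-(γ x - d1)) * hσ3 - hz
            · have hg : γ t = 0 := hsupp t (by
                simp only [Set.mem_insert_iff, Set.mem_singleton_iff]; tauto)
              rw [hg, chi_ne (fun h' : x = t => htx h'.symm),
                chi_ne (fun h' : y = t => hty h'.symm),
                chi_ne (fun h' : z = t => htz h'.symm)]
              ring
  | grow S F B hT v a b hv e he hab e1 e2 h1 h2 ih =>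
      intro γ hsupp hsum hnB
      obtain ⟨hA, hB, hva, hvb, hab', he1F, he2F, h12⟩ := grow_facts hT hv he hab h1 h2
      have h3z : (3 : ZMod 3) = 0 := three_zero
      have hXsum : ∑ t : G.V, (G.chi v t + G.chi a t + G.chi b t) = 3 := by
        rw [Finset.sum_add_distrib, Finset.sum_add_distrib, chi_sum, chi_sum, chi_sum]
        ring
      by_cases hs : γ v = 0
      · have hsupp1 : ∀ t, t ∉ S → γ t + (G.chi a t - G.chi b t) = 0 := by
          intro t ht
          by_cases htv : t = v
          · rw [htv, hs, chi_ne (fun h' : a = v => hva h'.symm),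
              chi_ne (fun h' : b = v => hvb h'.symm)]
            ring
          · have hg : γ t = 0 := hsupp t (by simp [Set.mem_insert_iff, htv, ht])
            rw [hg, chi_ne (fun h' : a = t => ht (h' ▸ hA)),
              chi_ne (fun h' : b = t => ht (h' ▸ hB))]
            ring
        have hsupp2 : ∀ t, t ∉ S → γ t - (G.chi a t - G.chi b t) = 0 := by
          intro t ht
          by_cases htv : t = v
          · rw [htv, hs, chi_ne (fun h' : a = v => hva h'.symm),
              chi_ne (fun h' : b = v => hvb h'.symm)]
            ring
          · have hg : γ t = 0 := hsupp t (by simp [Set.mem_insert_iff, htv, ht])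
            rw [hg, chi_ne (fun h' : a = t => ht (h' ▸ hA)),
              chi_ne (fun h' : b = t => ht (h' ▸ hB))]
            ring
        have hsum1 : ∑ t : G.V, (γ t + (G.chi a t - G.chi b t)) = 0 := by
          rw [Finset.sum_add_distrib, hsum, Finset.sum_sub_distrib, chi_sum, chi_sum]
          ring
        have hsum2 : ∑ t : G.V, (γ t - (G.chi a t - G.chi b t)) = 0 := by
          rw [Finset.sum_sub_distrib, hsum, Finset.sum_sub_distrib, chi_sum, chi_sum]
          ring
        by_cases hm1 : (fun t => γ t + (G.chi a t - G.chi b t)) ∈ B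
        · by_cases hm2 : (fun t => γ t - (G.chi a t - G.chi b t)) ∈ B
          · exfalso
            have hfun : (fun w => (fun t => γ t + (G.chi a t - G.chi b t)) w
                + 1 * (G.chi a w - G.chi b w)) = fun t => γ t - (G.chi a t - G.chi b t) := by
              funext t
              show γ t + (G.chi a t - G.chi b t) + 1 * (G.chi a t - G.chi b t)
                = γ t - (G.chi a t - G.chi b t)
              linear_combination (G.chi a t - G.chi b t) * h3z
            exact hT.claim2 a b hab' ⟨e, he, hab⟩ _ 1 hm1 one_ne_zero (hfun ▸ hm2)
          · refine Rz_grow h1 h2 he1F he2F h12 (by decide : (-1 : ZMod 3) ≠ 0)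
              one_ne_zero (fun t => by ring) (ih _ hsupp2 hsum2 hm2)
        · refine Rz_grow h1 h2 he1F he2F h12 one_ne_zero
            (by decide : (-1 : ZMod 3) ≠ 0) (fun t => by ring) (ih _ hsupp1 hsum1 hm1)
      · have hsupp' : ∀ t, t ∉ S →
            γ t - γ v * (G.chi v t + G.chi a t + G.chi b t) = 0 := by
          intro t ht
          by_cases htv : t = v
          · rw [htv, chi_self, chi_ne (fun h' : a = v => hva h'.symm),
              chi_ne (fun h' : b = v => hvb h'.symm)]
            ring
          · have hg : γ t = 0 := hsupp t (by simp [Set.mem_insert_iff, htv, ht])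
            rw [hg, chi_ne (fun h' : v = t => htv h'.symm),
              chi_ne (fun h' : a = t => ht (h' ▸ hA)),
              chi_ne (fun h' : b = t => ht (h' ▸ hB))]
            ring
        have hsum' : ∑ t : G.V, (γ t - γ v * (G.chi v t + G.chi a t + G.chi b t)) = 0 := by
          rw [Finset.sum_sub_distrib, hsum, ← Finset.mul_sum, hXsum, three_zero]
          ring
        have hm' : (fun t => γ t - γ v * (G.chi v t + G.chi a t + G.chi b t)) ∉ B := by
          intro hm
          apply hnB
          exact ⟨γ v, _, hs, hm, funext fun t => by
            show γ t = γ t - γ v * (G.chi v t + G.chi a t + G.chi b t)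
              + γ v * (G.chi v t + G.chi a t + G.chi b t)
            ring⟩
        refine Rz_grow h1 h2 he1F he2F h12 (neg_ne_zero.2 hs) (neg_ne_zero.2 hs) ?_
          (ih _ hsupp' hsum' hm')
        intro t
        show γ t = γ t - γ v * (G.chi v t + G.chi a t + G.chi b t)
          + -γ v * (G.chi v t - G.chi a t) + -γ v * (G.chi v t - G.chi b t)
        linear_combination (γ v * G.chi v t) * h3z

end Multigraph
namespace Multigraph

variable {G : Multigraph}

lemma ncard_sum (P : G.E → Prop) :
    (({e : G.E | P e}.ncard : ZMod 3)) = ∑ e : G.E, if P e then (1 : ZMod 3) else 0 := by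
  classical
  rw [Set.ncard_eq_toFinset_card', Set.toFinset_setOf, Finset.card_filter, Nat.cast_sum]
  apply Finset.sum_congr rfl
  intro e _
  by_cases h : P e <;> simp [h]

lemma tree_pair {S : Set G.V} {F : Set G.E} (h : G.IsTriangleTree S F) :
    ∃ x y, x ∈ S ∧ y ∈ S ∧ x ≠ y := by
  induction h with
  | base x y z e1 e2 e3 hxy hxz hyz h1 h2 h3 =>
      exact ⟨x, y, by simp, by simp, hxy⟩
  | grow S F hT v a b hv e he hab e1 e2 h1 h2 ih =>
      obtain ⟨x, y, hx, hy, hxy⟩ := ih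
      exact ⟨x, y, Or.inr hx, Or.inr hy, hxy⟩

/-- Core combinatorial theorem: any sum-zero boundary can be realized on a spanning
triangle-tree after a correction supported on two given distinct vertices. -/
lemma core {F : Set G.E} (hT : G.IsTriangleTree Set.univ F) {u w : G.V} (huw : u ≠ w)
    (γ : G.V → ZMod 3) (hsum : (∑ x : G.V, γ x) = 0) :
    ∃ d : ZMod 3, G.Rz F (fun t => γ t + d * (G.chi u t - G.chi w t)) := by
  obtain ⟨B, hB⟩ := ttb_of hT
  have hsum' : ∀ d : ZMod 3, ∑ x : G.V, (γ x + d * (G.chi u x - G.chi w x)) = 0 := by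
    intro d
    rw [Finset.sum_add_distrib, hsum, ← Finset.mul_sum, Finset.sum_sub_distrib,
      chi_sum, chi_sum]
    ring
  have hreal : ∀ d : ZMod 3, (fun t => γ t + d * (G.chi u t - G.chi w t)) ∉ B →
      G.Rz F (fun t => γ t + d * (G.chi u t - G.chi w t)) := fun d hd =>
    hB.realize _ (fun x hx => absurd (Set.mem_univ x) hx) (hsum' d) hd
  by_cases h1 : (fun t => γ t + 1 * (G.chi u t - G.chi w t)) ∈ B
  · by_cases h2 : (fun t => γ t + 2 * (G.chi u t - G.chi w t)) ∈ B
    · refine ⟨0, hreal 0 fun h0 => ?_⟩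
      apply hB.claim3 u w (Set.mem_univ u) (Set.mem_univ w) huw
        (fun t => γ t + 0 * (G.chi u t - G.chi w t)) h0
      · have e1 : (fun t => (fun t' => γ t' + 0 * (G.chi u t' - G.chi w t')) t
            + (G.chi u t - G.chi w t)) = fun t => γ t + 1 * (G.chi u t - G.chi w t) :=
          funext fun t => by show γ t + 0 * _ + _ = _; ring
        rw [e1]; exact h1
      · have e2 : (fun t => (fun t' => γ t' + 0 * (G.chi u t' - G.chi w t')) t
            + 2 * (G.chi u t - G.chi w t)) = fun t => γ t + 2 * (G.chi u t - G.chi w t) :=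
          funext fun t => by show γ t + 0 * _ + 2 * _ = _; ring
        rw [e2]; exact h2
    · exact ⟨2, hreal 2 h2⟩
  · exact ⟨1, hreal 1 h1⟩

end Multigraph
namespace Multigraph

variable {G : Multigraph}

lemma backward (hG : G.HasSpanningTriangleTree) {S0 : Set G.V} {F0 : Set G.E}
    (hSub : G.Subgraph S0 F0) (hcard : 2 ≤ S0.ncard) (hZ : G.SubZ3Connected S0 F0) :
    G.Z3Connected := by
  classical
  obtain ⟨FT, hT⟩ := hG
  obtain ⟨u, huS, w, hwS, huw⟩ := (Set.one_lt_ncard (Set.toFinite S0)).mp hcard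
  intro β hβsum
  set cO : G.E → ZMod 3 := fun e => if e ∈ FT ∨ e ∈ F0 then 0 else 1 with hcOdef
  have hsum1 : ∑ x : G.V, (β x - G.bnd cO x) = 0 := by
    rw [Finset.sum_sub_distrib, hβsum, G.bnd_sum_zero]
    ring
  obtain ⟨d, hRz⟩ := core hT huw (fun x => β x - G.bnd cO x) hsum1
  obtain ⟨cT, hcTF, hcT0, hcTb⟩ := hRz
  set cT' : G.E → ZMod 3 := fun e => if e ∈ F0 then 0 else cT e with hcT'def
  set cT'' : G.E → ZMod 3 := fun e => if e ∈ F0 then cT e else 0 with hcT''def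
  set cfin : G.E → ZMod 3 := fun e => cO e + cT' e with hcfindef
  have hcTsplit : ∀ t, G.bnd cT t = G.bnd cT' t + G.bnd cT'' t := by
    intro t
    rw [← G.bnd_add cT' cT'' t]
    have he : cT = fun e => cT' e + cT'' e := by
      funext e
      by_cases h0 : e ∈ F0 <;> simp [hcT'def, hcT''def, h0]
    conv_lhs => rw [he]
  have hbfin : ∀ t, G.bnd cfin t = G.bnd cO t + G.bnd cT' t := by
    intro t
    rw [hcfindef]
    exact G.bnd_add cO cT' t
  have hcT''0 : ∀ x, x ∉ S0 → G.bnd cT'' x = 0 := by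
    intro x hx
    refine G.bnd_support (fun e he y hy => ?_) hx
    by_cases h0 : e ∈ F0
    · exact hSub e h0 y hy
    · exfalso
      apply he
      simp [hcT''def, h0]
  have hβ0supp : ∀ x, x ∉ S0 → β x - G.bnd cfin x = 0 := by
    intro x hx
    have h1 : G.bnd cT x = β x - G.bnd cO x + d * (G.chi u x - G.chi w x) := hcTb x
    have h2 := hcTsplit x
    have h3 := hbfin x
    have hu0 : G.chi u x = 0 := chi_ne (fun h' : u = x => hx (h' ▸ huS))
    have hw0 : G.chi w x = 0 := chi_ne (fun h' : w = x => hx (h' ▸ hwS))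
    have h4 := hcT''0 x hx
    linear_combination -h3 + h2 - h1 + h4 - d * hu0 + d * hw0
  have hβ0sum : ∑ x : G.V, (β x - G.bnd cfin x) = 0 := by
    rw [Finset.sum_sub_distrib, hβsum, G.bnd_sum_zero]
    ring
  obtain ⟨D0, hD0or, hD0deg⟩ := hZ (fun x => β x - G.bnd cfin x) hβ0supp hβ0sum
  have hcfinF0 : ∀ e ∈ F0, cfin e = 0 := by
    intro e h0
    simp [hcfindef, hcOdef, hcT'def, h0]
  have hcfin_ne : ∀ e, e ∉ F0 → cfin e ≠ 0 := by
    intro e h0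
    by_cases hft : e ∈ FT
    · have hv : cfin e = cT e := by
        simp [hcfindef, hcOdef, hcT'def, h0, hft]
      rw [hv]
      exact hcTF e hft
    · have hv : cfin e = 1 := by
        simp [hcfindef, hcOdef, hcT'def, h0, hft, hcT0 e hft]
      rw [hv]
      exact one_ne_zero
  set D : G.E → G.V × G.V := fun e =>
    if e ∈ F0 then D0 e else (if cfin e = 1 then G.sig e else ((G.sig e).2, (G.sig e).1))
    with hDdef
  have hDF0 : ∀ e ∈ F0, D e = D0 e := by
    intro e h0
    simp [hDdef, h0]
  have hD1 : ∀ e, e ∉ F0 → cfin e = 1 → D e = G.sig e := by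
    intro e h0 hc
    simp [hDdef, h0, hc]
  have hD2 : ∀ e, e ∉ F0 → cfin e ≠ 1 → D e = ((G.sig e).2, (G.sig e).1) := by
    intro e h0 hc
    simp [hDdef, h0, hc]
  refine ⟨D, ?_, ?_⟩
  · intro e
    by_cases h0 : e ∈ F0
    · rw [hDF0 e h0]
      exact hD0or e
    · by_cases hc : cfin e = 1
      · rw [hD1 e h0 hc]
        exact G.sig_spec e
      · rw [hD2 e h0 hc]
        show G.ends e = s((G.sig e).2, (G.sig e).1)
        rw [G.sig_spec e]
        exact Sym2.eq_swap
  · intro v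
    have hout : (G.outDeg D v : ZMod 3) = ∑ e : G.E, (if (D e).1 = v then (1 : ZMod 3) else 0) :=
      ncard_sum _
    have hin : (G.inDeg D v : ZMod 3) = ∑ e : G.E, (if (D e).2 = v then (1 : ZMod 3) else 0) :=
      ncard_sum _
    rw [hout, hin, ← Finset.sum_sub_distrib]
    have hper : ∀ e : G.E,
        ((if (D e).1 = v then (1 : ZMod 3) else 0) - (if (D e).2 = v then (1 : ZMod 3) else 0))
        = (if e ∈ F0 then ((if (D0 e).1 = v then (1 : ZMod 3) else 0)
            - (if (D0 e).2 = v then (1 : ZMod 3) else 0)) else 0)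
          + (if e ∈ F0 then 0 else cfin e * G.dlt e v) := by
      intro e
      by_cases h0 : e ∈ F0
      · rw [hDF0 e h0, if_pos h0, if_pos h0]
        ring
      · rw [if_neg h0, if_neg h0]
        by_cases hc : cfin e = 1
        · rw [hD1 e h0 hc, hc]
          simp only [dlt, chi]
          ring
        · have h2 : cfin e = 2 := by
            rcases zmod3_cases (cfin e) with h' | h' | h'
            · exact absurd h' (hcfin_ne e h0)
            · exact absurd h' hc
            · exact h'
          rw [hD2 e h0 hc, h2]
          simp only [dlt, chi]
          linear_combination ((if (G.sig e).2 = v then (1 : ZMod 3) else 0)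
            - (if (G.sig e).1 = v then (1 : ZMod 3) else 0)) * three_zero
    rw [Finset.sum_congr rfl (fun e _ => hper e), Finset.sum_add_distrib]
    have hB : (∑ e : G.E, if e ∈ F0 then 0 else cfin e * G.dlt e v) = G.bnd cfin v := by
      have : G.bnd cfin v = ∑ e : G.E, cfin e * G.dlt e v := rfl
      rw [this]
      apply Finset.sum_congr rfl
      intro e _
      by_cases h0 : e ∈ F0
      · rw [if_pos h0, hcfinF0 e h0]
        ring
      · rw [if_neg h0]
    rw [hB]
    have hA : (∑ e : G.E, if e ∈ F0 then ((if (D0 e).1 = v then (1 : ZMod 3) else 0)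
        - (if (D0 e).2 = v then (1 : ZMod 3) else 0)) else 0) = β v - G.bnd cfin v := by
      by_cases hv : v ∈ S0
      · have hd := hD0deg v hv
        have hn1 := ncard_sum (G := G) (fun e => e ∈ F0 ∧ (D0 e).1 = v)
        have hn2 := ncard_sum (G := G) (fun e => e ∈ F0 ∧ (D0 e).2 = v)
        rw [hn1, hn2] at hd
        rw [← hd, ← Finset.sum_sub_distrib]
        apply Finset.sum_congr rfl
        intro e _
        by_cases h0 : e ∈ F0
        · rw [if_pos h0]
          by_cases ha : (D0 e).1 = v <;> by_cases hb : (D0 e).2 = v <;>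
            simp [h0, ha, hb]
        · rw [if_neg h0]
          rw [if_neg (fun h => h0 h.1), if_neg (fun h => h0 h.1)]
          ring
      · have hz0 : β v - G.bnd cfin v = 0 := hβ0supp v hv
        rw [hz0]
        apply Finset.sum_eq_zero
        intro e _
        by_cases h0 : e ∈ F0
        · rw [if_pos h0]
          have hm1 : (D0 e).1 ∈ S0 := hSub e h0 _ (by
            rw [hD0or e]; exact Sym2.mem_mk_left _ _)
          have hm2 : (D0 e).2 ∈ S0 := hSub e h0 _ (by
            rw [hD0or e]; exact Sym2.mem_mk_right _ _)
          rw [if_neg (fun h' : (D0 e).1 = v => hv (h' ▸ hm1)),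
            if_neg (fun h' : (D0 e).2 = v => hv (h' ▸ hm2))]
          ring
        · rw [if_neg h0]
    rw [hA]
    ring

end Multigraph

/-- Let `G` have a spanning triangle-tree. Then `G` is `Z3`-connected
iff it contains a `Z3`-connected subgraph with at least two vertices. -/
theorem stmt_10 (G : Multigraph) (hG : G.HasSpanningTriangleTree) :
    G.Z3Connected ↔
      ∃ (S : Set G.V) (F : Set G.E),
        G.Subgraph S F ∧ 2 ≤ S.ncard ∧ G.SubZ3Connected S F := by
  constructor
  · intro hZ3
    refine ⟨Set.univ, Set.univ, fun e _ v _ => Set.mem_univ v, ?_, ?_⟩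
    · obtain ⟨F, hT⟩ := hG
      obtain ⟨x, y, _, _, hxy⟩ := Multigraph.tree_pair hT
      exact (Set.one_lt_ncard (Set.toFinite _)).mpr
        ⟨x, Set.mem_univ x, y, Set.mem_univ y, hxy⟩
    · intro β _ hsum
      obtain ⟨D, hor, hdeg⟩ := hZ3 β hsum
      refine ⟨D, hor, fun v _ => ?_⟩
      have h1 : {e : G.E | e ∈ (Set.univ : Set G.E) ∧ (D e).1 = v}
          = {e : G.E | (D e).1 = v} := by ext e; simp
      have h2 : {e : G.E | e ∈ (Set.univ : Set G.E) ∧ (D e).2 = v}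
          = {e : G.E | (D e).2 = v} := by ext e; simp
      rw [h1, h2]
      exact hdeg v
  · rintro ⟨S, F, hSub, hcard, hZ⟩
    exact Multigraph.backward hG hSub hcard hZ
end

section
/- Let G be a bull-growing of a graph G1. If G is Z3-connected, then G1 is Z3-connected. -/
open scoped Classical

namespace Multigraph

lemma ncard_cast (G : Multigraph) (P : G.E → Prop) :
    (({e : G.E | P e}.ncard : ZMod 3)) = ∑ e : G.E, if P e then 1 else 0 := by
  rw [Set.ncard_eq_toFinset_card', Set.toFinset_setOf, Finset.card_filter]
  push_cast
  rfl

lemma flux (G : Multigraph) (D : G.E → G.V × G.V) (v : G.V) :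
    ((G.outDeg D v : ZMod 3) - (G.inDeg D v : ZMod 3)) =
      ∑ e : G.E, ((if (D e).1 = v then (1 : ZMod 3) else 0)
        - (if (D e).2 = v then 1 else 0)) := by
  rw [outDeg, inDeg, ncard_cast, ncard_cast, ← Finset.sum_sub_distrib]

lemma key_eq (G G1 : Multigraph) (u v w a b : G.V)
    (euv euw evw eua evb : G.E)
    (β1 : G1.V → ZMod 3)
    (φ : G1.V → G.V) (hφinj : Function.Injective φ)
    (hφu : ∀ y, φ y ≠ u) (hφv : ∀ y, φ y ≠ v)
    (D : G.E → G.V × G.V) (hDor : G.IsOrientation D)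
    (hflux : ∀ y : G1.V, (∑ e : G.E, ((if (D e).1 = φ y then (1:ZMod 3) else 0)
      - (if (D e).2 = φ y then 1 else 0))) = β1 y)
    (o1 : D euv = (u, v)) (o2 : D euw = (u, w)) (o3 : D evw = (w, v))
    (o4 : D eua = (u, a)) (o5 : D evb = (b, v))
    (d12 : euv ≠ euw) (d13 : euv ≠ evw) (d14 : euv ≠ eua) (d15 : euv ≠ evb)
    (d23 : euw ≠ evw) (d24 : euw ≠ eua) (d25 : euw ≠ evb)
    (d34 : evw ≠ eua) (d35 : evw ≠ evb) (d45 : eua ≠ evb)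
    (hab : a = b)
    (ψ : G1.E → G.E) (hψinj : Function.Injective ψ)
    (hψr : ∀ f : G.E, f ∈ Set.range ψ ↔
      (f ≠ euv ∧ f ≠ euw ∧ f ≠ evw ∧ f ≠ eua ∧ f ≠ evb))
    (hψe : ∀ e, G.ends (ψ e) = Sym2.map φ (G1.ends e)) :
    ∃ D1 : G1.E → G1.V × G1.V, G1.IsOrientation D1 ∧
      ∀ y : G1.V, ((G1.outDeg D1 y : ZMod 3) - (G1.inDeg D1 y : ZMod 3)) = β1 y := by
  have hex : ∀ e : G1.E, ∃ p : G1.V × G1.V, G1.ends e = s(p.1, p.2) ∧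
      φ p.1 = (D (ψ e)).1 ∧ φ p.2 = (D (ψ e)).2 := by
    intro e
    obtain ⟨x, y, hxy⟩ : ∃ x y, G1.ends e = s(x, y) :=
      Sym2.exists.mp ⟨G1.ends e, rfl⟩
    have hm := hψe e
    rw [hxy, Sym2.map_pair_eq] at hm
    have ho := hDor (ψ e)
    rw [hm, Sym2.eq_iff] at ho
    rcases ho with ⟨h1, h2⟩ | ⟨h1, h2⟩
    · exact ⟨(x, y), hxy, h1, h2⟩
    · exact ⟨(y, x), hxy.trans (Sym2.eq_swap), h2, h1⟩
  refine ⟨fun e => Classical.choose (hex e), fun e => (Classical.choose_spec (hex e)).1, ?_⟩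
  intro y
  rw [G1.flux]
  have hterm : ∀ e : G1.E,
      ((if ((fun e => Classical.choose (hex e)) e).1 = y then (1:ZMod 3) else 0)
        - (if ((fun e => Classical.choose (hex e)) e).2 = y then 1 else 0))
      = ((if (D (ψ e)).1 = φ y then (1:ZMod 3) else 0)
        - (if (D (ψ e)).2 = φ y then 1 else 0)) := by
    intro e
    obtain ⟨h1, h2, h3⟩ := Classical.choose_spec (hex e)
    have c1 : ((Classical.choose (hex e)).1 = y) = ((D (ψ e)).1 = φ y) :=
      propext ⟨fun h => h2.symm.trans (congrArg φ h), fun h => hφinj (h2.trans h)⟩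
    have c2 : ((Classical.choose (hex e)).2 = y) = ((D (ψ e)).2 = φ y) :=
      propext ⟨fun h => h3.symm.trans (congrArg φ h), fun h => hφinj (h3.trans h)⟩
    rw [c1, c2]
  rw [Finset.sum_congr rfl (fun e _ => hterm e)]
  rw [show (∑ e : G1.E, ((if (D (ψ e)).1 = φ y then (1:ZMod 3) else 0)
        - (if (D (ψ e)).2 = φ y then 1 else 0)))
      = ∑ f ∈ Finset.univ.image ψ, ((if (D f).1 = φ y then (1:ZMod 3) else 0)
        - (if (D f).2 = φ y then 1 else 0)) from
    (Finset.sum_image (f := fun f => ((if (D f).1 = φ y then (1:ZMod 3) else 0)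
        - (if (D f).2 = φ y then 1 else 0))) (g := ψ)
      (fun x _ x' _ hxx => hψinj hxx)).symm]
  have h6 : Finset.univ.image ψ = Finset.univ \ {euv, euw, evw, eua, evb} := by
    apply Finset.coe_injective
    rw [Finset.coe_image, Finset.coe_univ, Set.image_univ, Finset.coe_sdiff, Finset.coe_univ]
    ext f
    simp only [hψr f, Set.mem_diff, Set.mem_univ, true_and, Finset.coe_insert,
      Finset.coe_singleton, Set.mem_insert_iff, Set.mem_singleton_iff]
    tauto
  rw [h6]
  have h7 := Finset.sum_sdiff (f := fun f => ((if (D f).1 = φ y then (1:ZMod 3) else 0)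
        - (if (D f).2 = φ y then 1 else 0)))
    (Finset.subset_univ ({euv, euw, evw, eua, evb} : Finset G.E))
  have h8 : ∑ f ∈ ({euv, euw, evw, eua, evb} : Finset G.E),
      ((if (D f).1 = φ y then (1:ZMod 3) else 0)
        - (if (D f).2 = φ y then 1 else 0)) = 0 := by
    rw [Finset.sum_insert (by simp [d12, d13, d14, d15]),
      Finset.sum_insert (by simp [d23, d24, d25]),
      Finset.sum_insert (by simp [d34, d35]),
      Finset.sum_insert (by simp [d45]), Finset.sum_singleton]
    rw [o1, o2, o3, o4, o5]
    have hu' : ¬ (u = φ y) := fun hc => hφu y hc.symm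
    have hv' : ¬ (v = φ y) := fun hc => hφv y hc.symm
    simp only [hu', hv', if_false, hab]
    ring
  rw [h8, add_zero] at h7
  rw [h7, hflux y]

lemma key_ne (G G1 : Multigraph) (u v w a b : G.V)
    (euv euw evw eua evb : G.E)
    (β1 : G1.V → ZMod 3)
    (φ : G1.V → G.V) (hφinj : Function.Injective φ)
    (hφu : ∀ y, φ y ≠ u) (hφv : ∀ y, φ y ≠ v)
    (D : G.E → G.V × G.V) (hDor : G.IsOrientation D)
    (hflux : ∀ y : G1.V, (∑ e : G.E, ((if (D e).1 = φ y then (1:ZMod 3) else 0)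
      - (if (D e).2 = φ y then 1 else 0))) = β1 y)
    (o1 : D euv = (u, v)) (o2 : D euw = (u, w)) (o3 : D evw = (w, v))
    (o4 : D eua = (u, a)) (o5 : D evb = (b, v))
    (d12 : euv ≠ euw) (d13 : euv ≠ evw) (d14 : euv ≠ eua) (d15 : euv ≠ evb)
    (d23 : euw ≠ evw) (d24 : euw ≠ eua) (d25 : euw ≠ evb)
    (d34 : evw ≠ eua) (d35 : evw ≠ evb) (d45 : eua ≠ evb)
    (a' b' : G1.V) (ha' : φ a' = a) (hb' : φ b' = b)
    (e0 : G1.E) (ψ : G1.E → G.E)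
    (he0 : Sym2.map φ (G1.ends e0) = s(a, b))
    (hψinj : Set.InjOn ψ {e : G1.E | e ≠ e0})
    (hψr : ∀ f : G.E, f ∈ ψ '' {e : G1.E | e ≠ e0} ↔
      (f ≠ euv ∧ f ≠ euw ∧ f ≠ evw ∧ f ≠ eua ∧ f ≠ evb))
    (hψe : ∀ e, e ≠ e0 → G.ends (ψ e) = Sym2.map φ (G1.ends e)) :
    ∃ D1 : G1.E → G1.V × G1.V, G1.IsOrientation D1 ∧
      ∀ y : G1.V, ((G1.outDeg D1 y : ZMod 3) - (G1.inDeg D1 y : ZMod 3)) = β1 y := by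
  have hex : ∀ e : G1.E, e ≠ e0 → ∃ p : G1.V × G1.V, G1.ends e = s(p.1, p.2) ∧
      φ p.1 = (D (ψ e)).1 ∧ φ p.2 = (D (ψ e)).2 := by
    intro e he
    obtain ⟨x, y, hxy⟩ : ∃ x y, G1.ends e = s(x, y) :=
      Sym2.exists.mp ⟨G1.ends e, rfl⟩
    have hm := hψe e he
    rw [hxy, Sym2.map_pair_eq] at hm
    have ho := hDor (ψ e)
    rw [hm, Sym2.eq_iff] at ho
    rcases ho with ⟨h1, h2⟩ | ⟨h1, h2⟩
    · exact ⟨(x, y), hxy, h1, h2⟩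
    · exact ⟨(y, x), hxy.trans (Sym2.eq_swap), h2, h1⟩
  refine ⟨fun e => if h : e = e0 then (b', a') else Classical.choose (hex e h), ?_, ?_⟩
  · intro e
    by_cases h : e = e0
    · subst h
      beta_reduce
      rw [dif_pos rfl]
      obtain ⟨x, y, hxy⟩ : ∃ x y, G1.ends e = s(x, y) :=
        Sym2.exists.mp ⟨G1.ends e, rfl⟩
      rw [hxy, Sym2.map_pair_eq, ← ha', ← hb', Sym2.eq_iff] at he0
      rcases he0 with ⟨h1, h2⟩ | ⟨h1, h2⟩
      · rw [hxy, hφinj h1, hφinj h2]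
        exact Sym2.eq_swap
      · rw [hxy, hφinj h1, hφinj h2]
    · beta_reduce
      rw [dif_neg h]
      exact (Classical.choose_spec (hex e h)).1
  · intro y
    rw [G1.flux]
    rw [← Finset.sum_erase_add _ _ (Finset.mem_univ e0)]
    beta_reduce
    rw [dif_pos rfl]
    have hterm : ∀ e ∈ Finset.univ.erase e0,
        ((if ((fun e => if h : e = e0 then (b', a') else Classical.choose (hex e h)) e).1 = y
            then (1:ZMod 3) else 0)
          - (if ((fun e => if h : e = e0 then (b', a') else Classical.choose (hex e h)) e).2 = y
            then 1 else 0))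
        = ((if (D (ψ e)).1 = φ y then (1:ZMod 3) else 0)
          - (if (D (ψ e)).2 = φ y then 1 else 0)) := by
      intro e he
      have hne : e ≠ e0 := Finset.ne_of_mem_erase he
      simp only [dif_neg hne]
      obtain ⟨h1, h2, h3⟩ := Classical.choose_spec (hex e hne)
      have c1 : ((Classical.choose (hex e hne)).1 = y) = ((D (ψ e)).1 = φ y) :=
        propext ⟨fun h => h2.symm.trans (congrArg φ h), fun h => hφinj (h2.trans h)⟩
      have c2 : ((Classical.choose (hex e hne)).2 = y) = ((D (ψ e)).2 = φ y) :=
        propext ⟨fun h => h3.symm.trans (congrArg φ h), fun h => hφinj (h3.trans h)⟩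
      rw [c1, c2]
    rw [Finset.sum_congr rfl hterm]
    rw [show (∑ e ∈ Finset.univ.erase e0, ((if (D (ψ e)).1 = φ y then (1:ZMod 3) else 0)
          - (if (D (ψ e)).2 = φ y then 1 else 0)))
        = ∑ f ∈ (Finset.univ.erase e0).image ψ, ((if (D f).1 = φ y then (1:ZMod 3) else 0)
          - (if (D f).2 = φ y then 1 else 0)) from
      (Finset.sum_image (f := fun f => ((if (D f).1 = φ y then (1:ZMod 3) else 0)
          - (if (D f).2 = φ y then 1 else 0))) (g := ψ)
        (fun x hx x' hx' hxx =>
          hψinj (Finset.ne_of_mem_erase hx) (Finset.ne_of_mem_erase hx') hxx)).symm]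
    have h6 : (Finset.univ.erase e0).image ψ = Finset.univ \ {euv, euw, evw, eua, evb} := by
      apply Finset.coe_injective
      rw [Finset.coe_image, Finset.coe_erase, Finset.coe_univ, Finset.coe_sdiff, Finset.coe_univ]
      have : Set.univ \ {e0} = {e : G1.E | e ≠ e0} := by ext f; simp
      rw [this]
      ext f
      simp only [hψr f, Set.mem_diff, Set.mem_univ, true_and, Finset.coe_insert,
        Finset.coe_singleton, Set.mem_insert_iff, Set.mem_singleton_iff]
      tauto
    rw [h6]
    have h7 := Finset.sum_sdiff (f := fun f => ((if (D f).1 = φ y then (1:ZMod 3) else 0)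
          - (if (D f).2 = φ y then 1 else 0)))
      (Finset.subset_univ ({euv, euw, evw, eua, evb} : Finset G.E))
    have h8 : ∑ f ∈ ({euv, euw, evw, eua, evb} : Finset G.E),
        ((if (D f).1 = φ y then (1:ZMod 3) else 0)
          - (if (D f).2 = φ y then 1 else 0))
        = (if b = φ y then (1:ZMod 3) else 0) - (if a = φ y then 1 else 0) := by
      rw [Finset.sum_insert (by simp [d12, d13, d14, d15]),
        Finset.sum_insert (by simp [d23, d24, d25]),
        Finset.sum_insert (by simp [d34, d35]),
        Finset.sum_insert (by simp [d45]), Finset.sum_singleton]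
      rw [o1, o2, o3, o4, o5]
      have hu' : ¬ (u = φ y) := fun hc => hφu y hc.symm
      have hv' : ¬ (v = φ y) := fun hc => hφv y hc.symm
      simp only [hu', hv', if_false]
      ring
    have h9 : ∑ f ∈ Finset.univ \ ({euv, euw, evw, eua, evb} : Finset G.E),
        ((if (D f).1 = φ y then (1:ZMod 3) else 0)
          - (if (D f).2 = φ y then 1 else 0))
        = β1 y - ((if b = φ y then (1:ZMod 3) else 0) - (if a = φ y then 1 else 0)) := by
      rw [eq_sub_iff_add_eq, ← h8, h7, hflux y]
    rw [h9]
    have cb : (b' = y) = (b = φ y) :=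
      propext ⟨fun h => by rw [← hb', h], fun h => hφinj (by rw [hb', h])⟩
    have ca : (a' = y) = (a = φ y) :=
      propext ⟨fun h => by rw [← ha', h], fun h => hφinj (by rw [ha', h])⟩
    rw [cb, ca]
    ring

end Multigraph

set_option maxHeartbeats 1600000 in
/-- Let `G` be a bull-growing of `G1`. If `G` is `Z3`-connected then
so is `G1`. -/
theorem stmt_12 (G G1 : Multigraph) (h : G.IsBullGrowing G1)
    (hZ3 : G.Z3Connected) :
    G1.Z3Connected := by
  intro β1 hβ1sum
  obtain ⟨u, v, w, a, b, euv, euw, evw, eua, evb, heuv, heuw, hevw, heua, hevb,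
    hav, hbu, d_uv_uw, d_uv_ua, d_uw_ua, d_uv_vw, d_uv_vb, d_vw_vb,
    hIncU, hIncV, φ, hφinj, hφrange, hcaseEq, hcaseNe⟩ := h
  have hnediag : ∀ (e : G.E) (x y : G.V), G.ends e = s(x, y) → x ≠ y := fun e x y hxy h' =>
    G.loopless e (by rw [hxy]; exact Sym2.mk_isDiag_iff.mpr h')
  have huv := hnediag euv u v heuv
  have huw := hnediag euw u w heuw
  have hvw := hnediag evw v w hevw
  have hua := hnediag eua u a heua
  have hvb := hnediag evb v b hevb
  have d_uw_vw : euw ≠ evw := by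
    intro h'; rw [h', hevw] at heuw
    rcases Sym2.eq_iff.mp heuw with ⟨h1, _⟩ | ⟨h1, _⟩
    · exact huv h1.symm
    · exact hvw h1
  have d_uw_vb : euw ≠ evb := by
    intro h'; rw [h', hevb] at heuw
    rcases Sym2.eq_iff.mp heuw with ⟨h1, _⟩ | ⟨h1, _⟩
    · exact huv h1.symm
    · exact hvw h1
  have d_vw_ua : evw ≠ eua := by
    intro h'; rw [h', heua] at hevw
    rcases Sym2.eq_iff.mp hevw with ⟨h1, _⟩ | ⟨_, h2⟩
    · exact huv h1
    · exact hav h2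
  have d_ua_vb : eua ≠ evb := by
    intro h'; rw [h', hevb] at heua
    rcases Sym2.eq_iff.mp heua with ⟨h1, _⟩ | ⟨h1, _⟩
    · exact huv h1.symm
    · exact hav h1.symm
  have hau : a ≠ u := hua.symm
  have hbv : b ≠ v := hvb.symm
  have hφu : ∀ y, φ y ≠ u := fun y hc => by
    have hy : φ y ∈ Set.range φ := Set.mem_range_self y
    rw [hφrange] at hy; exact hy.1 hc
  have hφv : ∀ y, φ y ≠ v := fun y hc => by
    have hy : φ y ∈ Set.range φ := Set.mem_range_self y
    rw [hφrange] at hy; exact hy.2 hc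
  have hβφ : ∀ y : G1.V, (∑ c : G1.V, if φ c = φ y then β1 c else 0) = β1 y := by
    intro y
    rw [Finset.sum_eq_single y]
    · rw [if_pos rfl]
    · intro c _ hc; exact if_neg (fun hcc => hc (hφinj hcc))
    · intro hy; exact absurd (Finset.mem_univ y) hy
  have hβsum : ∑ z : G.V, (∑ c : G1.V, if φ c = z then β1 c else 0) = 0 := by
    rw [Finset.sum_comm]
    have hinner : ∀ y : G1.V, (∑ z : G.V, if φ y = z then β1 y else 0) = β1 y :=
      fun y => by simp
    rw [Finset.sum_congr rfl (fun y _ => hinner y)]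
    exact hβ1sum
  obtain ⟨D, hDor, hDb⟩ := hZ3 (fun z => ∑ c : G1.V, if φ c = z then β1 c else 0) hβsum
  have hflux : ∀ z : G.V,
      (∑ e : G.E, ((if (D e).1 = z then (1 : ZMod 3) else 0)
        - (if (D e).2 = z then 1 else 0)))
      = ∑ c : G1.V, if φ c = z then β1 c else 0 :=
    fun z => (G.flux D z).symm.trans (hDb z)
  have hfluxφ : ∀ y : G1.V,
      (∑ e : G.E, ((if (D e).1 = φ y then (1 : ZMod 3) else 0)
        - (if (D e).2 = φ y then 1 else 0))) = β1 y :=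
    fun y => (hflux (φ y)).trans (hβφ y)
  have hdir : ∀ (e : G.E) (x y : G.V), G.ends e = s(x, y) → D e = (x, y) ∨ D e = (y, x) := by
    intro e x y hxy
    have h' := hDor e
    rw [hxy, Sym2.eq_iff] at h'
    rcases h' with ⟨h1, h2⟩ | ⟨h1, h2⟩
    · exact Or.inl (Prod.ext h1.symm h2.symm)
    · exact Or.inr (Prod.ext h2.symm h1.symm)
  have hzero : ∀ (z : G.V) (s : Finset G.E), {e : G.E | z ∈ G.ends e} = ↑s →
      (∑ e ∈ s, ((if (D e).1 = z then (1 : ZMod 3) else 0)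
        - (if (D e).2 = z then 1 else 0)))
      = ∑ c : G1.V, if φ c = z then β1 c else 0 := by
    intro z s hs
    rw [← hflux z]
    refine Finset.sum_subset (Finset.subset_univ s) ?_
    intro e _ he
    have hne : z ∉ G.ends e := fun hmem => he (by
      have hm2 : e ∈ {e' : G.E | z ∈ G.ends e'} := hmem
      rw [hs] at hm2; exact hm2)
    rw [hDor e, Sym2.mem_iff] at hne
    push_neg at hne
    rw [if_neg (fun hc => hne.1 hc.symm), if_neg (fun hc => hne.2 hc.symm), sub_zero]
  have hβu : (∑ c : G1.V, if φ c = u then β1 c else 0) = 0 :=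
    Finset.sum_eq_zero fun c _ => if_neg (hφu c)
  have hβv : (∑ c : G1.V, if φ c = v then β1 c else 0) = 0 :=
    Finset.sum_eq_zero fun c _ => if_neg (hφv c)
  have hsumu := hzero u {euv, euw, eua} (by rw [hIncU]; simp)
  rw [hβu, Finset.sum_insert (by simp [d_uv_uw, d_uv_ua]),
    Finset.sum_insert (by simp [d_uw_ua]), Finset.sum_singleton] at hsumu
  have hsumv := hzero v {euv, evw, evb} (by rw [hIncV]; simp)
  rw [hβv, Finset.sum_insert (by simp [d_uv_vw, d_uv_vb]),
    Finset.sum_insert (by simp [d_vw_vb]), Finset.sum_singleton] at hsumv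
  have hU : (D euv = (u, v) ∧ D euw = (u, w) ∧ D eua = (u, a)) ∨
      (D euv = (v, u) ∧ D euw = (w, u) ∧ D eua = (a, u)) := by
    rcases hdir euv u v heuv with h1 | h1 <;> rcases hdir euw u w heuw with h2 | h2 <;>
      rcases hdir eua u a heua with h3 | h3 <;>
      first
        | exact Or.inl ⟨h1, h2, h3⟩
        | exact Or.inr ⟨h1, h2, h3⟩
        | (rw [h1, h2, h3] at hsumu
           simp [Ne.symm huv, Ne.symm huw, Ne.symm hua] at hsumu
           exact absurd hsumu (by decide))
        | (rw [h1, h2, h3] at hsumu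
           simp [Ne.symm huv, Ne.symm huw, Ne.symm hua] at hsumu)
  rcases hU with ⟨o1, o2, o4⟩ | ⟨o1, o2, o4⟩
  · -- Case A: all edges at u point out of u
    have hV : D evw = (w, v) ∧ D evb = (b, v) := by
      rcases hdir evw v w hevw with h2 | h2 <;> rcases hdir evb v b hevb with h3 | h3 <;>
        first
          | exact ⟨h2, h3⟩
          | (rw [o1, h2, h3] at hsumv
             simp [huv, Ne.symm hvw, Ne.symm hvb] at hsumv
             exact absurd hsumv (by decide))
          | (rw [o1, h2, h3] at hsumv
             simp [huv, Ne.symm hvw, Ne.symm hvb] at hsumv)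
    obtain ⟨o3, o5⟩ := hV
    by_cases hab : a = b
    · obtain ⟨ψ, hψinj, hψr0, hψe⟩ := hcaseEq hab
      have hψr : ∀ f : G.E, f ∈ Set.range ψ ↔
          (f ≠ euv ∧ f ≠ euw ∧ f ≠ evw ∧ f ≠ eua ∧ f ≠ evb) := by
        intro f; rw [hψr0]; simp only [Set.mem_setOf_eq, Set.mem_insert_iff,
          Set.mem_singleton_iff]; tauto
      exact Multigraph.key_eq G G1 u v w a b euv euw evw eua evb β1 φ hφinj hφu hφv D hDor
        hfluxφ o1 o2 o3 o4 o5 d_uv_uw d_uv_vw d_uv_ua d_uv_vb d_uw_vw d_uw_ua d_uw_vb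
        d_vw_ua d_vw_vb d_ua_vb hab ψ hψinj hψr hψe
    · obtain ⟨e0, ψ, he0, hψinj, hψr0, hψe⟩ := hcaseNe hab
      have ha2 : a ∈ Set.range φ := by rw [hφrange]; exact ⟨hau, hav⟩
      have hb2 : b ∈ Set.range φ := by rw [hφrange]; exact ⟨hbu, hbv⟩
      obtain ⟨a', ha'⟩ := ha2
      obtain ⟨b', hb'⟩ := hb2
      have hψr : ∀ f : G.E, f ∈ ψ '' {e : G1.E | e ≠ e0} ↔
          (f ≠ euv ∧ f ≠ euw ∧ f ≠ evw ∧ f ≠ eua ∧ f ≠ evb) := by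
        intro f; rw [hψr0]; simp only [Set.mem_setOf_eq, Set.mem_insert_iff,
          Set.mem_singleton_iff]; tauto
      exact Multigraph.key_ne G G1 u v w a b euv euw evw eua evb β1 φ hφinj hφu hφv D hDor
        hfluxφ o1 o2 o3 o4 o5 d_uv_uw d_uv_vw d_uv_ua d_uv_vb d_uw_vw d_uw_ua d_uw_vb
        d_vw_ua d_vw_vb d_ua_vb a' b' ha' hb' e0 ψ he0 hψinj hψr hψe
  · -- Case B: all edges at u point into u; swap the roles of (u, a) and (v, b)
    have hV : D evw = (v, w) ∧ D evb = (v, b) := by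
      rcases hdir evw v w hevw with h2 | h2 <;> rcases hdir evb v b hevb with h3 | h3 <;>
        first
          | exact ⟨h2, h3⟩
          | (rw [o1, h2, h3] at hsumv
             simp [huv, Ne.symm hvw, Ne.symm hvb] at hsumv
             exact absurd hsumv (by decide))
          | (rw [o1, h2, h3] at hsumv
             simp [huv, Ne.symm hvw, Ne.symm hvb] at hsumv)
    obtain ⟨o3, o5⟩ := hV
    by_cases hab : a = b
    · obtain ⟨ψ, hψinj, hψr0, hψe⟩ := hcaseEq hab
      have hψr : ∀ f : G.E, f ∈ Set.range ψ ↔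
          (f ≠ euv ∧ f ≠ evw ∧ f ≠ euw ∧ f ≠ evb ∧ f ≠ eua) := by
        intro f; rw [hψr0]; simp only [Set.mem_setOf_eq, Set.mem_insert_iff,
          Set.mem_singleton_iff]; tauto
      exact Multigraph.key_eq G G1 v u w b a euv evw euw evb eua β1 φ hφinj hφv hφu D hDor
        hfluxφ o1 o3 o2 o5 o4 d_uv_vw d_uv_uw d_uv_vb d_uv_ua (Ne.symm d_uw_vw) d_vw_vb
        d_vw_ua d_uw_vb d_uw_ua (Ne.symm d_ua_vb) hab.symm ψ hψinj hψr hψe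
    · obtain ⟨e0, ψ, he0, hψinj, hψr0, hψe⟩ := hcaseNe hab
      have ha2 : a ∈ Set.range φ := by rw [hφrange]; exact ⟨hau, hav⟩
      have hb2 : b ∈ Set.range φ := by rw [hφrange]; exact ⟨hbu, hbv⟩
      obtain ⟨a', ha'⟩ := ha2
      obtain ⟨b', hb'⟩ := hb2
      have hψr : ∀ f : G.E, f ∈ ψ '' {e : G1.E | e ≠ e0} ↔
          (f ≠ euv ∧ f ≠ evw ∧ f ≠ euw ∧ f ≠ evb ∧ f ≠ eua) := by
        intro f; rw [hψr0]; simp only [Set.mem_setOf_eq, Set.mem_insert_iff,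
          Set.mem_singleton_iff]; tauto
      exact Multigraph.key_ne G G1 v u w b a euv evw euw evb eua β1 φ hφinj hφv hφu D hDor
        hfluxφ o1 o3 o2 o5 o4 d_uv_vw d_uv_uw d_uv_vb d_uv_ua (Ne.symm d_uw_vw) d_vw_vb
        d_vw_ua d_uw_vb d_uw_ua (Ne.symm d_ua_vb) b' a' hb' ha' e0 ψ
        (he0.trans Sym2.eq_swap) hψinj hψr hψe
end

section
/- Let G be a finite loopless graph (parallel edges allowed) with a spanning triangle-tree, and suppose G is a bull-growing of a graph G1. Then G is Z3-connected if and only if G1 is Z3-connected. -/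
open scoped Classical

-- ===== auxiliary development =====
namespace BullAux

open Multigraph

section W
variable {V : Type}

/-- weight of a directed pair at a vertex -/
noncomputable def wgt (p : V × V) (z : V) : ZMod 3 :=
  (if p.1 = z then 1 else 0) - (if p.2 = z then 1 else 0)

/-- orientation of an edge with chosen sign -/
noncomputable def pick (s : ZMod 3) (x y : V) : V × V := if s = 1 then (x, y) else (y, x)

lemma sym2_pick (s : ZMod 3) (x y : V) : s((pick s x y).1, (pick s x y).2) = s(x, y) := by
  unfold pick; split <;> simp [Sym2.eq_swap]

lemma zmod3_cases : ∀ s : ZMod 3, s ≠ 0 → s = 1 ∨ s = 2 := by decide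

lemma wgt_pick (s : ZMod 3) (hs : s ≠ 0) (x y : V) (hxy : x ≠ y) (z : V) :
    wgt (pick s x y) z = if z = x then s else if z = y then -s else 0 := by
  have e2 : (2 : ZMod 3) ≠ 1 := by decide
  rcases zmod3_cases s hs with h | h <;> subst h
  · rw [show pick (1 : ZMod 3) x y = (x, y) from if_pos rfl]
    show (if x = z then (1 : ZMod 3) else 0) - (if y = z then 1 else 0) = _
    by_cases hzx : x = z <;> by_cases hzy : y = z
    · exact absurd (hzx.trans hzy.symm) hxy
    · rw [if_pos hzx, if_neg hzy, if_pos hzx.symm]; norm_num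
    · rw [if_neg hzx, if_pos hzy, if_neg (fun h : z = x => hzx h.symm), if_pos hzy.symm]
      norm_num
    · rw [if_neg hzx, if_neg hzy, if_neg (fun h : z = x => hzx h.symm),
        if_neg (fun h : z = y => hzy h.symm)]
      norm_num
  · rw [show pick (2 : ZMod 3) x y = (y, x) from if_neg e2]
    show (if y = z then (1 : ZMod 3) else 0) - (if x = z then 1 else 0) = _
    by_cases hzx : x = z <;> by_cases hzy : y = z
    · exact absurd (hzx.trans hzy.symm) hxy
    · rw [if_neg hzy, if_pos hzx, if_pos hzx.symm]; decide
    · rw [if_pos hzy, if_neg hzx, if_neg (fun h : z = x => hzx h.symm), if_pos hzy.symm]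
      decide
    · rw [if_neg hzx, if_neg hzy, if_neg (fun h : z = x => hzx h.symm),
        if_neg (fun h : z = y => hzy h.symm)]
      norm_num

lemma wgt_zero (p : V × V) (z : V) (h1 : p.1 ≠ z) (h2 : p.2 ≠ z) : wgt p z = 0 := by
  unfold wgt; simp [h1, h2]

lemma pair_cases (p : V × V) (x y : V) (h : s(p.1, p.2) = s(x, y)) :
    ∃ s : ZMod 3, s ≠ 0 ∧ p = pick s x y := by
  rcases Sym2.eq_iff.mp h with ⟨h1, h2⟩ | ⟨h1, h2⟩
  · exact ⟨1, by decide, by unfold pick; simp [← h1, ← h2]⟩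
  · refine ⟨2, by decide, ?_⟩
    unfold pick
    rw [if_neg (by decide)]
    simp [← h1, ← h2]

lemma sum_wgt_zero [Fintype V] (p : V × V) (h : p.1 ≠ p.2) : ∑ z, wgt p z = 0 := by
  unfold wgt
  rw [Finset.sum_sub_distrib]
  rw [Finset.sum_ite_eq Finset.univ p.1 (fun _ => (1 : ZMod 3)),
      Finset.sum_ite_eq Finset.univ p.2 (fun _ => (1 : ZMod 3))]
  simp

end W

lemma bdry_eq_sum (G : Multigraph) (D : G.E → G.V × G.V) (v : G.V) :
    ((G.outDeg D v : ZMod 3) - (G.inDeg D v : ZMod 3)) = ∑ e, wgt (D e) v := by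
  unfold Multigraph.outDeg Multigraph.inDeg wgt
  rw [Set.ncard_eq_toFinset_card', Set.toFinset_setOf,
      Set.ncard_eq_toFinset_card', Set.toFinset_setOf,
      Finset.card_filter, Finset.card_filter, Nat.cast_sum, Nat.cast_sum,
      ← Finset.sum_sub_distrib]
  refine Finset.sum_congr rfl fun e _ => ?_
  split_ifs <;> simp

section BDsec

variable {G H : Multigraph}

lemma ne_of_ends {G : Multigraph} {e : G.E} {x y : G.V} (h : G.ends e = s(x, y)) : x ≠ y := by
  intro hxy
  have := G.loopless e
  rw [h, hxy] at this
  exact this (Sym2.mk_isDiag_iff.mpr rfl)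

lemma edge_ne_of {G : Multigraph} {e1 e2 : G.E} {x y p q : G.V}
    (h1 : G.ends e1 = s(x, y)) (h2 : G.ends e2 = s(p, q))
    (hx : x ≠ p) (hx2 : x ≠ q) : e1 ≠ e2 := by
  intro h
  rw [h, h2] at h1
  rcases Sym2.eq_iff.mp h1 with ⟨h', _⟩ | ⟨_, h''⟩
  · exact hx h'.symm
  · exact hx2 h''.symm

/-- All of the local data of a bull-growing, except the edge-correspondence. -/
structure BD (G H : Multigraph) where
  u : G.V
  v : G.V
  w : G.V
  a : G.V
  b : G.V
  euv : G.E
  euw : G.E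
  evw : G.E
  eua : G.E
  evb : G.E
  huv : G.ends euv = s(u, v)
  huw : G.ends euw = s(u, w)
  hvw : G.ends evw = s(v, w)
  hua : G.ends eua = s(u, a)
  hvb : G.ends evb = s(v, b)
  hav : a ≠ v
  hbu : b ≠ u
  d1 : euv ≠ euw
  d2 : euv ≠ eua
  d3 : euw ≠ eua
  d4 : euv ≠ evw
  d5 : euv ≠ evb
  d6 : evw ≠ evb
  hdegu : {e : G.E | u ∈ G.ends e} = {euv, euw, eua}
  hdegv : {e : G.E | v ∈ G.ends e} = {euv, evw, evb}
  φ : H.V → G.V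
  hφi : Function.Injective φ
  hφr : Set.range φ = {x : G.V | x ≠ u ∧ x ≠ v}

namespace BD

variable (B : BD G H)

lemma nuv : B.u ≠ B.v := ne_of_ends B.huv
lemma nuw : B.u ≠ B.w := ne_of_ends B.huw
lemma nvw : B.v ≠ B.w := ne_of_ends B.hvw
lemma nua : B.u ≠ B.a := ne_of_ends B.hua
lemma nvb : B.v ≠ B.b := ne_of_ends B.hvb

lemma d7 : B.euw ≠ B.evw := edge_ne_of B.huw B.hvw B.nuv B.nuw
lemma d8 : B.euw ≠ B.evb := edge_ne_of B.huw B.hvb B.nuv (Ne.symm B.hbu)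
lemma d9 : B.eua ≠ B.evw := edge_ne_of B.hua B.hvw B.nuv B.nuw
lemma d10 : B.eua ≠ B.evb := edge_ne_of B.hua B.hvb B.nuv (Ne.symm B.hbu)

/-- swap the roles of the two degree-3 vertices -/
def swap : BD G H where
  u := B.v
  v := B.u
  w := B.w
  a := B.b
  b := B.a
  euv := B.euv
  euw := B.evw
  evw := B.euw
  eua := B.evb
  evb := B.eua
  huv := by rw [B.huv]; exact Sym2.eq_swap
  huw := B.hvw
  hvw := B.huw
  hua := B.hvb
  hvb := B.hua
  hav := B.hbu
  hbu := B.hav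
  d1 := B.d4
  d2 := B.d5
  d3 := B.d6
  d4 := B.d1
  d5 := B.d2
  d6 := B.d3
  hdegu := B.hdegv
  hdegv := B.hdegu
  φ := B.φ
  hφi := B.hφi
  hφr := by rw [B.hφr]; ext x; exact and_comm

/-- the five bull edges -/
def BSet : Set G.E := {B.euv, B.euw, B.evw, B.eua, B.evb}

lemma swap_BSet : B.swap.BSet = B.BSet := by
  unfold BSet swap; simp only
  ext e
  simp only [Set.mem_insert_iff, Set.mem_singleton_iff]
  tauto

lemma mem_of_u {e : G.E} (h : B.u ∈ G.ends e) : e = B.euv ∨ e = B.euw ∨ e = B.eua := by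
  have := (Set.ext_iff.mp B.hdegu e).mp h
  simpa using this

lemma mem_of_v {e : G.E} (h : B.v ∈ G.ends e) : e = B.euv ∨ e = B.evw ∨ e = B.evb := by
  have := (Set.ext_iff.mp B.hdegv e).mp h
  simpa using this

lemma u_not_mem {e : G.E} (h : e ∉ B.BSet) : B.u ∉ G.ends e := by
  intro hm
  rcases B.mem_of_u hm with h' | h' | h' <;> subst h' <;>
    exact h (by unfold BSet; simp)

lemma v_not_mem {e : G.E} (h : e ∉ B.BSet) : B.v ∉ G.ends e := by
  intro hm
  rcases B.mem_of_v hm with h' | h' | h' <;> subst h' <;>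
    exact h (by unfold BSet; simp)

lemma phi_ne_u (y : H.V) : B.φ y ≠ B.u :=
  ((Set.ext_iff.mp B.hφr (B.φ y)).mp ⟨y, rfl⟩).1

lemma phi_ne_v (y : H.V) : B.φ y ≠ B.v :=
  ((Set.ext_iff.mp B.hφr (B.φ y)).mp ⟨y, rfl⟩).2

lemma exists_phi {x : G.V} (hu : x ≠ B.u) (hv : x ≠ B.v) : ∃ y, B.φ y = x :=
  (Set.ext_iff.mp B.hφr x).mpr ⟨hu, hv⟩

/-- splitting an edge sum into the bull part and the rest -/
lemma sum_split (f : G.E → ZMod 3) :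
    ∑ e, f e = f B.euv + f B.euw + f B.evw + f B.eua + f B.evb
      + ∑ e ∈ Finset.univ.filter (fun e => e ∉ B.BSet), f e := by
  rw [← Finset.sum_filter_add_sum_filter_not Finset.univ (fun e => e ∈ B.BSet) f]
  congr 1
  have hf : Finset.univ.filter (fun e => e ∈ B.BSet)
      = {B.euv, B.euw, B.evw, B.eua, B.evb} := by
    ext e
    simp [BSet]
  rw [hf]
  rw [Finset.sum_insert (by
    simp only [Finset.mem_insert, Finset.mem_singleton]
    push_neg
    exact ⟨B.d1, B.d4, B.d2, B.d5⟩)]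
  rw [Finset.sum_insert (by
    simp only [Finset.mem_insert, Finset.mem_singleton]
    push_neg
    exact ⟨B.d7, B.d3, B.d8⟩)]
  rw [Finset.sum_insert (by
    simp only [Finset.mem_insert, Finset.mem_singleton]
    push_neg
    exact ⟨Ne.symm B.d9, B.d6⟩)]
  rw [Finset.sum_insert (by
    simp only [Finset.mem_singleton]
    exact B.d10)]
  rw [Finset.sum_singleton]
  ring

/-- splitting a vertex sum into u, v and the image of φ -/
lemma vsum (g : G.V → ZMod 3) :
    ∑ x, g x = g B.u + g B.v + ∑ y, g (B.φ y) := by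
  rw [← Finset.sum_filter_add_sum_filter_not Finset.univ (fun x => x = B.u ∨ x = B.v) g]
  congr 1
  · have hf : Finset.univ.filter (fun x => x = B.u ∨ x = B.v) = {B.u, B.v} := by
      ext x; simp
    rw [hf, Finset.sum_insert (by simp [B.nuv]), Finset.sum_singleton]
  · refine (Finset.sum_bij (fun y _ => B.φ y) ?_ ?_ ?_ ?_).symm
    · intro y _
      simp [B.phi_ne_u y, B.phi_ne_v y]
    · intro y1 _ y2 _ h
      exact B.hφi h
    · intro x hx
      simp only [Finset.mem_filter, Finset.mem_univ, true_and] at hx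
      push_neg at hx
      obtain ⟨y, hy⟩ := B.exists_phi hx.1 hx.2
      exact ⟨y, Finset.mem_univ y, hy⟩
    · intro y _
      rfl

end BD

end BDsec

section TreeSec

variable {G : Multigraph}

lemma ends_swap {G : Multigraph} {e : G.E} {x y : G.V} (h : G.ends e = s(x, y)) :
    G.ends e = s(y, x) := by rw [h]; exact Sym2.eq_swap

lemma tt_subgraph {S : Set G.V} {F : Set G.E} (hT : G.IsTriangleTree S F) :
    ∀ e ∈ F, ∀ z, z ∈ G.ends e → z ∈ S := by
  induction hT with
  | base x y z e1 e2 e3 hxy hxz hyz h1 h2 h3 =>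
    intro e he zz hz
    rcases he with rfl | rfl | rfl
    · rw [h1] at hz; rcases Sym2.mem_iff.mp hz with rfl | rfl <;> simp
    · rw [h2] at hz; rcases Sym2.mem_iff.mp hz with rfl | rfl <;> simp
    · rw [h3] at hz; rcases Sym2.mem_iff.mp hz with rfl | rfl <;> simp
  | grow S F hT v a b hv e he hab e1 e2 h1 h2 ih =>
    intro f hf zz hz
    have hamem : a ∈ S := ih e he a (by rw [hab]; exact Sym2.mem_mk_left a b)
    have hbmem : b ∈ S := ih e he b (by rw [hab]; exact Sym2.mem_mk_right a b)
    rcases hf with rfl | rfl | hf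
    · rw [h1] at hz
      rcases Sym2.mem_iff.mp hz with rfl | rfl
      · exact Set.mem_insert _ _
      · exact Set.mem_insert_of_mem _ hamem
    · rw [h2] at hz
      rcases Sym2.mem_iff.mp hz with rfl | rfl
      · exact Set.mem_insert _ _
      · exact Set.mem_insert_of_mem _ hbmem
    · exact Set.mem_insert_of_mem _ (ih f hf zz hz)

lemma tt_two_edges {S : Set G.V} {F : Set G.E} (hT : G.IsTriangleTree S F) :
    ∀ x ∈ S, ∃ f g, f ∈ F ∧ g ∈ F ∧ f ≠ g ∧ x ∈ G.ends f ∧ x ∈ G.ends g := by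
  induction hT with
  | base x y z e1 e2 e3 hxy hxz hyz h1 h2 h3 =>
    have n12 : e1 ≠ e2 := edge_ne_of h1 h2 hxy hxz
    have n13 : e1 ≠ e3 := edge_ne_of (ends_swap h1) h3 (Ne.symm hxy) hyz
    have n23 : e2 ≠ e3 := edge_ne_of h2 h3 (Ne.symm hxy) hyz
    intro p hp
    rcases hp with rfl | rfl | rfl
    · exact ⟨e1, e3, by simp, by simp, n13, by rw [h1]; exact Sym2.mem_mk_left _ _,
        by rw [h3]; exact Sym2.mem_mk_left _ _⟩
    · exact ⟨e1, e2, by simp, by simp, n12, by rw [h1]; exact Sym2.mem_mk_right _ _,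
        by rw [h2]; exact Sym2.mem_mk_left _ _⟩
    · exact ⟨e2, e3, by simp, by simp, n23, by rw [h2]; exact Sym2.mem_mk_right _ _,
        by rw [h3]; exact Sym2.mem_mk_right _ _⟩
  | grow S F hT v a b hv e he hab e1 e2 h1 h2 ih =>
    have hamem : a ∈ S := tt_subgraph hT e he a (by rw [hab]; exact Sym2.mem_mk_left a b)
    have hbmem : b ∈ S := tt_subgraph hT e he b (by rw [hab]; exact Sym2.mem_mk_right a b)
    have hav : a ≠ v := fun h => hv (h ▸ hamem)
    have hab' : a ≠ b := ne_of_ends hab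
    have n12 : e1 ≠ e2 := edge_ne_of (ends_swap h1) (ends_swap h2) hab' hav
    intro p hp
    rcases hp with rfl | hp
    · exact ⟨e1, e2, by simp, by simp, n12, by rw [h1]; exact Sym2.mem_mk_left _ _,
        by rw [h2]; exact Sym2.mem_mk_left _ _⟩
    · obtain ⟨f, g, hf, hg, hfg, hpf, hpg⟩ := ih p hp
      exact ⟨f, g, by simp [hf], by simp [hg], hfg, hpf, hpg⟩

lemma tt_triangle {S : Set G.V} {F : Set G.E} (hT : G.IsTriangleTree S F) :
    ∀ e ∈ F, ∀ x y, G.ends e = s(x, y) →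
      ∃ z f g, f ∈ F ∧ g ∈ F ∧ G.ends f = s(x, z) ∧ G.ends g = s(y, z) := by
  induction hT with
  | base x y z e1 e2 e3 hxy hxz hyz h1 h2 h3 =>
    intro e he p q hpq
    rcases he with rfl | rfl | rfl
    · rw [h1] at hpq
      rcases Sym2.eq_iff.mp hpq with ⟨rfl, rfl⟩ | ⟨rfl, rfl⟩
      · exact ⟨z, e3, e2, by simp, by simp, h3, h2⟩
      · exact ⟨z, e2, e3, by simp, by simp, h2, h3⟩
    · rw [h2] at hpq
      rcases Sym2.eq_iff.mp hpq with ⟨rfl, rfl⟩ | ⟨rfl, rfl⟩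
      · exact ⟨x, e1, e3, by simp, by simp, ends_swap h1, ends_swap h3⟩
      · exact ⟨x, e3, e1, by simp, by simp, ends_swap h3, ends_swap h1⟩
    · rw [h3] at hpq
      rcases Sym2.eq_iff.mp hpq with ⟨rfl, rfl⟩ | ⟨rfl, rfl⟩
      · exact ⟨y, e1, e2, by simp, by simp, h1, ends_swap h2⟩
      · exact ⟨y, e2, e1, by simp, by simp, ends_swap h2, h1⟩
  | grow S F hT v a b hv e he hab e1 e2 h1 h2 ih =>
    intro f hf p q hpq
    rcases hf with rfl | rfl | hf
    · rw [h1] at hpq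
      rcases Sym2.eq_iff.mp hpq with ⟨rfl, rfl⟩ | ⟨rfl, rfl⟩
      · exact ⟨b, e2, e, by simp, by simp [he], h2, hab⟩
      · exact ⟨b, e, e2, by simp [he], by simp, hab, h2⟩
    · rw [h2] at hpq
      rcases Sym2.eq_iff.mp hpq with ⟨rfl, rfl⟩ | ⟨rfl, rfl⟩
      · exact ⟨a, e1, e, by simp, by simp [he], h1, ends_swap hab⟩
      · exact ⟨a, e, e1, by simp [he], by simp, ends_swap hab, h1⟩
    · obtain ⟨z, f', g', hf', hg', hzf, hzg⟩ := ih f hf p q hpq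
      exact ⟨z, f', g', by simp [hf'], by simp [hg'], hzf, hzg⟩

end TreeSec

section ThirdSec

variable {G : Multigraph}

/-- "the vertex `x` or the vertex `y` has at least three distinct edges of `F`" -/
def thirdGoal (G : Multigraph) (F : Set G.E) (e : G.E) (x y : G.V) : Prop :=
  (∃ f g, f ∈ F ∧ g ∈ F ∧ f ≠ g ∧ f ≠ e ∧ g ≠ e ∧ x ∈ G.ends f ∧ x ∈ G.ends g) ∨
  (∃ f g, f ∈ F ∧ g ∈ F ∧ f ≠ g ∧ f ≠ e ∧ g ≠ e ∧ y ∈ G.ends f ∧ y ∈ G.ends g)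

lemma tt_third {S : Set G.V} {F : Set G.E} (hT : G.IsTriangleTree S F) :
    ∀ e ∈ F, ∀ x y, G.ends e = s(x, y) →
    ∀ z1 z2, z1 ∈ S → z2 ∈ S → z1 ≠ z2 → z1 ≠ x → z1 ≠ y → z2 ≠ x → z2 ≠ y →
    thirdGoal G F e x y := by
  induction hT with
  | base x0 y0 z0 e1 e2 e3 hxy hxz hyz h1 h2 h3 =>
    intro e he p q hpq z1 z2 hz1 hz2 h12 h1p h1q h2p h2q
    exfalso
    simp only [Set.mem_insert_iff, Set.mem_singleton_iff] at hz1 hz2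
    rcases he with rfl | rfl | rfl
    · rw [h1] at hpq
      rcases Sym2.eq_iff.mp hpq with ⟨rfl, rfl⟩ | ⟨rfl, rfl⟩ <;>
        (rcases hz1 with rfl | rfl | rfl <;> rcases hz2 with rfl | rfl | rfl <;> simp_all)
    · rw [h2] at hpq
      rcases Sym2.eq_iff.mp hpq with ⟨rfl, rfl⟩ | ⟨rfl, rfl⟩ <;>
        (rcases hz1 with rfl | rfl | rfl <;> rcases hz2 with rfl | rfl | rfl <;> simp_all)
    · rw [h3] at hpq
      rcases Sym2.eq_iff.mp hpq with ⟨rfl, rfl⟩ | ⟨rfl, rfl⟩ <;>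
        (rcases hz1 with rfl | rfl | rfl <;> rcases hz2 with rfl | rfl | rfl <;> simp_all)
  | grow S F hT v a b hv e0g he0 hab e1 e2 h1 h2 ih =>
    intro f hf p q hpq z1 z2 hz1 hz2 h12 h1p h1q h2p h2q
    have hamem : a ∈ S := tt_subgraph hT e0g he0 a (by rw [hab]; exact Sym2.mem_mk_left a b)
    have hbmem : b ∈ S := tt_subgraph hT e0g he0 b (by rw [hab]; exact Sym2.mem_mk_right a b)
    have hnab : a ≠ b := ne_of_ends hab
    have hE1 : e1 ∉ F := fun hm =>
      hv (tt_subgraph hT e1 hm v (by rw [h1]; exact Sym2.mem_mk_left _ _))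
    have hE2 : e2 ∉ F := fun hm =>
      hv (tt_subgraph hT e2 hm v (by rw [h2]; exact Sym2.mem_mk_left _ _))
    rcases hf with rfl | rfl | hfF
    · -- f = e1
      rw [h1] at hpq
      obtain ⟨f', g', hf', hg', hfg', haf, hag⟩ := tt_two_edges hT a hamem
      rcases Sym2.eq_iff.mp hpq with ⟨rfl, rfl⟩ | ⟨rfl, rfl⟩
      · exact Or.inr ⟨f', g', by simp [hf'], by simp [hg'], hfg',
          fun h => hE1 (h ▸ hf'), fun h => hE1 (h ▸ hg'), haf, hag⟩
      · exact Or.inl ⟨f', g', by simp [hf'], by simp [hg'], hfg',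
          fun h => hE1 (h ▸ hf'), fun h => hE1 (h ▸ hg'), haf, hag⟩
    · -- f = e2
      rw [h2] at hpq
      obtain ⟨f', g', hf', hg', hfg', hbf, hbg⟩ := tt_two_edges hT b hbmem
      rcases Sym2.eq_iff.mp hpq with ⟨rfl, rfl⟩ | ⟨rfl, rfl⟩
      · exact Or.inr ⟨f', g', by simp [hf'], by simp [hg'], hfg',
          fun h => hE2 (h ▸ hf'), fun h => hE2 (h ▸ hg'), hbf, hbg⟩
      · exact Or.inl ⟨f', g', by simp [hf'], by simp [hg'], hfg',
          fun h => hE2 (h ▸ hf'), fun h => hE2 (h ▸ hg'), hbf, hbg⟩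
    · -- f is an old edge
      have useIH : ∀ t1 t2, t1 ∈ S → t2 ∈ S → t1 ≠ t2 → t1 ≠ p → t1 ≠ q → t2 ≠ p → t2 ≠ q →
          thirdGoal G (insert e1 (insert e2 F)) f p q := by
        intro t1 t2 ht1 ht2 k1 k2 k3 k4 k5
        rcases ih f hfF p q hpq t1 t2 ht1 ht2 k1 k2 k3 k4 k5 with
          ⟨f', g', m1, m2, m3, m4, m5, m6, m7⟩ | ⟨f', g', m1, m2, m3, m4, m5, m6, m7⟩
        · exact Or.inl ⟨f', g', by simp [m1], by simp [m2], m3, m4, m5, m6, m7⟩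
        · exact Or.inr ⟨f', g', by simp [m1], by simp [m2], m3, m4, m5, m6, m7⟩
      have key : ∀ c fn, c ∈ S → fn ∉ F → fn ∈ (insert e1 (insert e2 F) : Set G.E) →
          c ∈ G.ends fn → (c = p ∨ c = q) →
          thirdGoal G (insert e1 (insert e2 F)) f p q := by
        intro c fn hcS hfnF hfn' hcfn hcp
        obtain ⟨f', g', hf', hg', hfg', hcf, hcg⟩ := tt_two_edges hT c hcS
        have hfnf' : fn ≠ f' := fun h => hfnF (h ▸ hf')
        have hfng' : fn ≠ g' := fun h => hfnF (h ▸ hg')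
        have hfnf : fn ≠ f := fun h => hfnF (h ▸ hfF)
        have main : ∃ r1 r2, r1 ∈ (insert e1 (insert e2 F) : Set G.E) ∧
            r2 ∈ (insert e1 (insert e2 F) : Set G.E) ∧ r1 ≠ r2 ∧ r1 ≠ f ∧ r2 ≠ f ∧
            c ∈ G.ends r1 ∧ c ∈ G.ends r2 := by
          by_cases hff' : f' = f
          · exact ⟨g', fn, by simp [hg'], hfn', fun h => hfng' h.symm,
              fun h => hfg' (h.trans hff'.symm).symm, hfnf, hcg, hcfn⟩
          · by_cases hgg' : g' = f
            · exact ⟨f', fn, by simp [hf'], hfn', fun h => hfnf' h.symm,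
                hff', hfnf, hcf, hcfn⟩
            · exact ⟨f', g', by simp [hf'], by simp [hg'], hfg', hff', hgg', hcf, hcg⟩
        obtain ⟨r1, r2, m1, m2, m3, m4, m5, m6, m7⟩ := main
        rcases hcp with rfl | rfl
        · exact Or.inl ⟨r1, r2, m1, m2, m3, m4, m5, m6, m7⟩
        · exact Or.inr ⟨r1, r2, m1, m2, m3, m4, m5, m6, m7⟩
      have hae1 : a ∈ G.ends e1 := by rw [h1]; exact Sym2.mem_mk_right _ _
      have hbe2 : b ∈ G.ends e2 := by rw [h2]; exact Sym2.mem_mk_right _ _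
      have he1mem : e1 ∈ (insert e1 (insert e2 F) : Set G.E) := Set.mem_insert _ _
      have he2mem : e2 ∈ (insert e1 (insert e2 F) : Set G.E) :=
        Set.mem_insert_of_mem _ (Set.mem_insert _ _)
      have finish : ∀ zS, zS ∈ S → zS ≠ p → zS ≠ q →
          thirdGoal G (insert e1 (insert e2 F)) f p q := by
        intro zS hzS hzp hzq
        by_cases hap : a = p ∨ a = q
        · exact key a e1 hamem hE1 he1mem hae1 hap
        · by_cases hbp : b = p ∨ b = q
          · exact key b e2 hbmem hE2 he2mem hbe2 hbp
          · push_neg at hap hbp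
            by_cases haz : a = zS
            · exact useIH zS b hzS hbmem (fun h => hnab (haz.trans h)) hzp hzq
                hbp.1 hbp.2
            · exact useIH zS a hzS hamem (fun h => haz h.symm) hzp hzq hap.1 hap.2
      rcases hz1 with rfl | hz1S
      · rcases hz2 with rfl | hz2S
        · exact absurd rfl h12
        · exact finish z2 hz2S h2p h2q
      · exact finish z1 hz1S h1p h1q

end ThirdSec

section StructSec

variable {G H : Multigraph}

namespace BD

/-- an edge of the form `(w, x)` with `x ∉ {u, v}` is not a bull edge -/
lemma nonbull (B : BD G H) {e : G.E} {x : G.V} (hends : G.ends e = s(B.w, x))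
    (hxu : x ≠ B.u) (hxv : x ≠ B.v) : e ∉ B.BSet := by
  intro hmem
  rcases hmem with h | h | h | h | h <;> subst h
  · rw [B.huv] at hends
    rcases Sym2.eq_iff.mp hends with ⟨h1, _⟩ | ⟨_, h2⟩
    · exact B.nuw h1
    · exact B.nvw h2
  · rw [B.huw] at hends
    rcases Sym2.eq_iff.mp hends with ⟨h1, _⟩ | ⟨h1, _⟩
    · exact B.nuw h1
    · exact hxu h1.symm
  · rw [B.hvw] at hends
    rcases Sym2.eq_iff.mp hends with ⟨h1, _⟩ | ⟨h1, _⟩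
    · exact B.nvw h1
    · exact hxv h1.symm
  · rw [B.hua] at hends
    rcases Sym2.eq_iff.mp hends with ⟨h1, _⟩ | ⟨h1, _⟩
    · exact B.nuw h1
    · exact hxu h1.symm
  · rw [B.hvb] at hends
    rcases Sym2.eq_iff.mp hends with ⟨h1, _⟩ | ⟨h1, _⟩
    · exact B.nvw h1
    · exact hxv h1.symm

lemma struct_half (B : BD G H) {F : Set G.E} (hT : G.IsTriangleTree Set.univ F)
    (heuaF : B.eua ∈ F) (hab : B.a ≠ B.b) (haw : B.a ≠ B.w) :
    ∃ e, e ∉ B.BSet ∧ G.ends e = s(B.w, B.a) := by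
  obtain ⟨z, f', g', hf', hg', hfz, hgz⟩ :=
    tt_triangle hT B.eua heuaF B.a B.u (ends_swap B.hua)
  have hgu : B.u ∈ G.ends g' := by rw [hgz]; exact Sym2.mem_mk_left _ _
  rcases B.mem_of_u hgu with rfl | rfl | rfl
  · -- g' = euv, so z = v
    have hz : z = B.v := by
      rw [B.huv] at hgz
      rcases Sym2.eq_iff.mp hgz with ⟨_, h2⟩ | ⟨_, h2⟩
      · exact h2.symm
      · exact absurd h2.symm B.nuv
    subst hz
    exfalso
    have hfv : B.v ∈ G.ends f' := by rw [hfz]; exact Sym2.mem_mk_right _ _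
    rcases B.mem_of_v hfv with rfl | rfl | rfl
    · rw [B.huv] at hfz
      rcases Sym2.eq_iff.mp hfz with ⟨h1, _⟩ | ⟨h1, _⟩
      · exact B.nua h1
      · exact B.nuv h1
    · rw [B.hvw] at hfz
      rcases Sym2.eq_iff.mp hfz with ⟨h1, _⟩ | ⟨_, h2⟩
      · exact B.hav h1.symm
      · exact haw h2.symm
    · rw [B.hvb] at hfz
      rcases Sym2.eq_iff.mp hfz with ⟨h1, _⟩ | ⟨_, h2⟩
      · exact B.hav h1.symm
      · exact hab h2.symm
  · -- g' = euw, so z = w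
    have hz : z = B.w := by
      rw [B.huw] at hgz
      rcases Sym2.eq_iff.mp hgz with ⟨_, h2⟩ | ⟨_, h2⟩
      · exact h2.symm
      · exact absurd h2.symm B.nuw
    subst hz
    exact ⟨f', B.nonbull (ends_swap hfz) (Ne.symm B.nua) B.hav, ends_swap hfz⟩
  · -- g' = eua, so z = a, f' would be a loop
    exfalso
    have hz : z = B.a := by
      rw [B.hua] at hgz
      rcases Sym2.eq_iff.mp hgz with ⟨_, h2⟩ | ⟨_, h2⟩
      · exact h2.symm
      · exact absurd h2.symm B.nua
    subst hz
    exact (ne_of_ends hfz) rfl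

lemma struct_edge (B : BD G H) {F : Set G.E} (hT : G.IsTriangleTree Set.univ F)
    (hab : B.a ≠ B.b) (haw : B.a ≠ B.w) (hbw : B.b ≠ B.w) :
    (∃ e, e ∉ B.BSet ∧ G.ends e = s(B.w, B.a)) ∨
    (∃ e, e ∉ B.BSet ∧ G.ends e = s(B.w, B.b)) := by
  by_cases heuv : B.euv ∈ F
  · rcases tt_third hT B.euv heuv B.u B.v B.huv B.a B.b (Set.mem_univ _) (Set.mem_univ _)
      hab (Ne.symm B.nua) B.hav B.hbu (Ne.symm B.nvb) with
      ⟨f, g, hfF, hgF, hfg, hfe, hge, huf, hug⟩ | ⟨f, g, hfF, hgF, hfg, hfe, hge, hvf, hvg⟩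
    · -- three F-edges at u, so eua ∈ F
      have heuaF : B.eua ∈ F := by
        rcases B.mem_of_u huf with rfl | rfl | rfl
        · exact absurd rfl hfe
        · rcases B.mem_of_u hug with rfl | rfl | rfl
          · exact absurd rfl hge
          · exact absurd rfl hfg
          · exact hgF
        · exact hfF
      exact Or.inl (B.struct_half hT heuaF hab haw)
    · -- three F-edges at v, so evb ∈ F; use the swapped data
      have hevbF : B.evb ∈ F := by
        rcases B.mem_of_v hvf with rfl | rfl | rfl
        · exact absurd rfl hfe
        · rcases B.mem_of_v hvg with rfl | rfl | rfl
          · exact absurd rfl hge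
          · exact absurd rfl hfg
          · exact hgF
        · exact hfF
      have := B.swap.struct_half hT (show B.swap.eua ∈ F from hevbF)
        (show B.swap.a ≠ B.swap.b from Ne.symm hab) (show B.swap.a ≠ B.swap.w from hbw)
      rw [B.swap_BSet] at this
      exact Or.inr this
  · -- euv ∉ F : take any F-edge at u
    obtain ⟨f, g, hfF, hgF, hfg, huf, hug⟩ := tt_two_edges hT B.u (Set.mem_univ _)
    have keyedge : ∀ f', f' ∈ F → B.u ∈ G.ends f' →
        (∃ e, e ∉ B.BSet ∧ G.ends e = s(B.w, B.a)) := by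
      intro f' hf'F huf'
      rcases B.mem_of_u huf' with rfl | rfl | rfl
      · exact absurd hf'F heuv
      · -- f' = euw : triangle through euw
        obtain ⟨z, f1, g1, hf1, hg1, hfz, hgz⟩ :=
          tt_triangle hT B.euw hf'F B.u B.w B.huw
        have hfu : B.u ∈ G.ends f1 := by rw [hfz]; exact Sym2.mem_mk_left _ _
        rcases B.mem_of_u hfu with rfl | rfl | rfl
        · exact absurd hf1 heuv
        · -- f1 = euw : z = w, g1 loop
          exfalso
          have hz : z = B.w := by
            rw [B.huw] at hfz
            rcases Sym2.eq_iff.mp hfz with ⟨_, h2⟩ | ⟨_, h2⟩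
            · exact h2.symm
            · exact absurd h2.symm B.nuw
          subst hz
          exact (ne_of_ends hgz) rfl
        · -- f1 = eua : z = a, g1 has ends s(w, a)
          have hz : z = B.a := by
            rw [B.hua] at hfz
            rcases Sym2.eq_iff.mp hfz with ⟨_, h2⟩ | ⟨_, h2⟩
            · exact h2.symm
            · exact absurd h2.symm B.nua
          subst hz
          exact ⟨g1, B.nonbull hgz (Ne.symm B.nua) B.hav, hgz⟩
      · exact B.struct_half hT hf'F hab haw
    exact Or.inl (keyedge f hfF huf)

end BD

end StructSec

section AlgSec

set_option maxHeartbeats 4000000 in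
lemma algS3 : ∀ Bu Bv ε t : ZMod 3, ε ≠ 0 → t ≠ 0 → ∃ s1 s2 s3 s4 s5 t' : ZMod 3,
      s1 ≠ 0 ∧ s2 ≠ 0 ∧ s3 ≠ 0 ∧ s4 ≠ 0 ∧ s5 ≠ 0 ∧ t' ≠ 0 ∧
      s1+s2+s4 = Bu ∧ -s1+s3+s5 = Bv ∧ -s2-s3+t'-t = Bu ∧ -s4-t'+t-ε = Bu-Bv ∧ -s5+ε = 0 := by
  decide

set_option maxHeartbeats 4000000 in
lemma algS1 : ∀ Bu Bv ε : ZMod 3, ε ≠ 0 → ∃ s1 s2 s3 s4 s5 : ZMod 3,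
      s1 ≠ 0 ∧ s2 ≠ 0 ∧ s3 ≠ 0 ∧ s4 ≠ 0 ∧ s5 ≠ 0 ∧
      s1+s2+s4 = Bu ∧ -s1+s3+s5 = Bv ∧ -s2-s3-s4-ε = -Bu-Bv ∧ -s5+ε = 0 := by
  decide

lemma algAB : ∀ Bu Bv : ZMod 3, ∃ s1 s2 s3 s4 s5 : ZMod 3,
      s1 ≠ 0 ∧ s2 ≠ 0 ∧ s3 ≠ 0 ∧ s4 ≠ 0 ∧ s5 ≠ 0 ∧
      s1+s2+s4 = Bu ∧ -s1+s3+s5 = Bv := by decide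

lemma alg3eq : ∀ p q r : ZMod 3, p ≠ 0 → q ≠ 0 → r ≠ 0 → p + q + r = 0 → p = q ∧ q = r := by
  decide

end AlgSec

section PickEval

variable {V : Type}

lemma wp_fst (s : ZMod 3) (hs : s ≠ 0) (x y : V) (hxy : x ≠ y) :
    wgt (pick s x y) x = s := by
  rw [wgt_pick s hs x y hxy, if_pos rfl]

lemma wp_snd (s : ZMod 3) (hs : s ≠ 0) (x y : V) (hxy : x ≠ y) :
    wgt (pick s x y) y = -s := by
  rw [wgt_pick s hs x y hxy, if_neg (Ne.symm hxy), if_pos rfl]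

lemma wp_other (s : ZMod 3) (hs : s ≠ 0) (x y : V) (hxy : x ≠ y) (z : V)
    (h1 : z ≠ x) (h2 : z ≠ y) : wgt (pick s x y) z = 0 := by
  rw [wgt_pick s hs x y hxy, if_neg h1, if_neg h2]

end PickEval

section SplitSec

lemma split_one {α : Type} [Fintype α] (e0 : α) (g : α → ZMod 3) :
    ∑ e, g e = g e0 + ∑ e ∈ Finset.univ.filter (fun e => e ≠ e0), g e := by
  classical
  have h : Finset.univ.filter (fun e => e ≠ e0) = Finset.univ.erase e0 := by
    ext x; simp [Finset.mem_erase, and_comm]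
  rw [h, Finset.add_sum_erase _ g (Finset.mem_univ e0)]

lemma split_two {α : Type} [Fintype α] (e0 e1 : α) (h : e1 ≠ e0) (g : α → ZMod 3) :
    ∑ e ∈ Finset.univ.filter (fun e => e ≠ e0), g e
      = g e1 + ∑ e ∈ Finset.univ.filter (fun e => e ≠ e0 ∧ e ≠ e1), g e := by
  classical
  have h2 : Finset.univ.filter (fun e => e ≠ e0 ∧ e ≠ e1)
      = (Finset.univ.filter (fun e => e ≠ e0)).erase e1 := by
    ext x; simp [Finset.mem_erase]; tauto
  rw [h2, Finset.add_sum_erase _ g (by simp [h])]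

end SplitSec

section TransferSec

variable {G H : Multigraph}

namespace BD

lemma ne_of_not_bull (B : BD G H) {e : G.E} (h : e ∉ B.BSet) :
    e ≠ B.euv ∧ e ≠ B.euw ∧ e ≠ B.evw ∧ e ≠ B.eua ∧ e ≠ B.evb := by
  refine ⟨?_, ?_, ?_, ?_, ?_⟩ <;> (intro h'; subst h'; exact h (by unfold BSet; simp))

lemma reindex_ne (B : BD G H) (e0 : H.E) (ψ : H.E → G.E)
    (hinj : Set.InjOn ψ {e : H.E | e ≠ e0})
    (himg : ψ '' {e : H.E | e ≠ e0} = {e : G.E | e ∉ B.BSet})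
    (f : G.E → ZMod 3) :
    ∑ e ∈ Finset.univ.filter (fun e => e ∉ B.BSet), f e
      = ∑ e' ∈ Finset.univ.filter (fun e' => e' ≠ e0), f (ψ e') := by
  refine (Finset.sum_bij (fun e' _ => ψ e') ?_ ?_ ?_ ?_).symm
  · intro e' he'
    simp only [Finset.mem_filter, Finset.mem_univ, true_and] at he' ⊢
    have hm : ψ e' ∈ ψ '' {e : H.E | e ≠ e0} := ⟨e', he', rfl⟩
    rw [himg] at hm
    exact hm
  · intro x hx y hy hxy
    simp only [Finset.mem_filter, Finset.mem_univ, true_and] at hx hy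
    exact hinj hx hy hxy
  · intro e he
    simp only [Finset.mem_filter, Finset.mem_univ, true_and] at he
    have hm : e ∈ ψ '' {e : H.E | e ≠ e0} := by rw [himg]; exact he
    obtain ⟨e', he', rfl⟩ := hm
    exact ⟨e', by simpa using he', rfl⟩
  · intro e' _
    rfl

lemma reindex_full (B : BD G H) (ψ : H.E → G.E)
    (hinj : Function.Injective ψ)
    (himg : Set.range ψ = {e : G.E | e ∉ B.BSet})
    (f : G.E → ZMod 3) :
    ∑ e ∈ Finset.univ.filter (fun e => e ∉ B.BSet), f e = ∑ e', f (ψ e') := by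
  refine (Finset.sum_bij (fun e' (_ : e' ∈ Finset.univ) => ψ e') ?_ ?_ ?_ ?_).symm
  · intro e' _
    simp only [Finset.mem_filter, Finset.mem_univ, true_and]
    have hm : ψ e' ∈ Set.range ψ := ⟨e', rfl⟩
    rw [himg] at hm
    exact hm
  · intro x _ y _ hxy
    exact hinj hxy
  · intro e he
    simp only [Finset.mem_filter, Finset.mem_univ, true_and] at he
    have hm : e ∈ Set.range ψ := by rw [himg]; exact he
    obtain ⟨e', rfl⟩ := hm
    exact ⟨e', Finset.mem_univ _, rfl⟩
  · intro e' _
    rfl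

lemma wgt_phi_pair (B : BD G H) (p q y : H.V) :
    wgt (B.φ p, B.φ q) (B.φ y) = wgt (p, q) y := by
  unfold wgt
  simp [B.hφi.eq_iff]

lemma wgt_phi_u (B : BD G H) (p q : H.V) : wgt (B.φ p, B.φ q) B.u = 0 :=
  wgt_zero _ _ (B.phi_ne_u p) (B.phi_ne_u q)

lemma wgt_phi_v (B : BD G H) (p q : H.V) : wgt (B.φ p, B.φ q) B.v = 0 :=
  wgt_zero _ _ (B.phi_ne_v p) (B.phi_ne_v q)

end BD

end TransferSec

section ConstrMain

variable {G H : Multigraph}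

namespace BD

/-- Main construction: `a ≠ b`, `a ≠ w`, `b ≠ w`, and `G` has a non-bull edge `(w,a)`. -/
lemma constr_main (B : BD G H) (hH : H.Z3Connected)
    (e0 : H.E) (ψ : H.E → G.E)
    (hinj : Set.InjOn ψ {e : H.E | e ≠ e0})
    (himg : ψ '' {e : H.E | e ≠ e0} = {e : G.E | e ∉ B.BSet})
    (hψends : ∀ e, e ≠ e0 → G.ends (ψ e) = Sym2.map B.φ (H.ends e))
    (he0ends : Sym2.map B.φ (H.ends e0) = s(B.a, B.b))
    (hab : B.a ≠ B.b) (haw : B.a ≠ B.w) (hbw : B.b ≠ B.w)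
    (estarG : G.E) (hestarG : estarG ∉ B.BSet) (hestar_ends : G.ends estarG = s(B.w, B.a))
    (β : G.V → ZMod 3) (hβ : (∑ x, β x) = 0) :
    ∃ D : G.E → G.V × G.V, G.IsOrientation D ∧
      ∀ x : G.V, ((G.outDeg D x : ZMod 3) - (G.inDeg D x : ZMod 3)) = β x := by
  classical
  obtain ⟨w', hw'⟩ := B.exists_phi (Ne.symm B.nuw) (Ne.symm B.nvw)
  obtain ⟨a', ha'⟩ := B.exists_phi (Ne.symm B.nua) B.hav
  obtain ⟨b', hb'⟩ := B.exists_phi B.hbu (Ne.symm B.nvb)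
  have he0H : H.ends e0 = s(a', b') := by
    apply Sym2.map.injective B.hφi
    rw [he0ends, Sym2.map_pair_eq, ha', hb']
  have hmem : estarG ∈ {e : G.E | e ∉ B.BSet} := hestarG
  rw [← himg] at hmem
  obtain ⟨estar, hestar0', hestarψ⟩ := hmem
  have hestar0 : estar ≠ e0 := hestar0'
  have hestarH : H.ends estar = s(w', a') := by
    apply Sym2.map.injective B.hφi
    rw [← hψends estar hestar0, hestarψ, hestar_ends, Sym2.map_pair_eq, hw', ha']
  have hw'a' : w' ≠ a' := fun h => (Ne.symm haw) (by rw [← hw', ← ha', h])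
  have ha'b' : a' ≠ b' := fun h => hab (by rw [← ha', ← hb', h])
  have hw'b' : w' ≠ b' := fun h => (Ne.symm hbw) (by rw [← hw', ← hb', h])
  -- the modified boundary on H
  set gfun : G.V → ZMod 3 := fun x => β x -
    ((if x = B.w then β B.u else 0) + (if x = B.a then β B.u - β B.v else 0)) with hgfun
  set β1 : H.V → ZMod 3 := fun y => gfun (B.φ y) with hβ1def
  have hgu : gfun B.u = β B.u := by
    rw [hgfun]; simp [B.nuw, B.nua]
  have hgv : gfun B.v = β B.v := by
    rw [hgfun]; simp [B.nvw, Ne.symm B.hav]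
  have hgsum : ∑ x, gfun x = 0 - (β B.u + (β B.u - β B.v)) := by
    rw [hgfun, Finset.sum_sub_distrib, hβ, Finset.sum_add_distrib,
      Finset.sum_ite_eq' Finset.univ B.w (fun _ => β B.u),
      Finset.sum_ite_eq' Finset.univ B.a (fun _ => β B.u - β B.v)]
    simp
  have hβ1sum : ∑ y, β1 y = 0 := by
    have hv := B.vsum gfun
    rw [hgsum, hgu, hgv] at hv
    have h9 : ∀ p q s : ZMod 3, 0 - (p + (p - q)) = p + q + s → s = 0 := by decide
    exact h9 (β B.u) (β B.v) _ hv
  obtain ⟨D1, hD1or, hD1b⟩ := hH β1 hβ1sum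
  have hD1sum : ∀ y, ∑ e', wgt (D1 e') y = β1 y := fun y =>
    ((bdry_eq_sum H D1 y).symm).trans (hD1b y)
  obtain ⟨ε, hεne, hε⟩ := pair_cases (D1 e0) a' b' ((hD1or e0).symm.trans he0H)
  obtain ⟨t, htne, ht⟩ := pair_cases (D1 estar) w' a' ((hD1or estar).symm.trans hestarH)
  obtain ⟨s1, s2, s3, s4, s5, t', hs1, hs2, hs3, hs4, hs5, ht', q1, q2, q3, q4, q5⟩ :=
    algS3 (β B.u) (β B.v) ε t hεne htne
  have hinvex : ∀ e : G.E, ∃ e', e ∉ B.BSet → (e' ≠ e0 ∧ ψ e' = e) := by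
    intro e
    by_cases he : e ∉ B.BSet
    · have hm : e ∈ ψ '' {e : H.E | e ≠ e0} := by rw [himg]; exact he
      obtain ⟨e', h1, h2⟩ := hm
      exact ⟨e', fun _ => ⟨h1, h2⟩⟩
    · exact ⟨e0, fun h => absurd h he⟩
  choose σfn hσ using hinvex
  have hσ1 : ∀ e (_ : e ∉ B.BSet), σfn e ≠ e0 := fun e he => (hσ e he).1
  have hσ2 : ∀ e (_ : e ∉ B.BSet), ψ (σfn e) = e := fun e he => (hσ e he).2
  set D : G.E → G.V × G.V := fun e =>
    if e = B.euv then pick s1 B.u B.v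
    else if e = B.euw then pick s2 B.u B.w
    else if e = B.evw then pick s3 B.v B.w
    else if e = B.eua then pick s4 B.u B.a
    else if e = B.evb then pick s5 B.v B.b
    else if e = estarG then pick t' B.w B.a
    else (B.φ (D1 (σfn e)).1, B.φ (D1 (σfn e)).2) with hD
  obtain ⟨ne1, ne2, ne3, ne4, ne5⟩ := B.ne_of_not_bull hestarG
  have hDeuv : D B.euv = pick s1 B.u B.v := by
    rw [hD]; simp
  have hDeuw : D B.euw = pick s2 B.u B.w := by
    rw [hD]; simp [Ne.symm B.d1]
  have hDevw : D B.evw = pick s3 B.v B.w := by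
    rw [hD]; simp [Ne.symm B.d4, Ne.symm B.d7]
  have hDeua : D B.eua = pick s4 B.u B.a := by
    rw [hD]; simp [Ne.symm B.d2, Ne.symm B.d3, B.d9]
  have hDevb : D B.evb = pick s5 B.v B.b := by
    rw [hD]; simp [Ne.symm B.d5, Ne.symm B.d8, Ne.symm B.d6, Ne.symm B.d10]
  have hDestar : D estarG = pick t' B.w B.a := by
    rw [hD]; simp [ne1, ne2, ne3, ne4, ne5]
  have hDψ : ∀ e', e' ≠ e0 → e' ≠ estar → D (ψ e') = (B.φ (D1 e').1, B.φ (D1 e').2) := by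
    intro e' h0 hstar
    have hnb : ψ e' ∉ B.BSet := by
      have hm : ψ e' ∈ ψ '' {e : H.E | e ≠ e0} := ⟨e', h0, rfl⟩
      rw [himg] at hm
      exact hm
    obtain ⟨m1, m2, m3, m4, m5⟩ := B.ne_of_not_bull hnb
    have hne_star : ψ e' ≠ estarG := fun h =>
      hstar (hinj h0 hestar0 (h.trans hestarψ.symm))
    have hσe : σfn (ψ e') = e' := hinj (hσ1 (ψ e') hnb) h0 (hσ2 (ψ e') hnb)
    rw [hD]; simp [m1, m2, m3, m4, m5, hne_star, hσe]
  refine ⟨D, ?_, ?_⟩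
  · intro e
    by_cases h1 : e = B.euv
    · subst h1; rw [hDeuv, sym2_pick]; exact B.huv
    by_cases h2 : e = B.euw
    · subst h2; rw [hDeuw, sym2_pick]; exact B.huw
    by_cases h3 : e = B.evw
    · subst h3; rw [hDevw, sym2_pick]; exact B.hvw
    by_cases h4 : e = B.eua
    · subst h4; rw [hDeua, sym2_pick]; exact B.hua
    by_cases h5 : e = B.evb
    · subst h5; rw [hDevb, sym2_pick]; exact B.hvb
    by_cases h6 : e = estarG
    · subst h6; rw [hDestar, sym2_pick]; exact hestar_ends
    have hnb : e ∉ B.BSet := by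
      intro hm
      rcases hm with h | h | h | h | h
      exacts [h1 h, h2 h, h3 h, h4 h, h5 h]
    have hDe : D e = (B.φ (D1 (σfn e)).1, B.φ (D1 (σfn e)).2) := by
      rw [hD]; simp [h1, h2, h3, h4, h5, h6]
    rw [hDe]
    have hends : G.ends e = Sym2.map B.φ (H.ends (σfn e)) := by
      conv_lhs => rw [← hσ2 e hnb]
      exact hψends _ (hσ1 e hnb)
    rw [hends, hD1or (σfn e), Sym2.map_pair_eq]
  · intro x
    rw [bdry_eq_sum, B.sum_split (fun e => wgt (D e) x)]
    rw [hDeuv, hDeuw, hDevw, hDeua, hDevb]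
    have hsh : ∑ e ∈ Finset.univ.filter (fun e => e ∉ B.BSet), wgt (D e) x
        = wgt (pick t' B.w B.a) x
          + ∑ e' ∈ Finset.univ.filter (fun e' => e' ≠ e0 ∧ e' ≠ estar),
              wgt (B.φ (D1 e').1, B.φ (D1 e').2) x := by
      rw [B.reindex_ne e0 ψ hinj himg (fun e => wgt (D e) x),
        split_two e0 estar hestar0 (fun e' => wgt (D (ψ e')) x)]
      congr 1
      · rw [hestarψ, hDestar]
      · refine Finset.sum_congr rfl fun e' he' => ?_
        simp only [Finset.mem_filter, Finset.mem_univ, true_and] at he'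
        rw [hDψ e' he'.1 he'.2]
    rw [hsh]
    by_cases hxu : x = B.u
    · subst hxu
      rw [wp_fst s1 hs1 _ _ B.nuv, wp_fst s2 hs2 _ _ B.nuw,
        wp_other s3 hs3 _ _ B.nvw _ B.nuv B.nuw,
        wp_fst s4 hs4 _ _ B.nua,
        wp_other s5 hs5 _ _ B.nvb _ B.nuv (Ne.symm B.hbu),
        wp_other t' ht' _ _ (Ne.symm haw) _ B.nuw B.nua,
        Finset.sum_eq_zero (fun e' _ => B.wgt_phi_u _ _)]
      linear_combination q1
    by_cases hxv : x = B.v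
    · subst hxv
      rw [wp_snd s1 hs1 _ _ B.nuv,
        wp_other s2 hs2 _ _ B.nuw _ (Ne.symm B.nuv) B.nvw,
        wp_fst s3 hs3 _ _ B.nvw,
        wp_other s4 hs4 _ _ B.nua _ (Ne.symm B.nuv) (Ne.symm B.hav),
        wp_fst s5 hs5 _ _ B.nvb,
        wp_other t' ht' _ _ (Ne.symm haw) _ B.nvw (Ne.symm B.hav),
        Finset.sum_eq_zero (fun e' _ => B.wgt_phi_v _ _)]
      linear_combination q2
    obtain ⟨y, hy⟩ := B.exists_phi hxu hxv
    subst hy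
    have htail : ∑ e' ∈ Finset.univ.filter (fun e' => e' ≠ e0 ∧ e' ≠ estar),
        wgt (B.φ (D1 e').1, B.φ (D1 e').2) (B.φ y)
        = β1 y - wgt (D1 e0) y - wgt (D1 estar) y := by
      rw [Finset.sum_congr rfl (fun e' _ => B.wgt_phi_pair (D1 e').1 (D1 e').2 y)]
      have t1 := split_one e0 (fun e' => wgt (D1 e') y)
      have t2 := split_two e0 estar hestar0 (fun e' => wgt (D1 e') y)
      have t3 := hD1sum y
      linear_combination t3 - t1 - t2
    rw [htail, hβ1def]
    simp only
    rw [hgfun]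
    simp only
    have hE0 : wgt (D1 e0) y = if y = a' then ε else if y = b' then -ε else 0 := by
      rw [hε]; exact wgt_pick ε hεne a' b' ha'b' y
    have hT : wgt (D1 estar) y = if y = w' then t else if y = a' then -t else 0 := by
      rw [ht]; exact wgt_pick t htne w' a' hw'a' y
    rw [hE0, hT]
    by_cases hyw : B.φ y = B.w
    · have n1 : y ≠ a' := fun h => (Ne.symm haw) (by rw [← hyw, h, ha'])
      have n2 : y ≠ b' := fun h => (Ne.symm hbw) (by rw [← hyw, h, hb'])
      have n3 : y = w' := B.hφi (by rw [hyw, hw'])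
      rw [if_neg n1, if_neg n2, if_pos n3, hyw,
        wp_other s1 hs1 _ _ B.nuv _ (Ne.symm B.nuw) (Ne.symm B.nvw),
        wp_snd s2 hs2 _ _ B.nuw, wp_snd s3 hs3 _ _ B.nvw,
        wp_other s4 hs4 _ _ B.nua _ (Ne.symm B.nuw) (Ne.symm haw),
        wp_other s5 hs5 _ _ B.nvb _ (Ne.symm B.nvw) (Ne.symm hbw),
        wp_fst t' ht' _ _ (Ne.symm haw),
        if_pos rfl, if_neg (Ne.symm haw)]
      linear_combination q3
    by_cases hya : B.φ y = B.a
    · have n1 : y = a' := B.hφi (by rw [hya, ha'])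
      have n2 : y ≠ w' := fun h => haw (by rw [← hya, h, hw'])
      rw [if_pos n1, if_neg n2, if_pos n1, hya,
        wp_other s1 hs1 _ _ B.nuv _ (Ne.symm B.nua) B.hav,
        wp_other s2 hs2 _ _ B.nuw _ (Ne.symm B.nua) haw,
        wp_other s3 hs3 _ _ B.nvw _ B.hav haw,
        wp_snd s4 hs4 _ _ B.nua,
        wp_other s5 hs5 _ _ B.nvb _ B.hav hab,
        wp_snd t' ht' _ _ (Ne.symm haw),
        if_neg haw, if_pos rfl]
      linear_combination q4
    by_cases hyb : B.φ y = B.b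
    · have n1 : y = b' := B.hφi (by rw [hyb, hb'])
      have n2 : y ≠ w' := fun h => hbw (by rw [← hyb, h, hw'])
      have n3 : y ≠ a' := fun h => hab (by rw [← ha', ← h, ← hyb])
      rw [if_neg n3, if_pos n1, if_neg n2, if_neg n3, hyb,
        wp_other s1 hs1 _ _ B.nuv _ B.hbu (Ne.symm B.nvb),
        wp_other s2 hs2 _ _ B.nuw _ B.hbu hbw,
        wp_other s3 hs3 _ _ B.nvw _ (Ne.symm B.nvb) hbw,
        wp_other s4 hs4 _ _ B.nua _ B.hbu (Ne.symm hab),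
        wp_snd s5 hs5 _ _ B.nvb,
        wp_other t' ht' _ _ (Ne.symm haw) _ hbw (Ne.symm hab),
        if_neg hbw, if_neg (Ne.symm hab)]
      linear_combination q5
    · have n1 : y ≠ a' := fun h => hya (by rw [← ha', ← h])
      have n2 : y ≠ b' := fun h => hyb (by rw [← hb', ← h])
      have n3 : y ≠ w' := fun h => hyw (by rw [← hw', ← h])
      rw [if_neg n1, if_neg n2, if_neg n3, if_neg n1,
        wp_other s1 hs1 _ _ B.nuv _ (B.phi_ne_u y) (B.phi_ne_v y),
        wp_other s2 hs2 _ _ B.nuw _ (B.phi_ne_u y) hyw,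
        wp_other s3 hs3 _ _ B.nvw _ (B.phi_ne_v y) hyw,
        wp_other s4 hs4 _ _ B.nua _ (B.phi_ne_u y) hya,
        wp_other s5 hs5 _ _ B.nvb _ (B.phi_ne_v y) hyb,
        wp_other t' ht' _ _ (Ne.symm haw) _ hyw hya,
        if_neg hyw, if_neg hya]
      ring

end BD

end ConstrMain

section ConstrAW

variable {G H : Multigraph}

namespace BD

/-- Construction for the case `a = w` (and `a ≠ b`). -/
lemma constr_aw (B : BD G H) (hH : H.Z3Connected)
    (e0 : H.E) (ψ : H.E → G.E)
    (hinj : Set.InjOn ψ {e : H.E | e ≠ e0})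
    (himg : ψ '' {e : H.E | e ≠ e0} = {e : G.E | e ∉ B.BSet})
    (hψends : ∀ e, e ≠ e0 → G.ends (ψ e) = Sym2.map B.φ (H.ends e))
    (he0ends : Sym2.map B.φ (H.ends e0) = s(B.a, B.b))
    (hab : B.a ≠ B.b) (haw : B.a = B.w)
    (β : G.V → ZMod 3) (hβ : (∑ x, β x) = 0) :
    ∃ D : G.E → G.V × G.V, G.IsOrientation D ∧
      ∀ x : G.V, ((G.outDeg D x : ZMod 3) - (G.inDeg D x : ZMod 3)) = β x := by
  classical
  have hbw : B.b ≠ B.w := fun h => hab (haw.trans h.symm)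
  obtain ⟨w', hw'⟩ := B.exists_phi (Ne.symm B.nuw) (Ne.symm B.nvw)
  obtain ⟨b', hb'⟩ := B.exists_phi B.hbu (Ne.symm B.nvb)
  have he0H : H.ends e0 = s(w', b') := by
    apply Sym2.map.injective B.hφi
    rw [he0ends, Sym2.map_pair_eq, hw', hb', haw]
  have hw'b' : w' ≠ b' := fun h => hbw (by rw [← hw', ← hb', h])
  set gfun : G.V → ZMod 3 := fun x => β x -
    (if x = B.w then -β B.u - β B.v else 0) with hgfun
  set β1 : H.V → ZMod 3 := fun y => gfun (B.φ y) with hβ1def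
  have hgu : gfun B.u = β B.u := by rw [hgfun]; simp [B.nuw]
  have hgv : gfun B.v = β B.v := by rw [hgfun]; simp [B.nvw]
  have hgsum : ∑ x, gfun x = 0 - (-β B.u - β B.v) := by
    rw [hgfun, Finset.sum_sub_distrib, hβ,
      Finset.sum_ite_eq' Finset.univ B.w (fun _ => -β B.u - β B.v)]
    simp
  have hβ1sum : ∑ y, β1 y = 0 := by
    have hv := B.vsum gfun
    rw [hgsum, hgu, hgv] at hv
    have h9 : ∀ p q s : ZMod 3, 0 - (-p - q) = p + q + s → s = 0 := by decide
    exact h9 (β B.u) (β B.v) _ hv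
  obtain ⟨D1, hD1or, hD1b⟩ := hH β1 hβ1sum
  have hD1sum : ∀ y, ∑ e', wgt (D1 e') y = β1 y := fun y =>
    ((bdry_eq_sum H D1 y).symm).trans (hD1b y)
  obtain ⟨ε, hεne, hε⟩ := pair_cases (D1 e0) w' b' ((hD1or e0).symm.trans he0H)
  obtain ⟨s1, s2, s3, s4, s5, hs1, hs2, hs3, hs4, hs5, q1, q2, q3, q4⟩ :=
    algS1 (β B.u) (β B.v) ε hεne
  have hinvex : ∀ e : G.E, ∃ e', e ∉ B.BSet → (e' ≠ e0 ∧ ψ e' = e) := by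
    intro e
    by_cases he : e ∉ B.BSet
    · have hm : e ∈ ψ '' {e : H.E | e ≠ e0} := by rw [himg]; exact he
      obtain ⟨e', h1, h2⟩ := hm
      exact ⟨e', fun _ => ⟨h1, h2⟩⟩
    · exact ⟨e0, fun h => absurd h he⟩
  choose σfn hσ using hinvex
  have hσ1 : ∀ e (_ : e ∉ B.BSet), σfn e ≠ e0 := fun e he => (hσ e he).1
  have hσ2 : ∀ e (_ : e ∉ B.BSet), ψ (σfn e) = e := fun e he => (hσ e he).2
  set D : G.E → G.V × G.V := fun e =>
    if e = B.euv then pick s1 B.u B.v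
    else if e = B.euw then pick s2 B.u B.w
    else if e = B.evw then pick s3 B.v B.w
    else if e = B.eua then pick s4 B.u B.a
    else if e = B.evb then pick s5 B.v B.b
    else (B.φ (D1 (σfn e)).1, B.φ (D1 (σfn e)).2) with hD
  have hDeuv : D B.euv = pick s1 B.u B.v := by
    rw [hD]; simp
  have hDeuw : D B.euw = pick s2 B.u B.w := by
    rw [hD]; simp [Ne.symm B.d1]
  have hDevw : D B.evw = pick s3 B.v B.w := by
    rw [hD]; simp [Ne.symm B.d4, Ne.symm B.d7]
  have hDeua : D B.eua = pick s4 B.u B.a := by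
    rw [hD]; simp [Ne.symm B.d2, Ne.symm B.d3, B.d9]
  have hDevb : D B.evb = pick s5 B.v B.b := by
    rw [hD]; simp [Ne.symm B.d5, Ne.symm B.d8, Ne.symm B.d6, Ne.symm B.d10]
  have hDψ : ∀ e', e' ≠ e0 → D (ψ e') = (B.φ (D1 e').1, B.φ (D1 e').2) := by
    intro e' h0
    have hnb : ψ e' ∉ B.BSet := by
      have hm : ψ e' ∈ ψ '' {e : H.E | e ≠ e0} := ⟨e', h0, rfl⟩
      rw [himg] at hm
      exact hm
    obtain ⟨m1, m2, m3, m4, m5⟩ := B.ne_of_not_bull hnb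
    have hσe : σfn (ψ e') = e' := hinj (hσ1 (ψ e') hnb) h0 (hσ2 (ψ e') hnb)
    rw [hD]; simp [m1, m2, m3, m4, m5, hσe]
  refine ⟨D, ?_, ?_⟩
  · intro e
    by_cases h1 : e = B.euv
    · subst h1; rw [hDeuv, sym2_pick]; exact B.huv
    by_cases h2 : e = B.euw
    · subst h2; rw [hDeuw, sym2_pick]; exact B.huw
    by_cases h3 : e = B.evw
    · subst h3; rw [hDevw, sym2_pick]; exact B.hvw
    by_cases h4 : e = B.eua
    · subst h4; rw [hDeua, sym2_pick]; exact B.hua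
    by_cases h5 : e = B.evb
    · subst h5; rw [hDevb, sym2_pick]; exact B.hvb
    have hnb : e ∉ B.BSet := by
      intro hm
      rcases hm with h | h | h | h | h
      exacts [h1 h, h2 h, h3 h, h4 h, h5 h]
    have hDe : D e = (B.φ (D1 (σfn e)).1, B.φ (D1 (σfn e)).2) := by
      rw [hD]; simp [h1, h2, h3, h4, h5]
    rw [hDe]
    have hends : G.ends e = Sym2.map B.φ (H.ends (σfn e)) := by
      conv_lhs => rw [← hσ2 e hnb]
      exact hψends _ (hσ1 e hnb)
    rw [hends, hD1or (σfn e), Sym2.map_pair_eq]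
  · intro x
    rw [bdry_eq_sum, B.sum_split (fun e => wgt (D e) x)]
    rw [hDeuv, hDeuw, hDevw, hDeua, hDevb]
    have hsh : ∑ e ∈ Finset.univ.filter (fun e => e ∉ B.BSet), wgt (D e) x
        = ∑ e' ∈ Finset.univ.filter (fun e' => e' ≠ e0),
            wgt (B.φ (D1 e').1, B.φ (D1 e').2) x := by
      rw [B.reindex_ne e0 ψ hinj himg (fun e => wgt (D e) x)]
      refine Finset.sum_congr rfl fun e' he' => ?_
      simp only [Finset.mem_filter, Finset.mem_univ, true_and] at he'
      rw [hDψ e' he']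
    rw [hsh]
    by_cases hxu : x = B.u
    · subst hxu
      rw [wp_fst s1 hs1 _ _ B.nuv, wp_fst s2 hs2 _ _ B.nuw,
        wp_other s3 hs3 _ _ B.nvw _ B.nuv B.nuw,
        wp_fst s4 hs4 _ _ B.nua,
        wp_other s5 hs5 _ _ B.nvb _ B.nuv (Ne.symm B.hbu),
        Finset.sum_eq_zero (fun e' _ => B.wgt_phi_u _ _)]
      linear_combination q1
    by_cases hxv : x = B.v
    · subst hxv
      rw [wp_snd s1 hs1 _ _ B.nuv,
        wp_other s2 hs2 _ _ B.nuw _ (Ne.symm B.nuv) B.nvw,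
        wp_fst s3 hs3 _ _ B.nvw,
        wp_other s4 hs4 _ _ B.nua _ (Ne.symm B.nuv) (Ne.symm B.hav),
        wp_fst s5 hs5 _ _ B.nvb,
        Finset.sum_eq_zero (fun e' _ => B.wgt_phi_v _ _)]
      linear_combination q2
    obtain ⟨y, hy⟩ := B.exists_phi hxu hxv
    subst hy
    have htail : ∑ e' ∈ Finset.univ.filter (fun e' => e' ≠ e0),
        wgt (B.φ (D1 e').1, B.φ (D1 e').2) (B.φ y)
        = β1 y - wgt (D1 e0) y := by
      rw [Finset.sum_congr rfl (fun e' _ => B.wgt_phi_pair (D1 e').1 (D1 e').2 y)]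
      have t1 := split_one e0 (fun e' => wgt (D1 e') y)
      have t3 := hD1sum y
      linear_combination t3 - t1
    rw [htail, hβ1def]
    simp only
    rw [hgfun]
    simp only
    have hE0 : wgt (D1 e0) y = if y = w' then ε else if y = b' then -ε else 0 := by
      rw [hε]; exact wgt_pick ε hεne w' b' hw'b' y
    rw [hE0]
    by_cases hyw : B.φ y = B.w
    · have n3 : y = w' := B.hφi (by rw [hyw, hw'])
      rw [if_pos n3, hyw, ← haw,
        wp_other s1 hs1 _ _ B.nuv _ (Ne.symm B.nua) B.hav,
        wp_snd s2 hs2 _ _ B.nua,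
        wp_snd s3 hs3 _ _ (Ne.symm B.hav),
        wp_snd s4 hs4 _ _ B.nua,
        wp_other s5 hs5 _ _ B.nvb _ B.hav hab,
        if_pos rfl]
      linear_combination q3
    by_cases hyb : B.φ y = B.b
    · have n1 : y ≠ w' := fun h => hbw (by rw [← hyb, h, hw'])
      have n2 : y = b' := B.hφi (by rw [hyb, hb'])
      rw [if_neg n1, if_pos n2, hyb,
        wp_other s1 hs1 _ _ B.nuv _ B.hbu (Ne.symm B.nvb),
        wp_other s2 hs2 _ _ B.nuw _ B.hbu hbw,
        wp_other s3 hs3 _ _ B.nvw _ (Ne.symm B.nvb) hbw,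
        wp_other s4 hs4 _ _ B.nua _ B.hbu (Ne.symm hab),
        wp_snd s5 hs5 _ _ B.nvb,
        if_neg hbw]
      linear_combination q4
    · have n1 : y ≠ w' := fun h => hyw (by rw [← hw', ← h])
      have n2 : y ≠ b' := fun h => hyb (by rw [← hb', ← h])
      have hya : B.φ y ≠ B.a := fun h => hyw (h.trans haw)
      rw [if_neg n1, if_neg n2,
        wp_other s1 hs1 _ _ B.nuv _ (B.phi_ne_u y) (B.phi_ne_v y),
        wp_other s2 hs2 _ _ B.nuw _ (B.phi_ne_u y) hyw,
        wp_other s3 hs3 _ _ B.nvw _ (B.phi_ne_v y) hyw,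
        wp_other s4 hs4 _ _ B.nua _ (B.phi_ne_u y) hya,
        wp_other s5 hs5 _ _ B.nvb _ (B.phi_ne_v y) hyb,
        if_neg hyw]
      ring

end BD

end ConstrAW

section ConstrAB

lemma sym2_exists_pair {α : Type} (z : Sym2 α) : ∃ x y, z = s(x, y) := by
  induction z using Sym2.ind with
  | _ x y => exact ⟨x, y, rfl⟩

lemma pick_comp_ne {V : Type} (s : ZMod 3) (x y : V) (hxy : x ≠ y) :
    (pick s x y).1 ≠ (pick s x y).2 := by
  unfold pick; split
  · exact hxy
  · exact Ne.symm hxy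

lemma pair_cancel {V : Type} (σ τ : ZMod 3) (hσ : σ ≠ 0) (hτ : τ ≠ 0) (hsum : σ + τ = 0)
    (p q r x : V) (hxp : x ≠ p) (hxq : x ≠ q) (hpr : p ≠ r) (hqr : q ≠ r) :
    wgt (pick σ p r) x + wgt (pick τ q r) x = 0 := by
  rw [wgt_pick σ hσ p r hpr, wgt_pick τ hτ q r hqr, if_neg hxp, if_neg hxq]
  by_cases hxr : x = r
  · rw [if_pos hxr, if_pos hxr]
    linear_combination -hsum
  · rw [if_neg hxr, if_neg hxr]
    ring

variable {G H : Multigraph}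

namespace BD

/-- Construction for the case `a = b`. -/
lemma constr_ab (B : BD G H) (hH : H.Z3Connected)
    (ψ : H.E → G.E)
    (hinj : Function.Injective ψ)
    (himg : Set.range ψ = {e : G.E | e ∉ B.BSet})
    (hψends : ∀ e, G.ends (ψ e) = Sym2.map B.φ (H.ends e))
    (β : G.V → ZMod 3) (hβ : (∑ x, β x) = 0) :
    ∃ D : G.E → G.V × G.V, G.IsOrientation D ∧
      ∀ x : G.V, ((G.outDeg D x : ZMod 3) - (G.inDeg D x : ZMod 3)) = β x := by
  classical
  obtain ⟨s1, s2, s3, s4, s5, hs1, hs2, hs3, hs4, hs5, q1, q2⟩ :=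
    algAB (β B.u) (β B.v)
  set bull : G.V → ZMod 3 := fun x =>
    wgt (pick s1 B.u B.v) x + wgt (pick s2 B.u B.w) x + wgt (pick s3 B.v B.w) x
      + wgt (pick s4 B.u B.a) x + wgt (pick s5 B.v B.b) x with hbull
  set β1 : H.V → ZMod 3 := fun y => β (B.φ y) - bull (B.φ y) with hβ1def
  have hbullu : bull B.u = β B.u := by
    rw [hbull]; simp only
    rw [wp_fst s1 hs1 _ _ B.nuv, wp_fst s2 hs2 _ _ B.nuw,
      wp_other s3 hs3 _ _ B.nvw _ B.nuv B.nuw,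
      wp_fst s4 hs4 _ _ B.nua,
      wp_other s5 hs5 _ _ B.nvb _ B.nuv (Ne.symm B.hbu)]
    linear_combination q1
  have hbullv : bull B.v = β B.v := by
    rw [hbull]; simp only
    rw [wp_snd s1 hs1 _ _ B.nuv,
      wp_other s2 hs2 _ _ B.nuw _ (Ne.symm B.nuv) B.nvw,
      wp_fst s3 hs3 _ _ B.nvw,
      wp_other s4 hs4 _ _ B.nua _ (Ne.symm B.nuv) (Ne.symm B.hav),
      wp_fst s5 hs5 _ _ B.nvb]
    linear_combination q2
  have hbullsum : ∑ x, bull x = 0 := by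
    rw [hbull]
    rw [Finset.sum_add_distrib, Finset.sum_add_distrib, Finset.sum_add_distrib,
      Finset.sum_add_distrib]
    rw [sum_wgt_zero _ (pick_comp_ne s1 _ _ B.nuv),
      sum_wgt_zero _ (pick_comp_ne s2 _ _ B.nuw),
      sum_wgt_zero _ (pick_comp_ne s3 _ _ B.nvw),
      sum_wgt_zero _ (pick_comp_ne s4 _ _ B.nua),
      sum_wgt_zero _ (pick_comp_ne s5 _ _ B.nvb)]
    ring
  have hβ1sum : ∑ y, β1 y = 0 := by
    have hv := B.vsum (fun x => β x - bull x)
    rw [Finset.sum_sub_distrib, hβ, hbullsum, hbullu, hbullv] at hv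
    have h9 : ∀ p q s : ZMod 3, (0 : ZMod 3) - 0 = p - p + (q - q) + s → s = 0 := by decide
    exact h9 (β B.u) (β B.v) _ hv
  obtain ⟨D1, hD1or, hD1b⟩ := hH β1 hβ1sum
  have hD1sum : ∀ y, ∑ e', wgt (D1 e') y = β1 y := fun y =>
    ((bdry_eq_sum H D1 y).symm).trans (hD1b y)
  have hinvex : ∀ e : G.E, e ∉ B.BSet → ∃ e', ψ e' = e := by
    intro e he
    have hm : e ∈ Set.range ψ := by rw [himg]; exact he
    exact hm
  set σfn : (e : G.E) → e ∉ B.BSet → H.E := fun e h => (hinvex e h).choose with hσfn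
  have hσ2 : ∀ e (h : e ∉ B.BSet), ψ (σfn e h) = e := fun e h => (hinvex e h).choose_spec
  set D : G.E → G.V × G.V := fun e =>
    if e = B.euv then pick s1 B.u B.v
    else if e = B.euw then pick s2 B.u B.w
    else if e = B.evw then pick s3 B.v B.w
    else if e = B.eua then pick s4 B.u B.a
    else if e = B.evb then pick s5 B.v B.b
    else if h : e ∉ B.BSet then (B.φ (D1 (σfn e h)).1, B.φ (D1 (σfn e h)).2)
    else (B.u, B.v) with hD
  have hDeuv : D B.euv = pick s1 B.u B.v := by
    rw [hD]; simp
  have hDeuw : D B.euw = pick s2 B.u B.w := by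
    rw [hD]; simp [Ne.symm B.d1]
  have hDevw : D B.evw = pick s3 B.v B.w := by
    rw [hD]; simp [Ne.symm B.d4, Ne.symm B.d7]
  have hDeua : D B.eua = pick s4 B.u B.a := by
    rw [hD]; simp [Ne.symm B.d2, Ne.symm B.d3, B.d9]
  have hDevb : D B.evb = pick s5 B.v B.b := by
    rw [hD]; simp [Ne.symm B.d5, Ne.symm B.d8, Ne.symm B.d6, Ne.symm B.d10]
  have hDsh : ∀ e (hnb : e ∉ B.BSet),
      D e = (B.φ (D1 (σfn e hnb)).1, B.φ (D1 (σfn e hnb)).2) := by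
    intro e hnb
    obtain ⟨m1, m2, m3, m4, m5⟩ := B.ne_of_not_bull hnb
    rw [hD]; simp [m1, m2, m3, m4, m5, hnb]
  have hDψ : ∀ e', D (ψ e') = (B.φ (D1 e').1, B.φ (D1 e').2) := by
    intro e'
    have hnb : ψ e' ∉ B.BSet := by
      have hm : ψ e' ∈ Set.range ψ := ⟨e', rfl⟩
      rw [himg] at hm
      exact hm
    have hσe : σfn (ψ e') hnb = e' := hinj (hσ2 (ψ e') hnb)
    rw [hDsh (ψ e') hnb, hσe]
  refine ⟨D, ?_, ?_⟩
  · intro e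
    by_cases h1 : e = B.euv
    · subst h1; rw [hDeuv, sym2_pick]; exact B.huv
    by_cases h2 : e = B.euw
    · subst h2; rw [hDeuw, sym2_pick]; exact B.huw
    by_cases h3 : e = B.evw
    · subst h3; rw [hDevw, sym2_pick]; exact B.hvw
    by_cases h4 : e = B.eua
    · subst h4; rw [hDeua, sym2_pick]; exact B.hua
    by_cases h5 : e = B.evb
    · subst h5; rw [hDevb, sym2_pick]; exact B.hvb
    have hnb : e ∉ B.BSet := by
      intro hm
      rcases hm with h | h | h | h | h
      exacts [h1 h, h2 h, h3 h, h4 h, h5 h]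
    rw [hDsh e hnb]
    have hends : G.ends e = Sym2.map B.φ (H.ends (σfn e hnb)) := by
      conv_lhs => rw [← hσ2 e hnb]
      exact hψends _
    rw [hends, hD1or (σfn e hnb), Sym2.map_pair_eq]
  · intro x
    rw [bdry_eq_sum, B.sum_split (fun e => wgt (D e) x)]
    rw [hDeuv, hDeuw, hDevw, hDeua, hDevb]
    have hsh : ∑ e ∈ Finset.univ.filter (fun e => e ∉ B.BSet), wgt (D e) x
        = ∑ e', wgt (B.φ (D1 e').1, B.φ (D1 e').2) x := by
      rw [B.reindex_full ψ hinj himg (fun e => wgt (D e) x)]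
      exact Finset.sum_congr rfl fun e' _ => by rw [hDψ e']
    rw [hsh]
    by_cases hxu : x = B.u
    · subst hxu
      rw [wp_fst s1 hs1 _ _ B.nuv, wp_fst s2 hs2 _ _ B.nuw,
        wp_other s3 hs3 _ _ B.nvw _ B.nuv B.nuw,
        wp_fst s4 hs4 _ _ B.nua,
        wp_other s5 hs5 _ _ B.nvb _ B.nuv (Ne.symm B.hbu),
        Finset.sum_eq_zero (fun e' _ => B.wgt_phi_u _ _)]
      linear_combination q1
    by_cases hxv : x = B.v
    · subst hxv
      rw [wp_snd s1 hs1 _ _ B.nuv,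
        wp_other s2 hs2 _ _ B.nuw _ (Ne.symm B.nuv) B.nvw,
        wp_fst s3 hs3 _ _ B.nvw,
        wp_other s4 hs4 _ _ B.nua _ (Ne.symm B.nuv) (Ne.symm B.hav),
        wp_fst s5 hs5 _ _ B.nvb,
        Finset.sum_eq_zero (fun e' _ => B.wgt_phi_v _ _)]
      linear_combination q2
    obtain ⟨y, hy⟩ := B.exists_phi hxu hxv
    subst hy
    rw [Finset.sum_congr rfl (fun e' _ => B.wgt_phi_pair (D1 e').1 (D1 e').2 y),
      hD1sum y, hβ1def]
    simp only
    rw [hbull]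
    simp only
    ring

end BD

end ConstrAB

section ReverseSec

variable {G H : Multigraph}

namespace BD

/-- Reverse direction, `a ≠ b` case. -/
lemma reverse_ne (B : BD G H) (hG : G.Z3Connected)
    (e0 : H.E) (ψ : H.E → G.E)
    (hinj : Set.InjOn ψ {e : H.E | e ≠ e0})
    (himg : ψ '' {e : H.E | e ≠ e0} = {e : G.E | e ∉ B.BSet})
    (hψends : ∀ e, e ≠ e0 → G.ends (ψ e) = Sym2.map B.φ (H.ends e))
    (he0ends : Sym2.map B.φ (H.ends e0) = s(B.a, B.b))
    (hab : B.a ≠ B.b) :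
    H.Z3Connected := by
  intro γ hγ
  classical
  obtain ⟨a', ha'⟩ := B.exists_phi (Ne.symm B.nua) B.hav
  obtain ⟨b', hb'⟩ := B.exists_phi B.hbu (Ne.symm B.nvb)
  have he0H : H.ends e0 = s(a', b') := by
    apply Sym2.map.injective B.hφi
    rw [he0ends, Sym2.map_pair_eq, ha', hb']
  have ha'b' : a' ≠ b' := fun h => hab (by rw [← ha', ← hb', h])
  have hρex : ∀ x : G.V, ∃ y, (x ≠ B.u ∧ x ≠ B.v) → B.φ y = x := by
    intro x
    by_cases h : x ≠ B.u ∧ x ≠ B.v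
    · obtain ⟨y, hy⟩ := B.exists_phi h.1 h.2
      exact ⟨y, fun _ => hy⟩
    · exact ⟨a', fun hc => absurd hc h⟩
  choose ρ hρ using hρex
  have hρφ : ∀ y, ρ (B.φ y) = y := fun y =>
    B.hφi (hρ (B.φ y) ⟨B.phi_ne_u y, B.phi_ne_v y⟩)
  set β : G.V → ZMod 3 := fun x => if x = B.u ∨ x = B.v then 0 else γ (ρ x) with hβdef
  have hβu : β B.u = 0 := by rw [hβdef]; simp
  have hβv : β B.v = 0 := by rw [hβdef]; simp
  have hβφ : ∀ y, β (B.φ y) = γ y := by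
    intro y
    rw [hβdef]; simp only
    rw [if_neg (by push_neg; exact ⟨B.phi_ne_u y, B.phi_ne_v y⟩), hρφ]
  have hβsum : ∑ x, β x = 0 := by
    rw [B.vsum β, hβu, hβv, Finset.sum_congr rfl (fun y _ => hβφ y), hγ]
    ring
  obtain ⟨D, hDor, hDb⟩ := hG β hβsum
  have hDsum : ∀ x, ∑ e, wgt (D e) x = β x := fun x =>
    (bdry_eq_sum G D x).symm.trans (hDb x)
  obtain ⟨σ1, hσ1, hE1⟩ := pair_cases (D B.euv) B.u B.v ((hDor B.euv).symm.trans B.huv)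
  obtain ⟨σ2, hσ2, hE2⟩ := pair_cases (D B.euw) B.u B.w ((hDor B.euw).symm.trans B.huw)
  obtain ⟨σ3, hσ3, hE3⟩ := pair_cases (D B.evw) B.v B.w ((hDor B.evw).symm.trans B.hvw)
  obtain ⟨σ4, hσ4, hE4⟩ := pair_cases (D B.eua) B.u B.a ((hDor B.eua).symm.trans B.hua)
  obtain ⟨σ5, hσ5, hE5⟩ := pair_cases (D B.evb) B.v B.b ((hDor B.evb).symm.trans B.hvb)
  have hDav : ∀ e, e ∉ B.BSet → wgt (D e) B.u = 0 := by
    intro e he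
    have hu := B.u_not_mem he
    refine wgt_zero _ _ (fun h => hu ?_) (fun h => hu ?_)
    · rw [hDor e, ← h]; exact Sym2.mem_mk_left _ _
    · rw [hDor e, ← h]; exact Sym2.mem_mk_right _ _
  have hDbv : ∀ e, e ∉ B.BSet → wgt (D e) B.v = 0 := by
    intro e he
    have hu := B.v_not_mem he
    refine wgt_zero _ _ (fun h => hu ?_) (fun h => hu ?_)
    · rw [hDor e, ← h]; exact Sym2.mem_mk_left _ _
    · rw [hDor e, ← h]; exact Sym2.mem_mk_right _ _
  have hu0 : σ1 + σ2 + σ4 = 0 := by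
    have h := hDsum B.u
    rw [B.sum_split (fun e => wgt (D e) B.u), hE1, hE2, hE3, hE4, hE5,
      wp_fst σ1 hσ1 _ _ B.nuv, wp_fst σ2 hσ2 _ _ B.nuw,
      wp_other σ3 hσ3 _ _ B.nvw _ B.nuv B.nuw,
      wp_fst σ4 hσ4 _ _ B.nua,
      wp_other σ5 hσ5 _ _ B.nvb _ B.nuv (Ne.symm B.hbu),
      Finset.sum_eq_zero (fun e he => hDav e (by simpa using he)), hβu] at h
    linear_combination h
  have hv0 : -σ1 + σ3 + σ5 = 0 := by
    have h := hDsum B.v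
    rw [B.sum_split (fun e => wgt (D e) B.v), hE1, hE2, hE3, hE4, hE5,
      wp_snd σ1 hσ1 _ _ B.nuv,
      wp_other σ2 hσ2 _ _ B.nuw _ (Ne.symm B.nuv) B.nvw,
      wp_fst σ3 hσ3 _ _ B.nvw,
      wp_other σ4 hσ4 _ _ B.nua _ (Ne.symm B.nuv) (Ne.symm B.hav),
      wp_fst σ5 hσ5 _ _ B.nvb,
      Finset.sum_eq_zero (fun e he => hDbv e (by simpa using he)), hβv] at h
    linear_combination h
  obtain ⟨q12, q24⟩ := alg3eq σ1 σ2 σ4 hσ1 hσ2 hσ4 hu0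
  obtain ⟨q13, q35⟩ := alg3eq (-σ1) σ3 σ5 (neg_ne_zero.mpr hσ1) hσ3 hσ5 hv0
  set D1 : H.E → H.V × H.V := fun e' =>
    if e' = e0 then pick (-σ1) a' b'
    else (ρ (D (ψ e')).1, ρ (D (ψ e')).2) with hD1def
  have hD1e0 : D1 e0 = pick (-σ1) a' b' := by rw [hD1def]; simp
  have hD1sh : ∀ e', e' ≠ e0 → D1 e' = (ρ (D (ψ e')).1, ρ (D (ψ e')).2) := by
    intro e' h
    rw [hD1def]; simp [h]
  have hcomp : ∀ e', e' ≠ e0 → ∃ c d, H.ends e' = s(c, d) ∧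
      (D (ψ e') = (B.φ c, B.φ d)) := by
    intro e' h
    obtain ⟨c, d, hcd⟩ := sym2_exists_pair (H.ends e')
    have h2 : s((D (ψ e')).1, (D (ψ e')).2) = s(B.φ c, B.φ d) := by
      rw [← Sym2.map_pair_eq, ← hcd, ← hψends e' h]
      exact (hDor (ψ e')).symm
    rcases Sym2.eq_iff.mp h2 with ⟨p1, p2⟩ | ⟨p1, p2⟩
    · exact ⟨c, d, hcd, Prod.ext p1 p2⟩
    · exact ⟨d, c, ends_swap hcd, Prod.ext p1 p2⟩
  refine ⟨D1, ?_, ?_⟩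
  · intro e'
    by_cases h : e' = e0
    · subst h
      rw [hD1e0, sym2_pick]
      exact he0H
    · obtain ⟨c, d, hcd, hDe⟩ := hcomp e' h
      rw [hD1sh e' h, hDe]
      simp only
      rw [hρφ, hρφ]
      exact hcd
  · intro y
    rw [bdry_eq_sum, split_one e0 (fun e' => wgt (D1 e') y), hD1e0]
    have hg : ∀ e' ∈ Finset.univ.filter (fun e' => e' ≠ e0),
        wgt (D1 e') y = wgt (D (ψ e')) (B.φ y) := by
      intro e' he'
      simp only [Finset.mem_filter, Finset.mem_univ, true_and] at he'
      obtain ⟨c, d, hcd, hDe⟩ := hcomp e' he'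
      rw [hD1sh e' he', hDe]
      simp only
      rw [hρφ, hρφ]
      exact (B.wgt_phi_pair c d y).symm
    rw [Finset.sum_congr rfl hg,
      ← B.reindex_ne e0 ψ hinj himg (fun e => wgt (D e) (B.φ y))]
    have hsp := B.sum_split (fun e => wgt (D e) (B.φ y))
    rw [hE1, hE2, hE3, hE4, hE5, hDsum (B.φ y), hβφ y,
      wp_other σ1 hσ1 _ _ B.nuv _ (B.phi_ne_u y) (B.phi_ne_v y)] at hsp
    have hpair23 : wgt (pick σ2 B.u B.w) (B.φ y) + wgt (pick σ3 B.v B.w) (B.φ y) = 0 :=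
      pair_cancel σ2 σ3 hσ2 hσ3 (by linear_combination -q12 - q13)
        B.u B.v B.w (B.φ y) (B.phi_ne_u y) (B.phi_ne_v y) B.nuw B.nvw
    by_cases hya : B.φ y = B.a
    · have n1 : y = a' := B.hφi (by rw [hya, ha'])
      have hT4 : wgt (pick σ4 B.u B.a) (B.φ y) = -σ4 := by
        rw [hya]; exact wp_snd σ4 hσ4 _ _ B.nua
      have hT5 : wgt (pick σ5 B.v B.b) (B.φ y) = 0 := by
        rw [hya]; exact wp_other σ5 hσ5 _ _ B.nvb _ B.hav hab
      rw [hT4, hT5] at hsp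
      have hE0v : wgt (pick (-σ1) a' b') y = -σ1 := by
        rw [n1]; exact wp_fst (-σ1) (neg_ne_zero.mpr hσ1) a' b' ha'b'
      rw [hE0v]
      linear_combination -hsp - hpair23 - q12 - q24
    by_cases hyb : B.φ y = B.b
    · have n1 : y = b' := B.hφi (by rw [hyb, hb'])
      have hT4 : wgt (pick σ4 B.u B.a) (B.φ y) = 0 := by
        rw [hyb]; exact wp_other σ4 hσ4 _ _ B.nua _ B.hbu (Ne.symm hab)
      have hT5 : wgt (pick σ5 B.v B.b) (B.φ y) = -σ5 := by
        rw [hyb]; exact wp_snd σ5 hσ5 _ _ B.nvb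
      rw [hT4, hT5] at hsp
      have hE0v : wgt (pick (-σ1) a' b') y = -(-σ1) := by
        rw [n1]; exact wp_snd (-σ1) (neg_ne_zero.mpr hσ1) a' b' ha'b'
      rw [hE0v]
      linear_combination -hsp - hpair23 - q13 - q35
    · have n1 : y ≠ a' := fun h => hya (by rw [← ha', ← h])
      have n2 : y ≠ b' := fun h => hyb (by rw [← hb', ← h])
      have hT4 : wgt (pick σ4 B.u B.a) (B.φ y) = 0 :=
        wp_other σ4 hσ4 _ _ B.nua _ (B.phi_ne_u y) hya
      have hT5 : wgt (pick σ5 B.v B.b) (B.φ y) = 0 :=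
        wp_other σ5 hσ5 _ _ B.nvb _ (B.phi_ne_v y) hyb
      rw [hT4, hT5] at hsp
      rw [wp_other (-σ1) (neg_ne_zero.mpr hσ1) a' b' ha'b' _ n1 n2]
      linear_combination -hsp - hpair23

/-- Reverse direction, `a = b` case. -/
lemma reverse_ab (B : BD G H) (hG : G.Z3Connected)
    (ψ : H.E → G.E)
    (hinj : Function.Injective ψ)
    (himg : Set.range ψ = {e : G.E | e ∉ B.BSet})
    (hψends : ∀ e, G.ends (ψ e) = Sym2.map B.φ (H.ends e))
    (hab : B.a = B.b) :
    H.Z3Connected := by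
  intro γ hγ
  classical
  obtain ⟨a', ha'⟩ := B.exists_phi (Ne.symm B.nua) B.hav
  have hρex : ∀ x : G.V, ∃ y, (x ≠ B.u ∧ x ≠ B.v) → B.φ y = x := by
    intro x
    by_cases h : x ≠ B.u ∧ x ≠ B.v
    · obtain ⟨y, hy⟩ := B.exists_phi h.1 h.2
      exact ⟨y, fun _ => hy⟩
    · exact ⟨a', fun hc => absurd hc h⟩
  choose ρ hρ using hρex
  have hρφ : ∀ y, ρ (B.φ y) = y := fun y =>
    B.hφi (hρ (B.φ y) ⟨B.phi_ne_u y, B.phi_ne_v y⟩)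
  set β : G.V → ZMod 3 := fun x => if x = B.u ∨ x = B.v then 0 else γ (ρ x) with hβdef
  have hβu : β B.u = 0 := by rw [hβdef]; simp
  have hβv : β B.v = 0 := by rw [hβdef]; simp
  have hβφ : ∀ y, β (B.φ y) = γ y := by
    intro y
    rw [hβdef]; simp only
    rw [if_neg (by push_neg; exact ⟨B.phi_ne_u y, B.phi_ne_v y⟩), hρφ]
  have hβsum : ∑ x, β x = 0 := by
    rw [B.vsum β, hβu, hβv, Finset.sum_congr rfl (fun y _ => hβφ y), hγ]
    ring
  obtain ⟨D, hDor, hDb⟩ := hG β hβsum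
  have hDsum : ∀ x, ∑ e, wgt (D e) x = β x := fun x =>
    (bdry_eq_sum G D x).symm.trans (hDb x)
  obtain ⟨σ1, hσ1, hE1⟩ := pair_cases (D B.euv) B.u B.v ((hDor B.euv).symm.trans B.huv)
  obtain ⟨σ2, hσ2, hE2⟩ := pair_cases (D B.euw) B.u B.w ((hDor B.euw).symm.trans B.huw)
  obtain ⟨σ3, hσ3, hE3⟩ := pair_cases (D B.evw) B.v B.w ((hDor B.evw).symm.trans B.hvw)
  obtain ⟨σ4, hσ4, hE4⟩ := pair_cases (D B.eua) B.u B.a ((hDor B.eua).symm.trans B.hua)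
  obtain ⟨σ5, hσ5, hE5⟩ := pair_cases (D B.evb) B.v B.a
    ((hDor B.evb).symm.trans (hab ▸ B.hvb))
  have hDav : ∀ e, e ∉ B.BSet → wgt (D e) B.u = 0 := by
    intro e he
    have hu := B.u_not_mem he
    refine wgt_zero _ _ (fun h => hu ?_) (fun h => hu ?_)
    · rw [hDor e, ← h]; exact Sym2.mem_mk_left _ _
    · rw [hDor e, ← h]; exact Sym2.mem_mk_right _ _
  have hDbv : ∀ e, e ∉ B.BSet → wgt (D e) B.v = 0 := by
    intro e he
    have hu := B.v_not_mem he
    refine wgt_zero _ _ (fun h => hu ?_) (fun h => hu ?_)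
    · rw [hDor e, ← h]; exact Sym2.mem_mk_left _ _
    · rw [hDor e, ← h]; exact Sym2.mem_mk_right _ _
  have hu0 : σ1 + σ2 + σ4 = 0 := by
    have h := hDsum B.u
    rw [B.sum_split (fun e => wgt (D e) B.u), hE1, hE2, hE3, hE4, hE5,
      wp_fst σ1 hσ1 _ _ B.nuv, wp_fst σ2 hσ2 _ _ B.nuw,
      wp_other σ3 hσ3 _ _ B.nvw _ B.nuv B.nuw,
      wp_fst σ4 hσ4 _ _ B.nua,
      wp_other σ5 hσ5 _ _ (hab ▸ B.nvb) _ B.nuv B.nua,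
      Finset.sum_eq_zero (fun e he => hDav e (by simpa using he)), hβu] at h
    linear_combination h
  have hv0 : -σ1 + σ3 + σ5 = 0 := by
    have h := hDsum B.v
    rw [B.sum_split (fun e => wgt (D e) B.v), hE1, hE2, hE3, hE4, hE5,
      wp_snd σ1 hσ1 _ _ B.nuv,
      wp_other σ2 hσ2 _ _ B.nuw _ (Ne.symm B.nuv) B.nvw,
      wp_fst σ3 hσ3 _ _ B.nvw,
      wp_other σ4 hσ4 _ _ B.nua _ (Ne.symm B.nuv) (Ne.symm B.hav),
      wp_fst σ5 hσ5 _ _ (hab ▸ B.nvb),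
      Finset.sum_eq_zero (fun e he => hDbv e (by simpa using he)), hβv] at h
    linear_combination h
  obtain ⟨q12, q24⟩ := alg3eq σ1 σ2 σ4 hσ1 hσ2 hσ4 hu0
  obtain ⟨q13, q35⟩ := alg3eq (-σ1) σ3 σ5 (neg_ne_zero.mpr hσ1) hσ3 hσ5 hv0
  set D1 : H.E → H.V × H.V := fun e' => (ρ (D (ψ e')).1, ρ (D (ψ e')).2) with hD1def
  have hcomp : ∀ e', ∃ c d, H.ends e' = s(c, d) ∧ (D (ψ e') = (B.φ c, B.φ d)) := by
    intro e'
    obtain ⟨c, d, hcd⟩ := sym2_exists_pair (H.ends e')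
    have h2 : s((D (ψ e')).1, (D (ψ e')).2) = s(B.φ c, B.φ d) := by
      rw [← Sym2.map_pair_eq, ← hcd, ← hψends e']
      exact (hDor (ψ e')).symm
    rcases Sym2.eq_iff.mp h2 with ⟨p1, p2⟩ | ⟨p1, p2⟩
    · exact ⟨c, d, hcd, Prod.ext p1 p2⟩
    · exact ⟨d, c, ends_swap hcd, Prod.ext p1 p2⟩
  refine ⟨D1, ?_, ?_⟩
  · intro e'
    obtain ⟨c, d, hcd, hDe⟩ := hcomp e'
    rw [hD1def]
    simp only
    rw [hDe]
    simp only
    rw [hρφ, hρφ]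
    exact hcd
  · intro y
    rw [bdry_eq_sum]
    have hg : ∀ e' ∈ Finset.univ, wgt (D1 e') y = wgt (D (ψ e')) (B.φ y) := by
      intro e' _
      obtain ⟨c, d, hcd, hDe⟩ := hcomp e'
      rw [hD1def]
      simp only
      rw [hDe]
      simp only
      rw [hρφ, hρφ]
      exact (B.wgt_phi_pair c d y).symm
    rw [Finset.sum_congr rfl hg,
      ← B.reindex_full ψ hinj himg (fun e => wgt (D e) (B.φ y))]
    have hsp := B.sum_split (fun e => wgt (D e) (B.φ y))
    rw [hE1, hE2, hE3, hE4, hE5, hDsum (B.φ y), hβφ y,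
      wp_other σ1 hσ1 _ _ B.nuv _ (B.phi_ne_u y) (B.phi_ne_v y)] at hsp
    have hpair23 : wgt (pick σ2 B.u B.w) (B.φ y) + wgt (pick σ3 B.v B.w) (B.φ y) = 0 :=
      pair_cancel σ2 σ3 hσ2 hσ3 (by linear_combination -q12 - q13)
        B.u B.v B.w (B.φ y) (B.phi_ne_u y) (B.phi_ne_v y) B.nuw B.nvw
    have hpair45 : wgt (pick σ4 B.u B.a) (B.φ y) + wgt (pick σ5 B.v B.a) (B.φ y) = 0 :=
      pair_cancel σ4 σ5 hσ4 hσ5 (by linear_combination -q12 - q24 - q13 - q35)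
        B.u B.v B.a (B.φ y) (B.phi_ne_u y) (B.phi_ne_v y) B.nua (Ne.symm B.hav)
    linear_combination -hsp - hpair23 - hpair45

end BD

end ReverseSec

end BullAux


open BullAux in
/-- Let `G` have a spanning triangle-tree and be a bull-growing of
`G1`. Then `G` is `Z3`-connected iff `G1` is. -/
theorem stmt_13 (G G1 : Multigraph) (hG : G.HasSpanningTriangleTree)
    (h : G.IsBullGrowing G1) :
    G.Z3Connected ↔ G1.Z3Connected := by
  obtain ⟨u, v, w, a, b, euv, euw, evw, eua, evb, h1, h2, h3, h4, h5, hav, hbu,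
    d1, d2, d3, d4, d5, d6, hdegu, hdegv, φ, hφi, hφr, hc1, hc2⟩ := h
  set B : BD G G1 :=
    ⟨u, v, w, a, b, euv, euw, evw, eua, evb, h1, h2, h3, h4, h5, hav, hbu,
      d1, d2, d3, d4, d5, d6, hdegu, hdegv, φ, hφi, hφr⟩ with hB
  have hBSet : {e : G.E | e ∉ ({euv, euw, evw, eua, evb} : Set G.E)}
      = {e : G.E | e ∉ B.BSet} := rfl
  constructor
  · -- G Z3-connected → G1 Z3-connected
    intro hGZ
    by_cases hab : a = b
    · obtain ⟨ψ, hinj, himg, hends⟩ := hc1 hab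
      rw [hBSet] at himg
      exact B.reverse_ab hGZ ψ hinj himg hends hab
    · obtain ⟨e0, ψ, he0ends, hinj, himg, hends⟩ := hc2 hab
      rw [hBSet] at himg
      exact B.reverse_ne hGZ e0 ψ hinj himg hends he0ends hab
  · -- G1 Z3-connected → G Z3-connected
    intro hG1Z
    intro β hβ
    by_cases hab : a = b
    · obtain ⟨ψ, hinj, himg, hends⟩ := hc1 hab
      rw [hBSet] at himg
      exact B.constr_ab hG1Z ψ hinj himg hends β hβ
    · obtain ⟨e0, ψ, he0ends, hinj, himg, hends⟩ := hc2 hab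
      rw [hBSet] at himg
      by_cases haw : a = w
      · exact B.constr_aw hG1Z e0 ψ hinj himg hends he0ends hab haw β hβ
      by_cases hbw : b = w
      · -- swapped a=w construction
        have himg' : ψ '' {e : G1.E | e ≠ e0} = {e : G.E | e ∉ B.swap.BSet} := by
          rw [B.swap_BSet]; exact himg
        have he0ends' : Sym2.map B.swap.φ (G1.ends e0) = s(B.swap.a, B.swap.b) := by
          rw [show B.swap.φ = φ from rfl, he0ends]
          exact Sym2.eq_swap
        exact B.swap.constr_aw hG1Z e0 ψ hinj himg' hends he0ends'
          (Ne.symm hab) hbw β hβ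
      · obtain ⟨F, hT⟩ := hG
        rcases B.struct_edge hT hab haw hbw with ⟨eG, henb, hends_e⟩ | ⟨eG, henb, hends_e⟩
        · exact B.constr_main hG1Z e0 ψ hinj himg hends he0ends hab haw hbw
            eG henb hends_e β hβ
        · have himg' : ψ '' {e : G1.E | e ≠ e0} = {e : G.E | e ∉ B.swap.BSet} := by
            rw [B.swap_BSet]; exact himg
          have he0ends' : Sym2.map B.swap.φ (G1.ends e0) = s(B.swap.a, B.swap.b) := by
            rw [show B.swap.φ = φ from rfl, he0ends]
            exact Sym2.eq_swap
          have henb' : eG ∉ B.swap.BSet := by rw [B.swap_BSet]; exact henb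
          exact B.swap.constr_main hG1Z e0 ψ hinj himg' hends he0ends'
            (Ne.symm hab) hbw haw eG henb' hends_e β hβ
end
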